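/- arXiv:1708.09246 — 11 statements merged into one kernel-verified Lean document; each statement's English description precedes it below -/
import Mathlib

section
/- For any tree graph T on the vertex set {0,1,…,n} with n ≥ 1, the normalized volume of its adjacency polytope equals 2^n; that is, NVol_n(∇_T) = 2^n. -/
open MeasureTheory

/-- The standard "vertex embedding": vertex `0` of the graph maps to the origin of `ℝ^n`,
and vertex `i ≥ 1` maps to the standard basis vector `e_i`. -/
noncomputable def graphVert (n : ℕ) (i : Fin (n + 1)) : Fin n → ℝ :=
  if h : i = 0 then 0 else Pi.single (i.pred h) 1

/-- The adjacency polytope `∇_G = conv{±(e_i - e_j) : {i,j} ∈ E(G)}` of a graph `G`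
on the vertex set `{0, 1, …, n}`. -/
noncomputable def adjPolytope (n : ℕ) (G : SimpleGraph (Fin (n + 1))) : Set (Fin n → ℝ) :=
  convexHull ℝ {v | ∃ i j : Fin (n + 1), G.Adj i j ∧ v = graphVert n i - graphVert n j}

/-!
Root the tree at `0` and let `p` send each vertex to its parent, so that the edges are
exactly the pairs `{v, p v}` with `v ≠ 0`. The linear map `L = 1 - N`, where
`N (graphVert v) = graphVert (p v)`, sends `graphVert v` to `graphVert v - graphVert (p v)`,
hence maps the convex hull of the `±e_k`, i.e. the cross-polytope `{x | ∑ |x i| ≤ 1}`,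
onto `∇_T`. Iterating `p` ends at the root, so `N` is nilpotent and `det L = 1`; thus `∇_T`
has the volume `2 ^ n / n!` of the cross-polytope.
-/

section CrossPolytope

variable {ι : Type*} [Fintype ι]

lemma convex_setOf_sum_abs_le (r : ℝ) : Convex ℝ {x : ι → ℝ | ∑ i, |x i| ≤ r} := by
  have := (convex_closedBall (0 : PiLp 1 (fun _ : ι => ℝ)) r).linear_preimage
    (WithLp.linearEquiv 1 ℝ (ι → ℝ)).symm.toLinearMap
  simpa [PiLp.norm_eq_of_L1, Set.preimage] using this

lemma convexHull_pm_single_eq_setOf_sum_abs_le [DecidableEq ι] [Nonempty ι] :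
    convexHull ℝ {x : ι → ℝ | ∃ k, x = Pi.single k 1 ∨ x = -Pi.single k 1} =
      {x | ∑ i, |x i| ≤ 1} := by
  set D := {x : ι → ℝ | ∃ k, x = Pi.single k 1 ∨ x = -Pi.single k 1}
  refine (convexHull_min ?_ (convex_setOf_sum_abs_le 1)).antisymm fun x hx1 => ?_
  · rintro _ ⟨k, rfl | rfl⟩ <;> simp [Pi.single_apply, apply_ite]
  have hsingle : ∀ k, Pi.single k 1 ∈ convexHull ℝ D := fun k =>
    subset_convexHull ℝ D ⟨k, Or.inl rfl⟩
  have hneg : ∀ k, -Pi.single k 1 ∈ convexHull ℝ D := fun k =>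
    subset_convexHull ℝ D ⟨k, Or.inr rfl⟩
  have hzero : (0 : ι → ℝ) ∈ convexHull ℝ D := by
    obtain ⟨k⟩ := ‹Nonempty ι›
    rw [← midpoint_self_neg (R := ℝ) (x := (Pi.single k 1 : ι → ℝ))]
    exact (convex_convexHull ℝ D).segment_subset (hsingle k) (hneg k)
      (midpoint_mem_segment (𝕜 := ℝ) _ _)
  -- `x` is the combination `∑ |x i| • (± e_i) + (1 - ∑ |x i|) • 0`
  let w : Option ι → ℝ := fun o => o.elim (1 - ∑ i, |x i|) fun i => |x i|
  let z : Option ι → ι → ℝ :=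
    fun o => o.elim 0 fun i => if 0 ≤ x i then Pi.single i 1 else -Pi.single i 1
  have hcomb : ∑ o, w o • z o = x := by
    rw [Fintype.sum_option]
    conv_rhs => rw [← Finset.univ_sum_single x]
    simp only [w, z, Option.elim, smul_zero, zero_add]
    refine Finset.sum_congr rfl fun i _ => ?_
    split_ifs with h
    · simp [abs_of_nonneg h, ← Pi.single_smul']
    · simp [abs_of_neg (not_le.1 h), ← Pi.single_smul']
  rw [← hcomb]
  refine (convex_convexHull ℝ D).sum_mem (fun o _ => ?_) ?_ (fun o _ => ?_)
  · rcases o with _ | i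
    · simpa [w] using hx1
    · exact abs_nonneg _
  · simp [w, Fintype.sum_option]
  · rcases o with _ | i
    · exact hzero
    · simp only [z, Option.elim]
      split_ifs
      exacts [hsingle i, hneg i]

lemma factorial_mul_volume_setOf_sum_abs_le_one [Nonempty ι] :
    ((Fintype.card ι).factorial : ENNReal) * volume {x : ι → ℝ | ∑ i, |x i| ≤ 1} =
      2 ^ Fintype.card ι := by
  have h := volume_sum_rpow_le ι (p := 1) le_rfl 1
  simp only [Real.rpow_one, div_one, ENNReal.ofReal_one, one_pow, one_mul] at h
  rw [h, Real.Gamma_nat_eq_factorial, one_add_one_eq_two, Real.Gamma_two, mul_one]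
  have hfac : (0 : ℝ) < (Fintype.card ι).factorial := by positivity
  rw [← ENNReal.ofReal_natCast, ← ENNReal.ofReal_mul hfac.le, mul_div_cancel₀ _ hfac.ne',
    ENNReal.ofReal_pow zero_le_two, ENNReal.ofReal_ofNat]

end CrossPolytope

namespace SimpleGraph.Connected

variable {V : Type*} {G : SimpleGraph V} (hG : G.Connected)

noncomputable def pathTo (r v : V) : G.Path v r := by
  classical exact (hG.preconnected v r).some.toPath

noncomputable def parent (r v : V) : V :=
  (hG.pathTo r v).1.snd

variable {r : V}

lemma pathTo_self : (hG.pathTo r r).1 = .nil :=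
  Walk.eq_nil_iff_nil.2 ((hG.pathTo r r).2.nil_iff_eq.2 rfl)

lemma parent_root : hG.parent r r = r := by
  rw [parent, pathTo_self]
  rfl

lemma adj_parent {v : V} (hv : v ≠ r) : G.Adj v (hG.parent r v) :=
  Walk.adj_snd (Walk.not_nil_of_ne hv)

lemma eq_pathTo (hA : G.IsAcyclic) {v : V} {q : G.Walk v r} (hq : q.IsPath) :
    q = hG.pathTo r v :=
  congrArg Subtype.val ((hA.subsingleton_path v r).elim ⟨q, hq⟩ _)

lemma length_pathTo_parent_add_one (hA : G.IsAcyclic) {v : V} (hv : v ≠ r) :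
    (hG.pathTo r (hG.parent r v)).1.length + 1 = (hG.pathTo r v).1.length := by
  change (hG.pathTo r (hG.pathTo r v).1.snd).1.length + 1 = _
  rw [← hG.eq_pathTo hA (hG.pathTo r v).2.tail]
  exact Walk.length_tail_add_one (Walk.not_nil_of_ne hv)

lemma iterate_parent_card [Fintype V] (hA : G.IsAcyclic) (v : V) :
    (hG.parent r)^[Fintype.card V] v = r := by
  suffices ∀ m v, (hG.pathTo r v).1.length ≤ m → (hG.parent r)^[m] v = r from
    this _ v (hG.pathTo r v).2.length_lt.le
  intro m
  induction m with
  | zero => exact fun v h => Walk.eq_of_length_eq_zero (Nat.le_zero.1 h)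
  | succ m ih =>
    intro v hv
    by_cases hvr : v = r
    · subst hvr
      exact Function.iterate_fixed hG.parent_root _
    · rw [Function.iterate_succ_apply]
      exact ih _ (by have := hG.length_pathTo_parent_add_one hA hvr; omega)

lemma adj_iff_parent (hA : G.IsAcyclic) {u v : V} :
    G.Adj u v ↔ (u ≠ r ∧ hG.parent r u = v) ∨ (v ≠ r ∧ hG.parent r v = u) := by
  refine ⟨fun huv => ?_, ?_⟩
  · by_cases hu : u ∈ (hG.pathTo r v).1.support
    · refine Or.inr ⟨?_, (hA.eq_snd_of_adj_start (hG.pathTo r v).2 huv.symm hu).symm⟩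
      rintro rfl
      rw [pathTo_self, Walk.support_nil, List.mem_singleton] at hu
      exact huv.ne hu
    · refine Or.inl ⟨?_, ?_⟩
      · rintro rfl
        exact hu (Walk.end_mem_support _)
      · rw [parent, ← hG.eq_pathTo hA ((hG.pathTo r v).2.cons hu)]
        exact Walk.snd_cons _ huv
  · rintro (⟨hu, rfl⟩ | ⟨hv, rfl⟩)
    exacts [hG.adj_parent hu, (hG.adj_parent hv).symm]

end SimpleGraph.Connected

lemma LinearMap.det_one_sub_of_isNilpotent {R M : Type*} [CommRing R] [IsDomain R]
    [AddCommGroup M] [Module R M] [Module.Finite R M] [Module.Free R M] {φ : Module.End R M}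
    (hφ : IsNilpotent φ) : (1 - φ).det = 1 := by
  simpa [hφ.charpoly_eq_X_pow_finrank] using (φ.eval_charpoly 1).symm

section ParentMap

variable {n : ℕ} {p : Fin (n + 1) → Fin (n + 1)}

lemma graphVert_zero : graphVert n 0 = 0 := dif_pos rfl

lemma graphVert_of_ne_zero {v : Fin (n + 1)} (hv : v ≠ 0) :
    graphVert n v = Pi.single (v.pred hv) 1 :=
  dif_neg hv

lemma graphVert_succ (k : Fin n) : graphVert n k.succ = Pi.single k 1 := by
  simp [graphVert_of_ne_zero k.succ_ne_zero]

variable (p) in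
noncomputable def parentMap : Module.End ℝ (Fin n → ℝ) :=
  (Pi.basisFun ℝ (Fin n)).constr ℝ fun k => graphVert n (p k.succ)

lemma parentMap_graphVert (hp : p 0 = 0) (v : Fin (n + 1)) :
    parentMap p (graphVert n v) = graphVert n (p v) := by
  cases v using Fin.cases with
  | zero => rw [graphVert_zero, map_zero, hp, graphVert_zero]
  | succ k => rw [graphVert_succ, ← Pi.basisFun_apply ℝ, parentMap, Module.Basis.constr_basis]

lemma pow_parentMap_graphVert (hp : p 0 = 0) (m : ℕ) (v : Fin (n + 1)) :
    (parentMap p ^ m) (graphVert n v) = graphVert n (p^[m] v) := by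
  induction m generalizing v with
  | zero => rfl
  | succ m ih => rw [pow_succ, Module.End.mul_apply, parentMap_graphVert hp, ih,
      Function.iterate_succ_apply]

lemma isNilpotent_parentMap (hp : p 0 = 0) {m : ℕ} (hm : ∀ v, p^[m] v = 0) :
    IsNilpotent (parentMap p) :=
  ⟨m, (Pi.basisFun ℝ (Fin n)).ext fun k => by
    rw [Pi.basisFun_apply, ← graphVert_succ, pow_parentMap_graphVert hp, hm, graphVert_zero,
      LinearMap.zero_apply]⟩

lemma one_sub_parentMap_graphVert (hp : p 0 = 0) (v : Fin (n + 1)) :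
    (1 - parentMap p : Module.End ℝ (Fin n → ℝ)) (graphVert n v) =
      graphVert n v - graphVert n (p v) := by
  rw [LinearMap.sub_apply, Module.End.one_apply, parentMap_graphVert hp]

lemma setOf_adj_sub_eq_image {T : SimpleGraph (Fin (n + 1))} (hp : p 0 = 0)
    (hT : ∀ u v, T.Adj u v ↔ (u ≠ 0 ∧ p u = v) ∨ (v ≠ 0 ∧ p v = u)) :
    {x | ∃ i j : Fin (n + 1), T.Adj i j ∧ x = graphVert n i - graphVert n j} =
      (1 - parentMap p : Module.End ℝ (Fin n → ℝ)) ''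
        {x : Fin n → ℝ | ∃ k, x = Pi.single k 1 ∨ x = -Pi.single k 1} := by
  ext x
  constructor
  · rintro ⟨i, j, hij, rfl⟩
    rcases (hT i j).1 hij with ⟨hi, rfl⟩ | ⟨hj, rfl⟩
    · exact ⟨graphVert n i, ⟨i.pred hi, Or.inl (graphVert_of_ne_zero hi)⟩,
        one_sub_parentMap_graphVert hp i⟩
    · refine ⟨-graphVert n j, ⟨j.pred hj, Or.inr (by rw [graphVert_of_ne_zero hj])⟩, ?_⟩
      rw [map_neg, one_sub_parentMap_graphVert hp, neg_sub]
  · rintro ⟨y, ⟨k, rfl | rfl⟩, rfl⟩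
    · refine ⟨k.succ, p k.succ, (hT _ _).2 (Or.inl ⟨k.succ_ne_zero, rfl⟩), ?_⟩
      rw [← graphVert_succ, one_sub_parentMap_graphVert hp]
    · refine ⟨p k.succ, k.succ, (hT _ _).2 (Or.inr ⟨k.succ_ne_zero, rfl⟩), ?_⟩
      rw [map_neg, ← graphVert_succ, one_sub_parentMap_graphVert hp, neg_sub]

end ParentMap

/-- For any tree `T` on the vertex set `{0,1,…,n}` with `n ≥ 1`, the normalized volume of its
adjacency polytope equals `2^n`. -/
theorem nvol_adjPolytope_tree (n : ℕ) (hn : 1 ≤ n) (T : SimpleGraph (Fin (n + 1)))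
    (hT : T.IsTree) :
    (n.factorial : ENNReal) * volume (adjPolytope n T) = 2 ^ n := by
  have : Nonempty (Fin n) := ⟨⟨0, hn⟩⟩
  have hp0 := hT.connected.parent_root (r := 0)
  have hnil := isNilpotent_parentMap hp0 (hT.connected.iterate_parent_card hT.isAcyclic)
  rw [adjPolytope, setOf_adj_sub_eq_image hp0 fun _ _ => hT.connected.adj_iff_parent hT.isAcyclic,
    ← LinearMap.image_convexHull, convexHull_pm_single_eq_setOf_sum_abs_le,
    Measure.addHaar_image_linearMap, LinearMap.det_one_sub_of_isNilpotent hnil, abs_one,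
    ENNReal.ofReal_one, one_mul]
  simpa using factorial_mul_volume_setOf_sum_abs_le_one (ι := Fin n)
end

section
/- For every n ≥ 1, the polytope P_N = conv{±e_1, …, ±e_n, ±(e_1 + ⋯ + e_n)} ⊂ ℝ^n satisfies NVol_n(P_N) = (n+1)·binom(n, ⌊n/2⌋). -/
open MeasureTheory

/-- The polytope `P_N = conv{±e_1, …, ±e_n, ±(e_1 + ⋯ + e_n)} ⊂ ℝ^n` (with `N = n+1`). -/
noncomputable def PN (n : ℕ) : Set (Fin n → ℝ) :=
  convexHull ℝ
    ({v | ∃ i : Fin n, v = Pi.single i 1 ∨ v = -Pi.single i 1} ∪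
      {(fun _ => 1 : Fin n → ℝ), (fun _ => -1 : Fin n → ℝ)})

/-!
A point `x` lies in `P_N` iff the `n + 1` reals `0, x_1, …, x_n` can be moved to a common value
`t` at total cost `|t| + ∑ |x i - t| ≤ 1`: this cost is jointly convex in `(x, t)`, and
`x = t • 𝟙 + ∑ (x i - t) • e_i` writes such an `x` as a combination of vertices.
The best `t` is a median, so `P_N` is the union of the cells indexed by a median point `m` and
the `⌊n/2⌋` points `B` lying below it, which overlap only where two of the points coincide.
Recentering at `m` is a linear involution, hence preserves volume, and maps a cell onto the part
of the `ℓ¹` unit ball in one orthant; the `2ⁿ` orthant pieces of that ball are congruent and it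
has volume `2ⁿ / n!`, so each of the `(n + 1) · C(n, ⌊n/2⌋)` cells has volume `1 / n!`.
-/

open Finset Function

theorem Convex.sum_smul_mem_of_sum_le_one {E κ : Type*} [AddCommGroup E] [Module ℝ E]
    [Fintype κ] {s : Set E} (hs : Convex ℝ s) (h₀ : (0 : E) ∈ s) {w : κ → ℝ} {v : κ → E}
    (hw₀ : ∀ k, 0 ≤ w k) (hw₁ : ∑ k, w k ≤ 1) (hv : ∀ k, v k ∈ s) :
    ∑ k, w k • v k ∈ s := by
  have := hs.sum_mem (t := univ) (w := Option.elim' (1 - ∑ k, w k) w) (z := Option.elim' 0 v)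
    (by simp [Option.forall, hw₀, hw₁]) (by simp [Fintype.sum_option])
    (by simp [Option.forall, h₀, hv])
  simpa [Fintype.sum_option] using this

theorem abs_smul_ite_neg {E : Type*} [AddCommGroup E] [Module ℝ E] (a : ℝ) (v : E) :
    |a| • (if 0 ≤ a then v else -v) = a • v := by
  split_ifs with ha
  · rw [abs_of_nonneg ha]
  · rw [abs_of_neg (not_le.mp ha), smul_neg, neg_smul, neg_neg]

theorem MeasureTheory.Measure.addHaar_preimage_of_involutive {E : Type*} [NormedAddCommGroup E]
    [NormedSpace ℝ E] [MeasurableSpace E] [BorelSpace E] [FiniteDimensional ℝ E]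
    (μ : Measure E) [μ.IsAddHaarMeasure] {f : E →ₗ[ℝ] E} (hf : Involutive f) (s : Set E) :
    μ (f ⁻¹' s) = μ s := by
  have hsq : LinearMap.det f * LinearMap.det f = 1 := by
    rw [← LinearMap.det_comp, show f ∘ₗ f = LinearMap.id from LinearMap.ext hf, LinearMap.det_id]
  have habs : |LinearMap.det f| = 1 := by
    rcases mul_self_eq_one_iff.mp hsq with h | h <;> simp [h]
  rw [addHaar_preimage_linearMap μ (by intro h; simp [h] at hsq), abs_inv, habs]
  simp

section Median

variable {κ : Type*}

def IsSplit (q : κ → ℝ) (m : κ) (B : Finset κ) : Prop :=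
  (∀ j ∈ B, q j ≤ q m) ∧ ∀ j ∉ B, q m ≤ q j

theorem IsSplit.card_lt {q : κ → ℝ} {m m' : κ} {B B' : Finset κ} (h : IsSplit q m B)
    (h' : IsSplit q m' B') (hm : m ∉ B) (hlt : q m < q m') : #B < #B' := by
  classical
  refine (card_lt_card (ssubset_insert hm)).trans_le (card_le_card fun j hj => ?_)
  by_contra hj'
  rcases mem_insert.mp hj with rfl | hj
  · exact (h'.2 j hj').not_gt hlt
  · exact (h'.2 j hj').not_gt ((h.1 j hj).trans_lt hlt)

theorem IsSplit.eq_of_injective {q : κ → ℝ} (hq : Injective q) {m m' : κ} {B B' : Finset κ}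
    (h : IsSplit q m B) (h' : IsSplit q m' B') (hm : m ∉ B) (hm' : m' ∉ B')
    (hcard : #B = #B') : m = m' ∧ B = B' := by
  have hqm : q m = q m' := by
    rcases lt_trichotomy (q m) (q m') with hlt | heq | hgt
    · exact absurd (h.card_lt h' hm hlt) hcard.not_lt
    · exact heq
    · exact absurd (h'.card_lt h hm' hgt) hcard.symm.not_lt
  obtain rfl := hq hqm
  refine ⟨rfl, eq_of_subset_of_card_le (fun j hj => ?_) hcard.ge⟩
  by_contra hj'
  exact hm (hq (le_antisymm (h.1 j hj) (h'.2 j hj')) ▸ hj)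

variable [Fintype κ]

def sumAbsDev (q : κ → ℝ) (t : ℝ) : ℝ := ∑ k, |q k - t|

theorem convexOn_sumAbsDev :
    ConvexOn ℝ Set.univ (fun qt : (κ → ℝ) × ℝ => sumAbsDev qt.1 qt.2) := by
  refine ⟨convex_univ, fun ⟨q, t⟩ _ ⟨r, u⟩ _ a b ha hb _ => ?_⟩
  simp only [sumAbsDev, Prod.smul_mk, Prod.mk_add_mk, smul_eq_mul, mul_sum, ← sum_add_distrib]
  gcongr with k
  calc |(a • q + b • r) k - (a * t + b * u)| = |a * (q k - t) + b * (r k - u)| := by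
        simp only [Pi.add_apply, Pi.smul_apply, smul_eq_mul]; congr 1; ring
    _ ≤ a * |q k - t| + b * |r k - u| := by
        simpa [abs_mul, abs_of_nonneg ha, abs_of_nonneg hb] using
          abs_add_le (a * (q k - t)) (b * (r k - u))

theorem IsSplit.sumAbsDev_add_le [DecidableEq κ] {q : κ → ℝ} {m : κ} {B : Finset κ}
    (h : IsSplit q m B) (t : ℝ) :
    sumAbsDev q (q m) + (t - q m) * (#B - #Bᶜ) ≤ sumAbsDev q t := by
  have hB : ∀ j ∈ B, |q j - q m| + (t - q m) ≤ |q j - t| := fun j hj => by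
    rw [abs_of_nonpos (by linarith [h.1 j hj])]; linarith [neg_abs_le (q j - t)]
  have hBc : ∀ j ∈ Bᶜ, |q j - q m| - (t - q m) ≤ |q j - t| := fun j hj => by
    rw [abs_of_nonneg (by linarith [h.2 j (mem_compl.mp hj)])]; linarith [le_abs_self (q j - t)]
  calc sumAbsDev q (q m) + (t - q m) * (#B - #Bᶜ)
      = ∑ j ∈ B, (|q j - q m| + (t - q m)) + ∑ j ∈ Bᶜ, (|q j - q m| - (t - q m)) := by
        rw [sumAbsDev, ← sum_add_sum_compl B]
        simp only [sum_add_distrib, sum_sub_distrib, sum_const, nsmul_eq_mul]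
        ring
    _ ≤ ∑ j ∈ B, |q j - t| + ∑ j ∈ Bᶜ, |q j - t| := add_le_add (sum_le_sum hB) (sum_le_sum hBc)
    _ = sumAbsDev q t := sum_add_sum_compl B _

theorem IsSplit.sumAbsDev_le [DecidableEq κ] {q : κ → ℝ} {m : κ} {B : Finset κ}
    (h : IsSplit q m B) (hm : m ∉ B) (hB : 2 * #B ≤ Fintype.card κ)
    (hB' : Fintype.card κ ≤ 2 * #B + 2) (t : ℝ) :
    sumAbsDev q (q m) ≤ sumAbsDev q t := by
  rcases le_total t (q m) with ht | ht
  · have hcard : (#B : ℝ) ≤ #Bᶜ := by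
      rw [card_compl]; exact_mod_cast (by omega : #B ≤ Fintype.card κ - #B)
    nlinarith [h.sumAbsDev_add_le t]
  · have h' : IsSplit q m (insert m B) :=
      ⟨fun j hj => (mem_insert.mp hj).elim (fun e => e ▸ le_rfl) (h.1 j),
        fun j hj => h.2 j fun hjB => hj (mem_insert_of_mem hjB)⟩
    have hcard : (#(insert m B)ᶜ : ℝ) ≤ #(insert m B) := by
      rw [card_compl, card_insert_of_notMem hm]
      exact_mod_cast (by omega : Fintype.card κ - (#B + 1) ≤ #B + 1)
    nlinarith [h'.sumAbsDev_add_le t]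

theorem exists_isSplit [DecidableEq κ] (q : κ → ℝ) {k : ℕ} (hk : k < Fintype.card κ) :
    ∃ m B, m ∉ B ∧ #B = k ∧ IsSplit q m B := by
  -- `B` minimizes the sum of `q` among `k`-sets, and `m` minimizes `q` outside `B`
  obtain ⟨B, hB, hBmin⟩ := (powersetCard k (univ : Finset κ)).exists_min_image
    (fun B => ∑ j ∈ B, q j) (powersetCard_nonempty.mpr (by simpa using hk.le))
  have hBk : #B = k := (mem_powersetCard.mp hB).2
  obtain ⟨m, hm, hmmin⟩ := (Bᶜ).exists_min_image q (card_pos.mp (by rw [card_compl]; omega))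
  refine ⟨m, B, mem_compl.mp hm, hBk, fun j hj => ?_, fun j hj => hmmin j (mem_compl.mpr hj)⟩
  by_contra! hlt
  have hm' : m ∉ B.erase j := fun h => mem_compl.mp hm (mem_of_mem_erase h)
  have := hBmin (insert m (B.erase j)) (mem_powersetCard.mpr ⟨subset_univ _, by
    rw [card_insert_of_notMem hm', card_erase_of_mem hj]; have := card_pos.mpr ⟨j, hj⟩; omega⟩)
  rw [sum_insert hm', ← add_sum_erase B q hj] at this
  linarith

variable (κ) in
def splitLabels [DecidableEq κ] (k : ℕ) : Finset (κ × Finset κ) := {q | q.1 ∉ q.2 ∧ #q.2 = k}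

variable (κ) in
theorem card_splitLabels [DecidableEq κ] (k : ℕ) :
    #(splitLabels κ k) = Fintype.card κ * (Fintype.card κ - 1).choose k := by
  have hfib : ∀ m : κ, #{B : Finset κ | m ∉ B ∧ #B = k} = (Fintype.card κ - 1).choose k := by
    intro m
    rw [← card_univ, ← card_erase_of_mem (mem_univ m), ← card_powersetCard]
    congr 1
    ext B
    simp [subset_erase, subset_univ]
  rw [splitLabels, card_filter, Fintype.sum_prod_type]
  simp only [← card_filter, hfib, sum_const, card_univ, smul_eq_mul]

end Median

section Cells

variable {ι : Type*}

def withOrigin : (ι → ℝ) →ₗ[ℝ] (Option ι → ℝ) :=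
  LinearMap.pi (R := ℝ) (φ := fun _ => ℝ) fun k => Option.elim' 0 LinearMap.proj k

@[simp] theorem withOrigin_none (x : ι → ℝ) : withOrigin x none = 0 := rfl

@[simp] theorem withOrigin_some (x : ι → ℝ) (i : ι) : withOrigin x (some i) = x i := rfl

section Relabel

variable [DecidableEq ι]

def signFlip (S : Finset ι) : (ι → ℝ) →ₗ[ℝ] (ι → ℝ) :=
  LinearMap.pi fun i => if i ∈ S then -LinearMap.proj i else LinearMap.proj i

@[simp] theorem signFlip_apply (S : Finset ι) (y : ι → ℝ) (i : ι) :
    signFlip S y i = if i ∈ S then -y i else y i := by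
  by_cases hi : i ∈ S <;> simp [signFlip, hi]

theorem signFlip_involutive (S : Finset ι) : Involutive (signFlip S) := fun y => by
  ext i; by_cases hi : i ∈ S <;> simp [hi]

-- translates point `m` to the origin and exchanges the labels of `m` and of the origin
def recenter (m : Option ι) : (ι → ℝ) →ₗ[ℝ] (ι → ℝ) :=
  LinearMap.pi fun i =>
    (LinearMap.proj (R := ℝ) (φ := fun _ => ℝ) (Equiv.swap none m (some i)) - LinearMap.proj m) ∘ₗ
      withOrigin

theorem withOrigin_recenter (m : Option ι) (x : ι → ℝ) (k : Option ι) :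
    withOrigin (recenter m x) k = withOrigin x (Equiv.swap none m k) - withOrigin x m := by
  rcases k with _ | i
  · simp
  · rfl

theorem recenter_involutive (m : Option ι) : Involutive (recenter m) := fun x => by
  ext i
  show withOrigin (recenter m (recenter m x)) (some i) = withOrigin x (some i)
  rw [withOrigin_recenter, withOrigin_recenter, withOrigin_recenter,
    Equiv.swap_apply_self, Equiv.swap_apply_right]
  simp

end Relabel

theorem convex_setOf_exists_sumAbsDev_le [Fintype ι] :
    Convex ℝ {x : ι → ℝ | ∃ t, sumAbsDev (withOrigin x) t ≤ 1} := by
  rintro x ⟨t, ht⟩ y ⟨u, hu⟩ a b ha hb hab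
  refine ⟨a * t + b * u, ?_⟩
  have := convexOn_sumAbsDev.2 (Set.mem_univ (withOrigin x, t)) (Set.mem_univ (withOrigin y, u))
    ha hb hab
  simp only [Prod.smul_mk, Prod.mk_add_mk, smul_eq_mul] at this
  rw [map_add, map_smul, map_smul]
  nlinarith

theorem PN_eq_setOf_exists_sumAbsDev_le {n : ℕ} (hn : 1 ≤ n) :
    PN n = {x | ∃ t, sumAbsDev (withOrigin x) t ≤ 1} := by
  refine (convexHull_min ?_ convex_setOf_exists_sumAbsDev_le).antisymm ?_
  · rintro v ((⟨i, rfl | rfl⟩) | (rfl | rfl))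
    · exact ⟨0, by simp [sumAbsDev, Fintype.sum_option, Pi.single_apply, apply_ite]⟩
    · exact ⟨0, by simp [sumAbsDev, Fintype.sum_option, Pi.single_apply, apply_ite]⟩
    · exact ⟨1, by simp [sumAbsDev, Fintype.sum_option]⟩
    · exact ⟨-1, by simp [sumAbsDev, Fintype.sum_option]⟩
  rintro x ⟨t, ht⟩
  let d : Option (Fin n) → Fin n → ℝ := Option.elim' (-1) (Pi.single · 1)
  have hx : ∑ k, |withOrigin x k - t| • (if 0 ≤ withOrigin x k - t then d k else -d k) = x := by
    simp only [abs_smul_ite_neg]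
    ext j
    simp [Fintype.sum_option, d, Pi.single_apply]
  have h₀ : (0 : Fin n → ℝ) ∈ PN n := by
    have hi : Pi.single ⟨0, hn⟩ 1 ∈ PN n := subset_convexHull ℝ _ (Or.inl ⟨_, Or.inl rfl⟩)
    have hi' : -Pi.single ⟨0, hn⟩ 1 ∈ PN n := subset_convexHull ℝ _ (Or.inl ⟨_, Or.inr rfl⟩)
    rw [← midpoint_self_neg ℝ (Pi.single (⟨0, hn⟩ : Fin n) (1 : ℝ))]
    exact (convex_convexHull ℝ _).midpoint_mem hi hi'
  rw [← hx]
  refine (convex_convexHull ℝ _).sum_smul_mem_of_sum_le_one h₀ (fun k => abs_nonneg _) ht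
    fun k => subset_convexHull ℝ _ ?_
  rcases k with _ | i <;> split_ifs
  · exact Or.inr (Or.inr rfl)
  · exact Or.inr (Or.inl (neg_neg _))
  · exact Or.inl ⟨i, Or.inl rfl⟩
  · exact Or.inl ⟨i, Or.inr rfl⟩

variable [Fintype ι]

theorem volume_setOf_withOrigin_eq {i j : Option ι} (hij : i ≠ j) :
    volume {x : ι → ℝ | withOrigin x i = withOrigin x j} = 0 := by
  let f := (LinearMap.proj (R := ℝ) (φ := fun _ => ℝ) i - LinearMap.proj j) ∘ₗ withOrigin
  have hf : ∃ x, withOrigin x i ≠ withOrigin x j := by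
    rcases i with _ | a <;> rcases j with _ | b
    · exact absurd rfl hij
    · exact ⟨1, by simp⟩
    · exact ⟨1, by simp⟩
    · classical
      exact ⟨Pi.single a 1, by simpa [Pi.single_apply, eq_comm] using hij⟩
  obtain ⟨x, hx⟩ := hf
  convert Measure.addHaar_submodule volume (LinearMap.ker f) fun h => hx ?_ using 2
  · ext y; simp [f, sub_eq_zero]
  · simpa [f, sub_eq_zero] using (h ▸ Submodule.mem_top : x ∈ LinearMap.ker f)

theorem volume_setOf_not_injective_withOrigin :
    volume {x : ι → ℝ | ¬ Injective (withOrigin x)} = 0 := by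
  refine measure_mono_null (t := ⋃ (i) (j) (_ : i ≠ j), {x | withOrigin x i = withOrigin x j})
    (fun x hx => ?_) (measure_iUnion_null fun i => measure_iUnion_null fun j =>
      measure_iUnion_null fun hij => volume_setOf_withOrigin_eq hij)
  obtain ⟨i, j, hxij, hij⟩ := not_injective_iff.mp hx
  simp only [Set.mem_iUnion]
  exact ⟨i, j, hij, hxij⟩

def orthantCell (S : Finset ι) : Set (ι → ℝ) :=
  {y | (∀ i ∈ S, y i ≤ 0) ∧ (∀ i ∉ S, 0 ≤ y i) ∧ ∑ i, |y i| ≤ 1}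

theorem measurableSet_orthantCell (S : Finset ι) : MeasurableSet (orthantCell S) := by
  simp only [orthantCell, Set.ofPred_and, Set.ofPred_forall]
  exact .inter (.iInter fun i => .iInter fun _ => measurableSet_le (by fun_prop) (by fun_prop))
    (.inter (.iInter fun i => .iInter fun _ => measurableSet_le (by fun_prop) (by fun_prop))
      (measurableSet_le (by fun_prop) (by fun_prop)))

theorem iUnion_orthantCell : ⋃ S : Finset ι, orthantCell S = {y | ∑ i, |y i| ≤ 1} := by
  refine Set.Subset.antisymm (Set.iUnion_subset fun S y hy => hy.2.2) fun y hy => ?_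
  exact Set.mem_iUnion.mpr ⟨univ.filter (y · < 0), fun i hi => (mem_filter.mp hi).2.le,
    fun i hi => not_lt.mp fun h => hi (mem_filter.mpr ⟨mem_univ i, h⟩), hy⟩

theorem orthantCell_inter_subset {S S' : Finset ι} (h : S ≠ S') :
    orthantCell S ∩ orthantCell S' ⊆ {y | ¬ Injective (withOrigin y)} := by
  obtain ⟨i, hi⟩ := not_forall.mp (mt Finset.ext h)
  rintro y ⟨⟨hS, hSc, -⟩, ⟨hS', hSc', -⟩⟩ hinj
  have : y i = 0 := by
    by_cases hiS : i ∈ S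
    · exact le_antisymm (hS i hiS) (hSc' i fun h' => hi ⟨fun _ => h', fun _ => hiS⟩)
    · exact le_antisymm (hS' i (by tauto)) (hSc i hiS)
  exact Option.some_ne_none i (hinj (by simpa using this))

variable [DecidableEq ι]

theorem orthantCell_eq_preimage_signFlip (S : Finset ι) :
    orthantCell S = signFlip S ⁻¹' orthantCell ∅ := by
  ext y
  simp only [orthantCell, Set.mem_preimage, Set.mem_ofPred_eq, signFlip_apply, apply_ite,
    abs_neg, ite_self, notMem_empty, not_false_eq_true, forall_const, IsEmpty.forall_iff,
    implies_true, true_and]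
  rw [← and_assoc]
  refine and_congr_left' ⟨fun ⟨hS, hSc⟩ i => ?_, fun h => ⟨fun i hi => ?_, fun i hi => ?_⟩⟩
  · split_ifs with hi
    exacts [neg_nonneg.mpr (hS i hi), hSc i hi]
  · simpa [hi] using h i
  · simpa [hi] using h i

theorem volume_orthantCell [Nonempty ι] (S : Finset ι) :
    volume (orthantCell S) = ((Fintype.card ι).factorial : ENNReal)⁻¹ := by
  have hball : volume {y : ι → ℝ | ∑ i, |y i| ≤ 1} =
      2 ^ Fintype.card ι * ((Fintype.card ι).factorial : ENNReal)⁻¹ := by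
    have := volume_sum_rpow_le ι (le_refl (1 : ℝ)) 1
    simp only [Real.rpow_one, div_one, ENNReal.ofReal_one, one_pow, one_mul] at this
    rw [this, show (1 : ℝ) + 1 = (1 : ℕ) + 1 by norm_num, Real.Gamma_nat_eq_factorial,
      Real.Gamma_nat_eq_factorial, ENNReal.ofReal_div_of_pos (by positivity)]
    simp [ENNReal.ofReal_pow, div_eq_mul_inv]
  have hS (S : Finset ι) : volume (orthantCell S) = volume (orthantCell (∅ : Finset ι)) := by
    rw [orthantCell_eq_preimage_signFlip S,
      Measure.addHaar_preimage_of_involutive _ (signFlip_involutive S)]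
  have hsum : volume {y : ι → ℝ | ∑ i, |y i| ≤ 1} =
      2 ^ Fintype.card ι * volume (orthantCell (∅ : Finset ι)) := by
    rw [← iUnion_orthantCell, measure_iUnion₀ (fun S S' h => measure_mono_null
        (orthantCell_inter_subset h) volume_setOf_not_injective_withOrigin)
        fun S => (measurableSet_orthantCell S).nullMeasurableSet, tsum_fintype]
    simp [hS, Fintype.card_finset]
  rw [hS, ← ENNReal.mul_right_inj (a := 2 ^ Fintype.card ι) (by simp) (by simp), ← hsum, hball]

def medianCell (m : Option ι) (B : Finset (Option ι)) : Set (ι → ℝ) :=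
  {x | IsSplit (withOrigin x) m B ∧ sumAbsDev (withOrigin x) (withOrigin x m) ≤ 1}

theorem medianCell_eq_preimage_recenter (m : Option ι) (B : Finset (Option ι)) :
    medianCell m B = recenter m ⁻¹' orthantCell {i | Equiv.swap none m (some i) ∈ B} := by
  ext x
  set τ := Equiv.swap none m
  have hτ : τ none = m := Equiv.swap_apply_left none m
  have hx (i : ι) : recenter m x i = withOrigin x (τ (some i)) - withOrigin x m :=
    withOrigin_recenter m x (some i)
  have hsum : sumAbsDev (withOrigin x) (withOrigin x m) = ∑ i, |recenter m x i| := by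
    rw [sumAbsDev, ← Equiv.sum_comp τ, Fintype.sum_option, hτ]
    simp [hx]
  simp only [medianCell, IsSplit, orthantCell, Set.mem_ofPred_eq, Set.mem_preimage, mem_filter,
    mem_univ, true_and, hsum, and_assoc]
  refine and_congr ?_ (and_congr ?_ Iff.rfl) <;>
    rw [← Equiv.forall_congr_right (e := τ), Option.forall] <;> simp [hτ, hx]

theorem volume_medianCell [Nonempty ι] (m : Option ι) (B : Finset (Option ι)) :
    volume (medianCell m B) = ((Fintype.card ι).factorial : ENNReal)⁻¹ := by
  rw [medianCell_eq_preimage_recenter, Measure.addHaar_preimage_of_involutive _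
    (recenter_involutive m), volume_orthantCell]

theorem measurableSet_medianCell (m : Option ι) (B : Finset (Option ι)) :
    MeasurableSet (medianCell m B) := by
  rw [medianCell_eq_preimage_recenter]
  exact (measurableSet_orthantCell _).preimage
    (LinearMap.continuous_of_finiteDimensional _).measurable

theorem medianCell_inter_subset {k : ℕ} {q q' : Option ι × Finset (Option ι)}
    (hq : q ∈ splitLabels (Option ι) k) (hq' : q' ∈ splitLabels (Option ι) k) (hne : q ≠ q') :
    medianCell q.1 q.2 ∩ medianCell q'.1 q'.2 ⊆ {x | ¬ Injective (withOrigin x)} := by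
  simp only [splitLabels, mem_filter, mem_univ, true_and] at hq hq'
  rintro x ⟨⟨h, -⟩, ⟨h', -⟩⟩ hinj
  obtain ⟨hm, hB⟩ := h.eq_of_injective hinj h' hq.1 hq'.1 (hq.2.trans hq'.2.symm)
  exact hne (Prod.ext hm hB)

theorem setOf_exists_sumAbsDev_le_eq_biUnion :
    {x : ι → ℝ | ∃ t, sumAbsDev (withOrigin x) t ≤ 1} =
      ⋃ q ∈ splitLabels (Option ι) (Fintype.card ι / 2), medianCell q.1 q.2 := by
  ext x
  simp only [Set.mem_ofPred_eq, Set.mem_iUnion, splitLabels, mem_filter, mem_univ, true_and]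
  constructor
  · rintro ⟨t, ht⟩
    obtain ⟨m, B, hm, hB, h⟩ := exists_isSplit (withOrigin x)
      (k := Fintype.card ι / 2) (by rw [Fintype.card_option]; omega)
    refine ⟨(m, B), ⟨hm, hB⟩, h, (h.sumAbsDev_le hm ?_ ?_ t).trans ht⟩ <;>
      rw [Fintype.card_option] <;> omega
  · rintro ⟨q, -, -, hq⟩
    exact ⟨_, hq⟩

end Cells

/-- For every `n ≥ 1`, the normalized volume of `P_N` is `(n+1) · C(n, ⌊n/2⌋)`. -/
theorem nvol_PN (n : ℕ) (hn : 1 ≤ n) :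
    (n.factorial : ENNReal) * volume (PN n) = ((n + 1) * Nat.choose n (n / 2) : ℕ) := by
  have : Nonempty (Fin n) := ⟨⟨0, hn⟩⟩
  have hvol : volume (PN n) =
      ∑ q ∈ splitLabels (Option (Fin n)) (n / 2), volume (medianCell q.1 q.2) := by
    rw [PN_eq_setOf_exists_sumAbsDev_le hn, setOf_exists_sumAbsDev_le_eq_biUnion, Fintype.card_fin]
    exact measure_biUnion_finset₀
      (fun q hq q' hq' hne => measure_mono_null (medianCell_inter_subset hq hq' hne)
        volume_setOf_not_injective_withOrigin)
      fun q _ => (measurableSet_medianCell q.1 q.2).nullMeasurableSet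
  simp only [hvol, volume_medianCell, sum_const, card_splitLabels, Fintype.card_option,
    Fintype.card_fin, add_tsub_cancel_right, nsmul_eq_mul]
  rw [mul_left_comm, ENNReal.mul_inv_cancel (by simp [Nat.factorial_ne_zero]) (by simp), mul_one]
end

section
/- Let L : ℝ^n → ℝ^n be the linear map whose matrix is lower triangular with all entries on and below the diagonal equal to 1 (so L(e_j) = e_j + e_{j+1} + ⋯ + e_n for each j). Then L has determinant 1 and maps the adjacency polytope of the cycle graph C_N onto P_N; that is, L(∇_{C_N}) = P_N. In particular, NVol_n(∇_{C_N}) = NVol_n(P_N). -/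
open MeasureTheory

/-- The adjacency polytope of the cycle graph `C_N` on vertices `{0,1,…,n}` (with `N = n+1`),
whose edges are `{i, i+1 mod N}`: it is `conv{±(e_i - e_j) : {i,j} ∈ E(C_N)}`. -/
noncomputable def cycleAdjPolytope (n : ℕ) : Set (Fin n → ℝ) :=
  convexHull ℝ {v | ∃ i : Fin (n + 1),
    v = graphVert n (i + 1) - graphVert n i ∨ v = graphVert n i - graphVert n (i + 1)}

/-- The linear map `L : ℝ^n → ℝ^n` whose matrix is lower triangular with all entries on and
below the diagonal equal to `1`, so that `L(e_j) = e_j + e_{j+1} + ⋯ + e_n`. -/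
noncomputable def lowerOnes (n : ℕ) : (Fin n → ℝ) →ₗ[ℝ] (Fin n → ℝ) :=
  Matrix.toLin' (Matrix.of fun i j : Fin n => if j ≤ i then (1 : ℝ) else 0)

lemma lowerOnes_single (n : ℕ) (j : Fin n) :
    lowerOnes n (Pi.single j 1) = fun i => if j ≤ i then (1 : ℝ) else 0 := by
  ext i
  simp [lowerOnes, Matrix.toLin'_apply, Matrix.mulVec_single]

lemma lowerOnes_det (n : ℕ) : LinearMap.det (lowerOnes n) = 1 := by
  rw [lowerOnes, LinearMap.det_toLin']
  rw [Matrix.det_of_lowerTriangular]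
  · simp
  · intro i j hij
    simp only [Matrix.of_apply, ite_eq_right_iff]
    intro h
    exact absurd h (not_le.2 hij)

lemma Lg_apply (n : ℕ) (a : Fin (n + 1)) (j : Fin n) :
    lowerOnes n (graphVert n a) j = if 1 ≤ a.val ∧ a.val ≤ j.val + 1 then 1 else 0 := by
  by_cases h : a = 0
  · subst h
    simp [graphVert]
  · have hv : a.val ≠ 0 := fun hc => h (Fin.ext hc)
    rw [graphVert, dif_neg h, lowerOnes_single]
    simp only [Fin.le_def, Fin.coe_pred]
    split_ifs <;> first | rfl | omega

lemma Lgen0 (n : ℕ) (hn : 2 ≤ n) :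
    lowerOnes n (graphVert n (0 + 1) - graphVert n 0) = fun _ => (1 : ℝ) := by
  funext j
  rw [map_sub, Pi.sub_apply, Lg_apply, Lg_apply]
  have h1 : ((0 + 1 : Fin (n + 1)) : ℕ) = 1 := by
    simp [Fin.val_one']
    omega
  have h0 : ((0 : Fin (n + 1)) : ℕ) = 0 := rfl
  rw [h1, h0]
  norm_num

lemma Lgen (n : ℕ) (i : Fin (n + 1)) (h : i.val ≠ 0) (p : Fin n) (hp : p.val + 1 = i.val) :
    lowerOnes n (graphVert n (i + 1) - graphVert n i) = -Pi.single p 1 := by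
  have hval : ((i + 1 : Fin (n + 1)) : ℕ) = (i.val + 1) % (n + 1) := by
    simp [Fin.val_add, Fin.val_one']
  funext j
  simp only [map_sub, Pi.sub_apply, Lg_apply, Pi.neg_apply, Pi.single_apply, Fin.ext_iff, hval]
  have hj : j.val < n := j.isLt
  have hi : i.val < n + 1 := i.isLt
  by_cases hlast : i.val = n
  · rw [show (i.val + 1) % (n + 1) = 0 by rw [hlast]; exact Nat.mod_self _]
    split_ifs <;> first | (exfalso; omega) | norm_num
  · rw [Nat.mod_eq_of_lt (by omega)]
    split_ifs <;> first | (exfalso; omega) | norm_num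

lemma Lgen' (n : ℕ) (i : Fin (n + 1)) (h : i.val ≠ 0) (p : Fin n) (hp : p.val + 1 = i.val) :
    lowerOnes n (graphVert n i - graphVert n (i + 1)) = Pi.single p 1 := by
  have : graphVert n i - graphVert n (i + 1) = -(graphVert n (i + 1) - graphVert n i) :=
    (neg_sub _ _).symm
  rw [this, map_neg, Lgen n i h p hp, neg_neg]

lemma Lgen0' (n : ℕ) (hn : 2 ≤ n) :
    lowerOnes n (graphVert n 0 - graphVert n (0 + 1)) = fun _ => (-1 : ℝ) := by
  have : graphVert n 0 - graphVert n (0 + 1) = -(graphVert n (0 + 1) - graphVert n 0) :=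
    (neg_sub _ _).symm
  rw [this, map_neg, Lgen0 n hn]
  rfl

/-- The map `L` has determinant `1` and maps the adjacency polytope of the cycle graph `C_N`
onto `P_N`; in particular the two polytopes have the same normalized volume. -/
theorem lowerOnes_maps_cycleAdjPolytope_to_PN (n : ℕ) (hn : 2 ≤ n) :
    LinearMap.det (lowerOnes n) = 1 ∧
    lowerOnes n '' cycleAdjPolytope n = PN n ∧
    (n.factorial : ENNReal) * volume (cycleAdjPolytope n) =
      (n.factorial : ENNReal) * volume (PN n) := by
  have hdet := lowerOnes_det n
  have himg : lowerOnes n '' cycleAdjPolytope n = PN n := by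
    rw [cycleAdjPolytope, LinearMap.image_convexHull, PN]
    congr 1
    ext v
    constructor
    · rintro ⟨w, ⟨i, rfl | rfl⟩, rfl⟩
      · by_cases h : i.val = 0
        · have hi0 : i = 0 := Fin.ext h
          subst hi0
          right
          rw [Lgen0 n hn]
          exact Set.mem_insert _ _
        · left
          refine ⟨⟨i.val - 1, by omega⟩, Or.inr ?_⟩
          exact Lgen n i h _ (by simp; omega)
      · by_cases h : i.val = 0
        · have hi0 : i = 0 := Fin.ext h
          subst hi0
          right
          rw [Lgen0' n hn]
          exact Set.mem_insert_of_mem _ rfl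
        · left
          refine ⟨⟨i.val - 1, by omega⟩, Or.inl ?_⟩
          exact Lgen' n i h _ (by simp; omega)
    · rintro (⟨p, rfl | rfl⟩ | rfl | rfl)
      · -- v = Pi.single p 1
        refine ⟨graphVert n ⟨p.val + 1, by omega⟩ - graphVert n (⟨p.val + 1, by omega⟩ + 1),
          ⟨⟨p.val + 1, by omega⟩, Or.inr rfl⟩, ?_⟩
        exact Lgen' n _ (by simp) p rfl
      · refine ⟨graphVert n (⟨p.val + 1, by omega⟩ + 1) - graphVert n ⟨p.val + 1, by omega⟩,
          ⟨⟨p.val + 1, by omega⟩, Or.inl rfl⟩, ?_⟩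
        exact Lgen n _ (by simp) p rfl
      · exact ⟨graphVert n (0 + 1) - graphVert n 0, ⟨0, Or.inl rfl⟩, Lgen0 n hn⟩
      · exact ⟨graphVert n 0 - graphVert n (0 + 1), ⟨0, Or.inr rfl⟩, Lgen0' n hn⟩
  refine ⟨hdet, himg, ?_⟩
  have := Measure.addHaar_image_linearMap (volume : Measure (Fin n → ℝ)) (lowerOnes n)
    (cycleAdjPolytope n)
  rw [himg, hdet] at this
  simp at this
  rw [this]
end

section
/- Let n ≥ 3 be odd and N = n+1 (so N is even). A set F ⊆ ℝ^n is a facet of P_N if and only if F = ε·conv{λ_1 e_1, …, λ_n e_n, e_1 + ⋯ + e_n} for some sign ε ∈ {+1, −1} and some λ = (λ_1,…,λ_n) ∈ {−1,1}^n with λ_1 + ⋯ + λ_n = 1. -/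
open Pointwise

/-- `F` is a facet of the `n`-dimensional polytope `P ⊆ ℝ^n`: an exposed face
`F = {x ∈ P : ℓ(x) = max_{y ∈ P} ℓ(y)}` for some nonzero linear functional `ℓ`,
whose affine span has dimension `n - 1`. -/
def IsFacet (n : ℕ) (P F : Set (Fin n → ℝ)) : Prop :=
  ∃ ℓ : (Fin n → ℝ) →ₗ[ℝ] ℝ, ℓ ≠ 0 ∧
    F = {x | x ∈ P ∧ ∀ y ∈ P, ℓ y ≤ ℓ x} ∧
    Module.finrank ℝ (affineSpan ℝ F).direction = n - 1

section Aux
open Finset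
variable {n : ℕ}


variable {n : ℕ}

/-- vertex finset of P_N -/
noncomputable def Vfin (n : ℕ) : Finset (Fin n → ℝ) := by
  classical
  exact ((Finset.univ.image fun i : Fin n => Pi.single i (1:ℝ)) ∪
      (Finset.univ.image fun i : Fin n => -Pi.single i (1:ℝ))) ∪
    {(fun _ => (1:ℝ)), (fun _ => (-1:ℝ))}

lemma mem_Vfin {v : Fin n → ℝ} :
    v ∈ Vfin n ↔ (∃ i, v = Pi.single i 1) ∨ (∃ i, v = -Pi.single i 1) ∨
      v = (fun _ => (1:ℝ)) ∨ v = (fun _ => (-1:ℝ)) := by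
  classical
  simp [Vfin, eq_comm]
  tauto

lemma Vfin_coe (n : ℕ) :
    (Vfin n : Set (Fin n → ℝ)) =
      ({v | ∃ i : Fin n, v = Pi.single i 1 ∨ v = -Pi.single i 1} ∪
        {(fun _ => 1 : Fin n → ℝ), (fun _ => -1 : Fin n → ℝ)}) := by
  ext v
  simp only [Finset.mem_coe, mem_Vfin, Set.mem_union, Set.mem_setOf_eq, Set.mem_insert_iff,
    Set.mem_singleton_iff, exists_or]
  tauto

lemma single_eq_smul (i : Fin n) (a : ℝ) : Pi.single i a = a • (Pi.single i 1 : Fin n → ℝ) := by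
  funext j
  by_cases h : j = i <;> simp [Pi.single_apply, h]

lemma pi_decomp (x : Fin n → ℝ) : x = ∑ i, (x i) • (Pi.single i 1 : Fin n → ℝ) := by
  conv_lhs => rw [← Finset.univ_sum_single x]
  exact Finset.sum_congr rfl fun i _ => single_eq_smul i (x i)

noncomputable def llam (n : ℕ) (lam : Fin n → ℝ) : (Fin n → ℝ) →ₗ[ℝ] ℝ where
  toFun x := ∑ i, lam i * x i
  map_add' x y := by
    simp only [Pi.add_apply, mul_add]
    rw [Finset.sum_add_distrib]
  map_smul' c x := by
    simp only [Pi.smul_apply, smul_eq_mul, RingHom.id_apply, Finset.mul_sum]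
    exact Finset.sum_congr rfl fun i _ => by ring

@[simp] lemma llam_apply (lam x : Fin n → ℝ) : llam n lam x = ∑ i, lam i * x i := rfl

lemma llam_single (lam : Fin n → ℝ) (j : Fin n) :
    llam n lam (Pi.single j 1) = lam j := by
  rw [llam_apply]
  rw [Finset.sum_eq_single j]
  · simp
  · intro i _ hij
    simp [Pi.single_apply, hij]
  · simp

lemma llam_one (lam : Fin n → ℝ) : llam n lam (fun _ => 1) = ∑ i, lam i := by simp

lemma vspan_eq_ker (h0 : 0 < n) (lam : Fin n → ℝ) (hlam : ∀ i, lam i = 1 ∨ lam i = -1)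
    (S : Set (Fin n → ℝ)) (hS : ∀ v ∈ S, llam n lam v = 1)
    (hS' : ∀ i, (lam i • (Pi.single i 1 : Fin n → ℝ)) ∈ S) :
    vectorSpan ℝ S = LinearMap.ker (llam n lam) := by
  have hsq : ∀ i, lam i * lam i = 1 := fun i => by rcases hlam i with h | h <;> rw [h] <;> ring
  apply le_antisymm
  · rw [vectorSpan_def, Submodule.span_le]
    rintro x hx
    rw [Set.mem_vsub] at hx
    obtain ⟨a, ha, b, hb, rfl⟩ := hx
    have : llam n lam (a - b) = 0 := by
      rw [map_sub, hS a ha, hS b hb, sub_self]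
    simpa [LinearMap.mem_ker] using this
  · intro x hx
    rw [LinearMap.mem_ker, llam_apply] at hx
    set i0 : Fin n := ⟨0, h0⟩
    set v : Fin n → (Fin n → ℝ) := fun i => lam i • (Pi.single i 1 : Fin n → ℝ) with hv
    have hxrep : x = ∑ i, (lam i * x i) • (v i - v i0) := by
      have h1 : ∑ i, (lam i * x i) • v i = x := by
        have : ∀ i, (lam i * x i) • v i = (x i) • (Pi.single i 1 : Fin n → ℝ) := by
          intro i
          rw [hv, smul_smul, mul_comm (lam i) (x i), mul_assoc, hsq, mul_one]
        rw [Finset.sum_congr rfl fun i _ => this i]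
        exact (pi_decomp x).symm
      have h2 : ∑ i, (lam i * x i) • v i0 = (0 : Fin n → ℝ) := by
        rw [← Finset.sum_smul, hx, zero_smul]
      calc x = ∑ i, (lam i * x i) • v i - ∑ i, (lam i * x i) • v i0 := by
              rw [h1, h2, sub_zero]
        _ = ∑ i, (lam i * x i) • (v i - v i0) := by
              rw [← Finset.sum_sub_distrib]
              exact Finset.sum_congr rfl fun i _ => (smul_sub _ _ _).symm
    rw [hxrep]
    apply Submodule.sum_mem
    intro i _
    apply Submodule.smul_mem
    have := vsub_mem_vectorSpan ℝ (hS' i) (hS' i0)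
    simpa using this

/-- the face of a polytope determined by a linear functional is the hull of the
maximizing vertices -/
lemma face_hull {E : Type*} [AddCommGroup E] [Module ℝ E] (V : Finset E)
    (ℓ : E →ₗ[ℝ] ℝ) (M : ℝ) (hM : ∀ v ∈ V, ℓ v ≤ M) (hex : ∃ v ∈ V, ℓ v = M) :
    {x | x ∈ convexHull ℝ (V : Set E) ∧ ∀ y ∈ convexHull ℝ (V : Set E), ℓ y ≤ ℓ x}
      = convexHull ℝ {v : E | v ∈ V ∧ ℓ v = M} := by
  classical
  have hle : ∀ y ∈ convexHull ℝ (V : Set E), ℓ y ≤ M := fun y hy =>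
    convexHull_min (fun v hv => hM v hv) (convex_halfSpace_le ℓ.isLinear M) hy
  obtain ⟨v0, hv0, hv0M⟩ := hex
  ext x
  constructor
  · rintro ⟨hx, hmax⟩
    have hxM : ℓ x = M :=
      le_antisymm (hle x hx) (hv0M ▸ hmax v0 (subset_convexHull ℝ _ hv0))
    rw [Finset.convexHull_eq] at hx
    obtain ⟨w, hw0, hw1, hwx⟩ := hx
    have hxsum : x = ∑ y ∈ V, w y • y := by
      rw [← hwx, Finset.centerMass_eq_of_sum_1 _ _ hw1]; rfl
    have hlx : ∑ y ∈ V, w y * ℓ y = M := by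
      rw [← hxM, hxsum, map_sum]; simp
    have key : ∀ y ∈ V, w y ≠ 0 → ℓ y = M := by
      by_contra h
      push_neg at h
      obtain ⟨y0, hy0V, hy0w, hy0M⟩ := h
      have hwy0 : 0 < w y0 := lt_of_le_of_ne (hw0 y0 hy0V) (Ne.symm hy0w)
      have hlt : ∑ y ∈ V, w y * ℓ y < ∑ y ∈ V, w y * M := by
        apply Finset.sum_lt_sum
        · exact fun i hi => mul_le_mul_of_nonneg_left (hM i hi) (hw0 i hi)
        · exact ⟨y0, hy0V, by
            have := lt_of_le_of_ne (hM y0 hy0V) hy0M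
            nlinarith⟩
      rw [hlx, ← Finset.sum_mul, hw1, one_mul] at hlt
      exact lt_irrefl _ hlt
    have hfilt : ({y ∈ V | w y ≠ 0} : Finset E).centerMass w id = x := by
      rw [Finset.centerMass_filter_ne_zero]; exact hwx
    rw [← hfilt]
    apply Finset.centerMass_mem_convexHull
    · exact fun i hi => hw0 i (Finset.mem_filter.1 hi).1
    · rw [Finset.sum_filter_ne_zero, hw1]; norm_num
    · intro i hi
      obtain ⟨hiV, hiw⟩ := Finset.mem_filter.1 hi
      exact ⟨hiV, key i hiV hiw⟩
  · intro hx
    have h1 : x ∈ convexHull ℝ (V : Set E) :=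
      convexHull_mono (fun v hv => hv.1) hx
    have h2 : ℓ x = M := by
      have : convexHull ℝ {v : E | v ∈ V ∧ ℓ v = M} ⊆ {y | ℓ y = M} :=
        convexHull_min (fun v hv => hv.2) (convex_hyperplane ℓ.isLinear M)
      exact this hx
    exact ⟨h1, fun y hy => by rw [h2]; exact hle y hy⟩

/-- sums of ±1 have the parity of the number of summands -/
lemma sum_sign_int {ι : Type*} (s : Finset ι) (g : ι → ℝ)
    (h : ∀ i ∈ s, g i = 1 ∨ g i = -1) :
    ∃ z : ℤ, (∑ i ∈ s, g i) = (z : ℝ) ∧ z % 2 = (s.card : ℤ) % 2 := by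
  classical
  induction s using Finset.induction_on with
  | empty => exact ⟨0, by simp, by simp⟩
  | @insert a s ha ih =>
    obtain ⟨z, hz, hmod⟩ := ih (fun i hi => h i (Finset.mem_insert_of_mem hi))
    rcases h a (Finset.mem_insert_self a s) with h1 | h1
    · refine ⟨z + 1, ?_, ?_⟩
      · rw [Finset.sum_insert ha, h1, hz]; push_cast; ring
      · rw [Finset.card_insert_of_notMem ha]; push_cast; omega
    · refine ⟨z - 1, ?_, ?_⟩
      · rw [Finset.sum_insert ha, h1, hz]; push_cast; ring
      · rw [Finset.card_insert_of_notMem ha]; push_cast; omega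

lemma finrank_ker_eq (ℓ : (Fin n → ℝ) →ₗ[ℝ] ℝ) (h : ℓ ≠ 0) :
    Module.finrank ℝ (LinearMap.ker ℓ) = n - 1 := by
  obtain ⟨x, hx⟩ : ∃ x, ℓ x ≠ 0 := by
    by_contra hcon
    push_neg at hcon
    exact h (LinearMap.ext fun x => hcon x)
  have hsurj : Function.Surjective ℓ := fun y =>
    ⟨(y / ℓ x) • x, by rw [map_smul, smul_eq_mul, div_mul_cancel₀ _ hx]⟩
  have hr : LinearMap.range ℓ = ⊤ := LinearMap.range_eq_top.2 hsurj
  have := LinearMap.finrank_range_add_finrank_ker ℓ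
  rw [hr, finrank_top] at this
  simp only [Module.finrank_self] at this
  rw [Module.finrank_pi] at this
  simp at this
  omega

lemma finrank_vspan_le {E : Type*} [AddCommGroup E] [Module ℝ E] (s : Finset E)
    (hs : s.Nonempty) :
    Module.finrank ℝ (vectorSpan ℝ (s : Set E)) ≤ s.card - 1 := by
  classical
  obtain ⟨m, hm⟩ : ∃ m, s.card = m + 1 :=
    ⟨s.card - 1, by have := Finset.card_pos.2 hs; omega⟩
  have := finrank_vectorSpan_image_finset_le ℝ (id : E → E) s hm
  rw [Finset.image_id] at this
  omega

lemma filter_eq (ℓ : (Fin n → ℝ) →ₗ[ℝ] ℝ) (M : ℝ) (hMpos : 0 < M)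
    (μ : Fin n → ℝ) (hμ : ∀ i, μ i = 1 ∨ μ i = -1) (ε : ℝ) (hε : ε = 1 ∨ ε = -1)
    (hsingle : ∀ i, ℓ (Pi.single i 1) = μ i * M) (hone : ℓ (fun _ => 1) = ε * M) :
    {v : Fin n → ℝ | v ∈ Vfin n ∧ ℓ v = M} =
      ({v : Fin n → ℝ | ∃ i, v = μ i • (Pi.single i 1 : Fin n → ℝ)} ∪
        {ε • (fun _ => (1:ℝ))}) := by
  ext v
  simp only [Set.mem_setOf_eq, Set.mem_union, Set.mem_singleton_iff, mem_Vfin]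
  constructor
  · rintro ⟨(⟨i, rfl⟩ | ⟨i, rfl⟩ | rfl | rfl), hv⟩
    · left; refine ⟨i, ?_⟩
      rw [hsingle i] at hv
      have h1 : μ i = 1 := by
        rcases hμ i with h | h
        · exact h
        · exfalso; rw [h] at hv; nlinarith
      rw [h1, one_smul]
    · left; refine ⟨i, ?_⟩
      rw [map_neg, hsingle i] at hv
      have h1 : μ i = -1 := by
        rcases hμ i with h | h
        · exfalso; rw [h] at hv; nlinarith
        · exact h
      rw [h1]
      funext j; simp
    · right
      rw [hone] at hv
      have h1 : ε = 1 := by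
        rcases hε with h | h
        · exact h
        · exfalso; rw [h] at hv; nlinarith
      rw [h1, one_smul]
    · right
      have hv' : ℓ (fun _ => (1:ℝ)) = -M := by
        have h2 : (fun _ => (-1:ℝ)) = -(fun _ => (1:ℝ) : Fin n → ℝ) := by funext j; simp
        rw [h2, map_neg] at hv; linarith
      rw [hone] at hv'
      have h1 : ε = -1 := by
        rcases hε with h | h
        · exfalso; rw [h] at hv'; nlinarith
        · exact h
      rw [h1]; funext j; simp
  · rintro (⟨i, rfl⟩ | rfl)
    · constructor
      · rcases hμ i with h | h
        · rw [h, one_smul]; exact Or.inl ⟨i, rfl⟩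
        · rw [h]; refine Or.inr (Or.inl ⟨i, ?_⟩); funext j; simp
      · rw [map_smul, hsingle i, smul_eq_mul]
        rcases hμ i with h | h <;> rw [h] <;> ring
    · constructor
      · rcases hε with h | h
        · rw [h, one_smul]; exact Or.inr (Or.inr (Or.inl rfl))
        · rw [h]; refine Or.inr (Or.inr (Or.inr ?_)); funext j; simp
      · rw [map_smul, hone, smul_eq_mul]
        rcases hε with h | h <;> rw [h] <;> ring

lemma smul_vertexSet (ε : ℝ) (lam : Fin n → ℝ) :
    ε • ({v : Fin n → ℝ | ∃ i, v = lam i • (Pi.single i 1 : Fin n → ℝ)} ∪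
        {(fun _ => (1:ℝ))})
      = ({v : Fin n → ℝ | ∃ i, v = (ε * lam i) • (Pi.single i 1 : Fin n → ℝ)} ∪
          {ε • (fun _ => (1:ℝ))}) := by
  rw [Set.smul_set_union, Set.smul_set_singleton]
  congr 1
  ext v
  simp only [Set.mem_smul_set, Set.mem_setOf_eq]
  constructor
  · rintro ⟨u, ⟨i, rfl⟩, rfl⟩
    exact ⟨i, smul_smul ε (lam i) (Pi.single i 1 : Fin n → ℝ)⟩
  · rintro ⟨i, rfl⟩
    exact ⟨lam i • (Pi.single i 1 : Fin n → ℝ), ⟨i, rfl⟩, smul_smul ε (lam i) (Pi.single i 1 : Fin n → ℝ)⟩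

lemma PN_eq (n : ℕ) : PN n = convexHull ℝ (Vfin n : Set (Fin n → ℝ)) := by
  rw [PN, Vfin_coe]

end Aux
set_option maxHeartbeats 1000000 in
/-- For odd `n ≥ 3` (so `N = n+1` even), `F` is a facet of `P_N` iff
`F = ε · conv{λ_1 e_1, …, λ_n e_n, e_1 + ⋯ + e_n}` for some sign `ε ∈ {1, -1}` and some
`λ ∈ {-1,1}^n` with `λ_1 + ⋯ + λ_n = 1`. -/
theorem isFacet_PN_iff (n : ℕ) (hn : 3 ≤ n) (hodd : Odd n) (F : Set (Fin n → ℝ)) :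
    IsFacet n (PN n) F ↔
      ∃ ε : ℝ, (ε = 1 ∨ ε = -1) ∧
        ∃ lam : Fin n → ℝ, (∀ i, lam i = 1 ∨ lam i = -1) ∧ (∑ i, lam i) = 1 ∧
          F = ε • convexHull ℝ
            ({v | ∃ i : Fin n, v = lam i • Pi.single i 1} ∪ {(fun _ => 1 : Fin n → ℝ)}) := by
  have h0 : 0 < n := by omega
  constructor
  · rintro ⟨ℓ, hl0, hF, hrank⟩
    classical
    set c : Fin n → ℝ := fun i => ℓ (Pi.single i 1) with hc
    have hone : ℓ (fun _ => 1) = ∑ i, c i := by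
      have h1 : (fun _ => (1:ℝ)) = ∑ i : Fin n, (Pi.single i 1 : Fin n → ℝ) :=
        (Finset.univ_sum_single (fun _ => (1:ℝ))).symm
      rw [h1, map_sum]
    have hneg1fun : (fun _ => (-1:ℝ)) = -(fun _ => (1:ℝ) : Fin n → ℝ) := by funext j; simp
    have hneg1 : ℓ (fun _ => (-1:ℝ)) = -∑ i, c i := by rw [hneg1fun, map_neg, hone]
    have hVne : (Vfin n).Nonempty := ⟨fun _ => 1, by rw [mem_Vfin]; tauto⟩
    set M : ℝ := ((Vfin n).image fun v => ℓ v).max' (hVne.image _) with hMdef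
    have hMub : ∀ v ∈ Vfin n, ℓ v ≤ M := fun v hv =>
      Finset.le_max' _ _ (Finset.mem_image_of_mem _ hv)
    have hMex : ∃ v ∈ Vfin n, ℓ v = M := by
      have h1 := Finset.max'_mem ((Vfin n).image fun v => ℓ v) (hVne.image (fun v => ℓ v))
      obtain ⟨v, hv, hveq⟩ := Finset.mem_image.1 h1
      exact ⟨v, hv, hveq⟩
    have hsingle_mem : ∀ i : Fin n, (Pi.single i 1 : Fin n → ℝ) ∈ Vfin n := fun i => by
      rw [mem_Vfin]; exact Or.inl ⟨i, rfl⟩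
    have hnsingle_mem : ∀ i : Fin n, (-Pi.single i 1 : Fin n → ℝ) ∈ Vfin n := fun i => by
      rw [mem_Vfin]; exact Or.inr (Or.inl ⟨i, rfl⟩)
    have hone_mem : (fun _ => (1:ℝ)) ∈ Vfin n := by rw [mem_Vfin]; tauto
    have hnone_mem : (fun _ => (-1:ℝ)) ∈ Vfin n := by rw [mem_Vfin]; tauto
    have hcle : ∀ i, c i ≤ M := fun i => hMub _ (hsingle_mem i)
    have hcge : ∀ i, -M ≤ c i := fun i => by
      have h1 := hMub _ (hnsingle_mem i)
      rw [map_neg] at h1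
      have h2 : c i = ℓ (Pi.single i 1) := rfl
      linarith
    have hMpos : 0 < M := by
      obtain ⟨i, hi⟩ : ∃ i, c i ≠ 0 := by
        by_contra hcon
        push_neg at hcon
        apply hl0
        apply LinearMap.ext
        intro x
        have hx : ℓ x = ∑ i, x i * c i := by
          conv_lhs => rw [pi_decomp x]
          rw [map_sum]
          refine Finset.sum_congr rfl fun i _ => ?_
          rw [map_smul, smul_eq_mul]
        rw [hx]
        simp [hcon]
      rcases Ne.lt_or_gt hi with h | h
      · have := hcge i; linarith
      · have := hcle i; linarith
    set Sfin : Finset (Fin n → ℝ) := (Vfin n).filter (fun v => ℓ v = M) with hSdef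
    have hScoe : (Sfin : Set (Fin n → ℝ)) = {v | v ∈ Vfin n ∧ ℓ v = M} := by
      rw [hSdef]; ext v; simp [Finset.mem_filter]
    have hFface : F = convexHull ℝ {v : Fin n → ℝ | v ∈ Vfin n ∧ ℓ v = M} := by
      rw [hF, PN_eq]
      exact face_hull _ _ _ hMub hMex
    have hrank' : Module.finrank ℝ
        (vectorSpan ℝ ({v : Fin n → ℝ | v ∈ Vfin n ∧ ℓ v = M})) = n - 1 := by
      rw [← direction_affineSpan, ← affineSpan_convexHull, ← hFface]
      exact hrank
    have hcard : n ≤ Sfin.card := by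
      have hne : Sfin.Nonempty := by
        obtain ⟨v, hv, hvM⟩ := hMex
        exact ⟨v, Finset.mem_filter.2 ⟨hv, hvM⟩⟩
      have h1 := finrank_vspan_le Sfin hne
      rw [hScoe, hrank'] at h1
      have h2 := Finset.card_pos.2 hne
      omega
    set g : Fin n → (Fin n → ℝ) :=
      fun i => if c i = M then Pi.single i 1 else -Pi.single i 1 with hgdef
    set d : Fin n → ℝ :=
      if ℓ (fun _ => (1:ℝ)) = M then (fun _ => (1:ℝ)) else (fun _ => (-1:ℝ)) with hddef
    have hcval : ∀ i, ℓ (Pi.single i 1) = c i := fun i => rfl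
    clear_value c M Sfin g d
    have hclass : ∀ v ∈ Sfin, (∃ i, (c i = M ∨ c i = -M) ∧ v = g i) ∨
        (v = d ∧ (ℓ (fun _ => (1:ℝ)) = M ∨ ℓ (fun _ => (-1:ℝ)) = M)) := by
      intro v hv
      rw [hSdef] at hv
      obtain ⟨hvV, hvM⟩ := Finset.mem_filter.1 hv
      rw [mem_Vfin] at hvV
      rcases hvV with ⟨i, rfl⟩ | ⟨i, rfl⟩ | rfl | rfl
      · left
        rw [hcval i] at hvM
        exact ⟨i, Or.inl hvM, by simp [hgdef, hvM]⟩
      · left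
        rw [map_neg, hcval i] at hvM
        have h1 : c i = -M := by linarith
        have hMne : ¬(c i = M) := by rw [h1]; intro h2; linarith
        exact ⟨i, Or.inr h1, by simp [hgdef, hMne]⟩
      · right
        exact ⟨by simp [hddef, hvM], Or.inl hvM⟩
      · right
        refine ⟨?_, Or.inr hvM⟩
        have hno : ¬ ℓ (fun _ => (1:ℝ)) = M := by
          intro h1
          rw [hneg1] at hvM
          rw [hone] at h1
          linarith
        simp [hddef, hno]
    have hd : ℓ (fun _ => (1:ℝ)) = M ∨ ℓ (fun _ => (-1:ℝ)) = M := by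
      by_contra hnd
      push_neg at hnd
      obtain ⟨hd1, hd2⟩ := hnd
      by_cases hallc : ∀ i, c i = M ∨ c i = -M
      · obtain ⟨z, hzsum, hzmod⟩ := sum_sign_int Finset.univ (fun i => c i / M)
          (fun i _ => by
            rcases hallc i with h | h
            · left; show c i / M = 1; rw [h]; field_simp
            · right; show c i / M = -1; rw [h]; field_simp)
        have hsumc : ∑ i, c i = M * z := by
          have h3 : ∀ i ∈ Finset.univ, c i = (c i / M) * M := fun i _ =>
            (div_mul_cancel₀ _ (ne_of_gt hMpos)).symm
          rw [Finset.sum_congr rfl h3, ← Finset.sum_mul, hzsum]; ring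
        have hlt1 : ℓ (fun _ => (1:ℝ)) < M := lt_of_le_of_ne (hMub _ hone_mem) hd1
        have hlt2 : ℓ (fun _ => (-1:ℝ)) < M := lt_of_le_of_ne (hMub _ hnone_mem) hd2
        rw [hone, hsumc] at hlt1
        rw [hneg1, hsumc] at hlt2
        have hz1 : (z:ℝ) < 1 := by nlinarith
        have hz2 : (-1:ℝ) < z := by nlinarith
        have hz1' : z < 1 := by exact_mod_cast hz1
        have hz2' : -1 < z := by exact_mod_cast hz2
        rw [Finset.card_univ, Fintype.card_fin] at hzmod
        obtain ⟨m, hm⟩ := hodd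
        omega
      · push_neg at hallc
        obtain ⟨j, hj1, hj2⟩ := hallc
        have hsub : Sfin ⊆ (Finset.univ.erase j).image g := by
          intro v hv
          rcases hclass v hv with ⟨i, hci, rfl⟩ | ⟨rfl, hd'⟩
          · refine Finset.mem_image_of_mem g (Finset.mem_erase.2 ⟨?_, Finset.mem_univ i⟩)
            rintro rfl
            rcases hci with h | h
            exacts [hj1 h, hj2 h]
          · rcases hd' with h | h
            exacts [absurd h hd1, absurd h hd2]
        have h1 := Finset.card_le_card hsub
        have h2 := Finset.card_image_le (s := Finset.univ.erase j) (f := g)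
        have h3 : (Finset.univ.erase j).card = n - 1 := by
          rw [Finset.card_erase_of_mem (Finset.mem_univ j), Finset.card_univ, Fintype.card_fin]
        omega
    have hall : ∀ i, c i = M ∨ c i = -M := by
      by_contra hcon
      push_neg at hcon
      obtain ⟨j, hj1, hj2⟩ := hcon
      have hall' : ∀ i, i ≠ j → (c i = M ∨ c i = -M) := by
        by_contra hcon2
        push_neg at hcon2
        obtain ⟨j', hj'ne, hj'1, hj'2⟩ := hcon2
        have hsub : Sfin ⊆ ((Finset.univ.erase j).erase j').image g ∪ {d} := by
          intro v hv
          rcases hclass v hv with ⟨i, hci, rfl⟩ | ⟨rfl, _⟩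
          · apply Finset.mem_union_left
            refine Finset.mem_image_of_mem g (Finset.mem_erase.2
              ⟨?_, Finset.mem_erase.2 ⟨?_, Finset.mem_univ i⟩⟩)
            · rintro rfl
              rcases hci with h | h
              exacts [hj'1 h, hj'2 h]
            · rintro rfl
              rcases hci with h | h
              exacts [hj1 h, hj2 h]
          · exact Finset.mem_union_right _ (Finset.mem_singleton.2 rfl)
        have h1 := Finset.card_le_card hsub
        have h2 := Finset.card_union_le (((Finset.univ.erase j).erase j').image g)
          ({d} : Finset (Fin n → ℝ))
        have h3 := Finset.card_image_le (s := (Finset.univ.erase j).erase j') (f := g)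
        have h4 : ((Finset.univ.erase j).erase j').card = n - 2 := by
          rw [Finset.card_erase_of_mem (Finset.mem_erase.2 ⟨hj'ne, Finset.mem_univ j'⟩),
            Finset.card_erase_of_mem (Finset.mem_univ j), Finset.card_univ, Fintype.card_fin]
          omega
        have h5 : ({d} : Finset (Fin n → ℝ)).card = 1 := Finset.card_singleton d
        omega
      obtain ⟨z, hzsum, hzmod⟩ := sum_sign_int (Finset.univ.erase j) (fun i => c i / M)
        (fun i hi => by
          rcases hall' i (Finset.mem_erase.1 hi).1 with h | h
          · left; show c i / M = 1; rw [h]; field_simp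
          · right; show c i / M = -1; rw [h]; field_simp)
      have hsum_erase : ∑ i ∈ Finset.univ.erase j, c i = M * z := by
        have h3 : ∀ i ∈ Finset.univ.erase j, c i = (c i / M) * M := fun i _ =>
          (div_mul_cancel₀ _ (ne_of_gt hMpos)).symm
        rw [Finset.sum_congr rfl h3, ← Finset.sum_mul, hzsum]; ring
      have htot : ∑ i, c i = M * z + c j := by
        rw [← Finset.sum_erase_add Finset.univ c (Finset.mem_univ j), hsum_erase]
      have hjlt1 : c j < M := lt_of_le_of_ne (hcle j) hj1
      have hjlt2 : -M < c j := lt_of_le_of_ne (hcge j) (fun h => hj2 h.symm)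
      have hzpar : z % 2 = 0 := by
        rw [Finset.card_erase_of_mem (Finset.mem_univ j), Finset.card_univ,
          Fintype.card_fin] at hzmod
        obtain ⟨m, hm⟩ := hodd
        omega
      rcases hd with h1 | h1
      · rw [hone, htot] at h1
        have hz1 : (0:ℝ) < z := by
          by_contra h2
          push_neg at h2
          nlinarith
        have hz2 : (z:ℝ) < 2 := by
          by_contra h2
          push_neg at h2
          nlinarith
        have hz1' : 0 < z := by exact_mod_cast hz1
        have hz2' : z < 2 := by exact_mod_cast hz2
        omega
      · rw [hneg1, htot] at h1
        have hz1 : (z:ℝ) < 0 := by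
          by_contra h2
          push_neg at h2
          nlinarith
        have hz2 : (-2:ℝ) < z := by
          by_contra h2
          push_neg at h2
          nlinarith
        have hz1' : z < 0 := by exact_mod_cast hz1
        have hz2' : -2 < z := by exact_mod_cast hz2
        omega
    set lam0 : Fin n → ℝ := fun i => c i / M with hlam0def
    have hlam0 : ∀ i, lam0 i = 1 ∨ lam0 i = -1 := fun i => by
      rcases hall i with h | h
      · left
        show c i / M = 1
        rw [h]; field_simp
      · right
        show c i / M = -1
        rw [h]; field_simp
    have hc_eq : ∀ i, c i = lam0 i * M := fun i => (div_mul_cancel₀ _ (ne_of_gt hMpos)).symm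
    obtain ⟨z, hzsum, hzmod⟩ := sum_sign_int Finset.univ lam0 (fun i _ => hlam0 i)
    have hzodd : z % 2 = 1 := by
      rw [Finset.card_univ, Fintype.card_fin] at hzmod
      obtain ⟨m, hm⟩ := hodd
      omega
    have hsumc : ∑ i, c i = M * z := by
      rw [Finset.sum_congr rfl (fun i _ => hc_eq i), ← Finset.sum_mul, hzsum]; ring
    have hb1 : (z:ℝ) ≤ 1 := by
      have h1 := hMub _ hone_mem
      rw [hone, hsumc] at h1
      nlinarith
    have hb2 : (-1:ℝ) ≤ z := by
      have h1 := hMub _ hnone_mem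
      rw [hneg1, hsumc] at h1
      nlinarith
    have hb1' : z ≤ 1 := by exact_mod_cast hb1
    have hb2' : -1 ≤ z := by exact_mod_cast hb2
    have hzpm : z = 1 ∨ z = -1 := by omega
    set ε : ℝ := (z : ℝ) with hεdef
    have hε : ε = 1 ∨ ε = -1 := by
      rcases hzpm with h | h
      · left; rw [hεdef, h]; norm_num
      · right; rw [hεdef, h]; norm_num
    have hε2 : ε * ε = 1 := by rcases hε with h | h <;> rw [h] <;> ring
    have hfe := filter_eq ℓ M hMpos lam0 hlam0 ε hε
      (fun i => by rw [hcval i]; exact hc_eq i)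
      (by rw [hone, hsumc]; ring)
    have hFeq : F = convexHull ℝ
        ({v : Fin n → ℝ | ∃ i, v = lam0 i • (Pi.single i 1 : Fin n → ℝ)} ∪
          {ε • (fun _ => (1:ℝ))}) := by
      rw [hFface, hfe]
    set lam1 : Fin n → ℝ := fun i => ε * lam0 i with hlam1def
    refine ⟨ε, hε, lam1, ?_, ?_, ?_⟩
    · intro i
      rcases hε with h | h <;> rcases hlam0 i with h' | h'
      · left; show ε * lam0 i = 1; rw [h, h']; norm_num
      · right; show ε * lam0 i = -1; rw [h, h']; norm_num
      · right; show ε * lam0 i = -1; rw [h, h']; norm_num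
      · left; show ε * lam0 i = 1; rw [h, h']; norm_num
    · show ∑ i, ε * lam0 i = 1
      rw [← Finset.mul_sum, hzsum, hε2]
    · rw [hFeq, ← convexHull_smul, smul_vertexSet]
      have harg : ∀ i, ε * lam1 i = lam0 i := fun i => by
        show ε * (ε * lam0 i) = lam0 i
        rw [← mul_assoc, hε2, one_mul]
      simp only [harg]
  · rintro ⟨ε, hε, lam, hlam, hsum, rfl⟩
    classical
    have hε2 : ε * ε = 1 := by rcases hε with h | h <;> rw [h] <;> ring
    set μ : Fin n → ℝ := fun i => ε * lam i with hμdef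
    have hμ : ∀ i, μ i = 1 ∨ μ i = -1 := by
      intro i
      rcases hε with h | h <;> rcases hlam i with h' | h' <;>
        simp only [hμdef, h, h'] <;> norm_num
    have hμsq : ∀ i, μ i * μ i = 1 := fun i => by
      rcases hμ i with h | h <;> rw [h] <;> ring
    have hμsum : ∑ i, μ i = ε := by
      simp only [hμdef, ← Finset.mul_sum, hsum, mul_one]
    set ℓ := llam n μ with hℓdef
    have hl0 : ℓ ≠ 0 := by
      intro h
      have h1 := llam_single μ ⟨0, h0⟩
      rw [← hℓdef, h] at h1
      simp only [LinearMap.zero_apply] at h1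
      rcases hμ ⟨0, h0⟩ with h2 | h2 <;> rw [h2] at h1 <;> norm_num at h1
    have hneg1 : (fun _ => (-1:ℝ)) = -(fun _ => (1:ℝ) : Fin n → ℝ) := by funext j; simp
    have hub : ∀ v ∈ Vfin n, ℓ v ≤ 1 := by
      intro v hv
      rw [mem_Vfin] at hv
      rcases hv with ⟨i, rfl⟩ | ⟨i, rfl⟩ | rfl | rfl
      · rw [hℓdef, llam_single]; rcases hμ i with h | h <;> rw [h] <;> norm_num
      · rw [map_neg, hℓdef, llam_single]; rcases hμ i with h | h <;> rw [h] <;> norm_num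
      · rw [hℓdef, llam_one, hμsum]; rcases hε with h | h <;> rw [h] <;> norm_num
      · rw [hneg1, map_neg, hℓdef, llam_one, hμsum]
        rcases hε with h | h <;> rw [h] <;> norm_num
    have hex : ∃ v ∈ Vfin n, ℓ v = 1 := by
      rcases hε with h | h
      · refine ⟨(fun _ => (1:ℝ)), by rw [mem_Vfin]; tauto, ?_⟩
        rw [hℓdef, llam_one, hμsum, h]
      · refine ⟨(fun _ => (-1:ℝ)), by rw [mem_Vfin]; tauto, ?_⟩
        rw [hneg1, map_neg, hℓdef, llam_one, hμsum, h]; norm_num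
    have hfe := filter_eq ℓ 1 one_pos μ hμ ε hε
      (fun i => by rw [hℓdef, llam_single, mul_one])
      (by rw [hℓdef, llam_one, hμsum, mul_one])
    have hkey : ε • convexHull ℝ
        ({v | ∃ i : Fin n, v = lam i • Pi.single i 1} ∪ {(fun _ => 1 : Fin n → ℝ)})
        = convexHull ℝ {v : Fin n → ℝ | v ∈ Vfin n ∧ ℓ v = 1} := by
      rw [hfe, ← convexHull_smul, smul_vertexSet]
    refine ⟨ℓ, hl0, ?_, ?_⟩
    · rw [PN_eq, face_hull (Vfin n) ℓ 1 hub hex]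
      exact hkey
    · rw [hkey, affineSpan_convexHull, direction_affineSpan]
      have hS' : ∀ i, (μ i • (Pi.single i 1 : Fin n → ℝ)) ∈
          {v : Fin n → ℝ | v ∈ Vfin n ∧ ℓ v = 1} := by
        intro i
        constructor
        · rw [mem_Vfin]
          rcases hμ i with h | h
          · rw [h, one_smul]; exact Or.inl ⟨i, rfl⟩
          · rw [h]; refine Or.inr (Or.inl ⟨i, ?_⟩); funext j; simp
        · rw [hℓdef, map_smul, llam_single, smul_eq_mul, hμsq]
      rw [vspan_eq_ker h0 μ hμ _ (fun v hv => hv.2) hS', finrank_ker_eq _ hl0]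
end

section
/- Let n ≥ 3 be odd and N = n+1 (so N is even). The number of facets of P_N is exactly 2·binom(N−1, N/2 − 1), i.e., 2·binom(n, (n−1)/2). -/
/-!
A facet `F` of `P_N` is the convex hull of the vertices `±eᵢ`, `±(e₁ + ⋯ + eₙ)` at which its
functional `ℓ` attains its maximum `M > 0`. Being `(n-1)`-dimensional, `F` has at least `n`
vertices, and at most one vertex of each pair `±v` attains `M`; so `|ℓ| = M` on all but at most
one of the `n + 1` points `e₁, …, eₙ, e₁ + ⋯ + eₙ`. The exception cannot be some `e_{i₀}`: then
`ℓ(e₁ + ⋯ + eₙ) = ±M` would make `ℓ(e_{i₀})` an odd multiple of `M`, as `n` is odd. Hence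
`ℓ = M ⟪ε, ·⟫` for a sign vector `ε` with `|∑ εᵢ| ≤ 1`, i.e. with `(n ± 1)/2` entries equal to `1`.
Conversely each such `ε` exposes a facet containing the `n` affinely independent points `εᵢ eᵢ`,
and these facets are distinct, which leaves `C(n, (n-1)/2) + C(n, (n+1)/2)` facets.
-/

open Finset

namespace LinearMap

variable {E : Type*} [AddCommGroup E] [Module ℝ E] (ℓ : E →ₗ[ℝ] ℝ)

/-- `ContinuousLinearMap.toExposed` for a linear functional that need not be continuous. -/
def toExposed (P : Set E) : Set E := {x | x ∈ P ∧ ∀ y ∈ P, ℓ y ≤ ℓ x}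

variable {ℓ}

theorem _root_.Convex.toExposed {P : Set E} (hP : Convex ℝ P) : Convex ℝ (ℓ.toExposed P) := by
  have : ℓ.toExposed P = P ∩ ⋂ y ∈ P, {x | ℓ y ≤ ℓ x} := by
    ext x; simp [LinearMap.toExposed]
  rw [this]
  exact hP.inter (convex_iInter₂ fun y _ => convex_halfSpace_ge ℓ.isLinear (ℓ y))

theorem toExposed_convexHull (s : Set E) :
    ℓ.toExposed (convexHull ℝ s) = convexHull ℝ (ℓ.toExposed s) := by
  classical
  apply subset_antisymm
  · rintro x ⟨hx, hmax⟩
    obtain ⟨ι, t, w, z, hw₀, hw₁, hz, rfl⟩ := (convexHull_eq s).subset hx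
    have hsum : ∑ i ∈ t, w i * (ℓ (t.centerMass w z) - ℓ (z i)) = 0 := by
      rw [Finset.centerMass_eq_of_sum_1 _ _ hw₁, map_sum]
      simp only [map_smul, smul_eq_mul, mul_sub, sum_sub_distrib, ← sum_mul, hw₁, one_mul, sub_self]
    have hmax_z : ∀ i ∈ t, w i ≠ 0 → z i ∈ ℓ.toExposed s := by
      intro i hi hwi
      have hzx : ℓ (z i) = ℓ (t.centerMass w z) := by
        have := (sum_eq_zero_iff_of_nonneg fun j hj => mul_nonneg (hw₀ j hj)
          (sub_nonneg.2 (hmax _ (subset_convexHull ℝ s (hz j hj))))).1 hsum i hi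
        linarith [(mul_eq_zero.1 this).resolve_left hwi]
      exact ⟨hz i hi, fun y hy => hzx ▸ hmax y (subset_convexHull ℝ s hy)⟩
    rw [← Finset.centerMass_filter_ne_zero]
    refine Finset.centerMass_mem_convexHull _ (fun i hi => hw₀ i (mem_filter.1 hi).1) ?_
      fun i hi => hmax_z i (mem_filter.1 hi).1 (mem_filter.1 hi).2
    rw [sum_filter_ne_zero, hw₁]
    exact one_pos
  · refine convexHull_min (fun v ⟨hv, hvmax⟩ => ⟨subset_convexHull ℝ s hv, fun y hy => ?_⟩)
      (convex_convexHull ℝ s).toExposed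
    exact convexHull_min hvmax (convex_halfSpace_le ℓ.isLinear (ℓ v)) hy

theorem toExposed_eq_of_forall_le {P : Set E} {c : ℝ} {x₀ : E} (hle : ∀ y ∈ P, ℓ y ≤ c)
    (hx₀ : x₀ ∈ P) (hx₀c : ℓ x₀ = c) : ℓ.toExposed P = {x | x ∈ P ∧ ℓ x = c} := by
  ext x
  exact ⟨fun ⟨hx, hmax⟩ => ⟨hx, le_antisymm (hle x hx) (hx₀c ▸ hmax x₀ hx₀)⟩,
    fun ⟨hx, hxc⟩ => ⟨hx, fun y hy => hxc ▸ hle y hy⟩⟩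

theorem toExposed_smul {P : Set E} {c : ℝ} (hc : 0 < c) : (c • ℓ).toExposed P = ℓ.toExposed P := by
  ext x
  simp only [toExposed, smul_apply, smul_eq_mul, mul_le_mul_iff_right₀ hc]

theorem finrank_vectorSpan_lt_finrank [FiniteDimensional ℝ E] (hℓ : ℓ ≠ 0) {s : Set E} {c : ℝ}
    (hs : ∀ x ∈ s, ℓ x = c) : Module.finrank ℝ (vectorSpan ℝ s) < Module.finrank ℝ E := by
  have hker : vectorSpan ℝ s ≤ ker ℓ := by
    rw [vectorSpan_def, Submodule.span_le]
    rintro _ ⟨x, hx, y, hy, rfl⟩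
    simp [hs x hx, hs y hy]
  exact (Submodule.finrank_mono hker).trans_lt (Submodule.finrank_lt (ker_eq_top.not.2 hℓ))

end LinearMap

theorem Set.Finite.finrank_vectorSpan_add_one_le_ncard {k V P : Type*} [DivisionRing k]
    [AddCommGroup V] [Module k V] [AddTorsor V P] {s : Set P} (hs : s.Finite) (hne : s.Nonempty) :
    Module.finrank k (vectorSpan k s) + 1 ≤ s.ncard := by
  classical
  obtain ⟨t, rfl⟩ := hs.exists_finset_coe
  have hcard : #t = #t - 1 + 1 := (Nat.sub_add_cancel (card_pos.2 (coe_nonempty.1 hne))).symm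
  have := finrank_vectorSpan_image_finset_le k id t hcard
  rw [Finset.image_id] at this
  rw [Set.ncard_coe_finset]
  omega

theorem Finset.exists_sum_eq_mul_of_abs_eq {ι : Type*} (s : Finset ι) {x : ι → ℝ} {M : ℝ}
    (h : ∀ i ∈ s, |x i| = M) : ∃ k : ℤ, ∑ i ∈ s, x i = (2 * k + #s) * M := by
  classical
  induction s using Finset.induction_on with
  | empty => exact ⟨0, by simp⟩
  | insert a s ha ih =>
    obtain ⟨k, hk⟩ := ih fun i hi => h i (mem_insert_of_mem hi)
    rw [sum_insert ha, card_insert_of_notMem ha, hk]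
    have hM : 0 ≤ M := h a (mem_insert_self a s) ▸ abs_nonneg _
    rcases (abs_eq hM).1 (h a (mem_insert_self a s)) with hxa | hxa
    · exact ⟨k, by rw [hxa]; push_cast; ring⟩
    · exact ⟨k - 1, by rw [hxa]; push_cast; ring⟩

theorem abs_eq_of_abs_sum_eq {ι : Type*} [Fintype ι] [DecidableEq ι] (hodd : Odd (Fintype.card ι))
    {x : ι → ℝ} {M : ℝ} {i₀ : ι} (hx : ∀ i ≠ i₀, |x i| = M) (hsum : |∑ i, x i| = M)
    (hle : |x i₀| ≤ M) : |x i₀| = M := by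
  obtain ⟨k, hk⟩ :=
    (univ.erase i₀).exists_sum_eq_mul_of_abs_eq fun i hi => hx i (ne_of_mem_erase hi)
  have hcard := card_erase_add_one (mem_univ i₀)
  rw [card_univ] at hcard
  have hM : 0 ≤ M := hsum ▸ abs_nonneg _
  obtain ⟨σ, hσ, hσsum⟩ : ∃ σ : ℤ, (σ = 1 ∨ σ = -1) ∧ ∑ i, x i = σ * M := by
    rcases (abs_eq hM).1 hsum with h | h
    · exact ⟨1, Or.inl rfl, by simp [h]⟩
    · exact ⟨-1, Or.inr rfl, by simp [h]⟩
  -- `x i₀` is an odd multiple of `M`, as `#(univ.erase i₀) = card ι - 1` is even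
  set z : ℤ := σ - 2 * k - #(univ.erase i₀)
  have hz : x i₀ = z * M := by
    rw [← add_sum_erase univ x (mem_univ i₀), hk] at hσsum
    simp only [z]; push_cast; linarith
  have hz0 : z ≠ 0 := by
    obtain ⟨r, hr⟩ := hodd
    omega
  have : M ≤ |x i₀| := by
    rw [hz, abs_mul, abs_of_nonneg hM]
    exact le_mul_of_one_le_left hM (by exact_mod_cast Int.one_le_abs hz0)
  linarith

namespace PN

variable {n : ℕ}

def gen : Option (Fin n) → Fin n → ℝ
  | none => 1
  | some i => Pi.single i 1

variable (n) in
def vertices : Set (Fin n → ℝ) := Set.range gen ∪ Set.range (-gen)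

theorem eq_convexHull_vertices (n : ℕ) : PN n = convexHull ℝ (vertices n) := by
  unfold PN vertices
  congr 1
  ext v
  simp only [Set.mem_union, Set.mem_ofPred_eq, Set.mem_insert_iff, Set.mem_singleton_iff,
    Set.mem_range, Option.exists, gen, Pi.neg_apply]
  constructor
  · rintro (⟨i, rfl | rfl⟩ | rfl | rfl)
    exacts [Or.inl (Or.inr ⟨i, rfl⟩), Or.inr (Or.inr ⟨i, rfl⟩), Or.inl (Or.inl rfl),
      Or.inr (Or.inl rfl)]
  · rintro ((rfl | ⟨i, rfl⟩) | (rfl | ⟨i, rfl⟩))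
    exacts [Or.inr (Or.inl rfl), Or.inl ⟨i, Or.inl rfl⟩, Or.inr (Or.inr rfl),
      Or.inl ⟨i, Or.inr rfl⟩]

theorem vertices_finite (n : ℕ) : (vertices n).Finite :=
  (Set.finite_range _).union (Set.finite_range _)

variable (ℓ : (Fin n → ℝ) →ₗ[ℝ] ℝ)

@[simp] theorem gen_some (i : Fin n) : gen (some i) = Pi.single i 1 := rfl

theorem apply_gen_none : ℓ (gen none) = ∑ i, ℓ (gen (some i)) := by
  simp only [gen, ← map_sum, Finset.univ_sum_single (fun _ => (1 : ℝ))]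
  rfl

noncomputable def vertexSup : ℝ := ⨆ o, |ℓ (gen o)|

theorem abs_apply_gen_le_vertexSup (o : Option (Fin n)) : |ℓ (gen o)| ≤ vertexSup ℓ :=
  le_ciSup (f := fun o => |ℓ (gen o)|) (Set.finite_range _).bddAbove o

theorem apply_le_vertexSup {v : Fin n → ℝ} (hv : v ∈ vertices n) : ℓ v ≤ vertexSup ℓ := by
  rcases hv with ⟨o, rfl⟩ | ⟨o, rfl⟩
  · exact (le_abs_self _).trans (abs_apply_gen_le_vertexSup ℓ o)
  · rw [Pi.neg_apply, map_neg]
    exact (neg_le_abs _).trans (abs_apply_gen_le_vertexSup ℓ o)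

theorem exists_apply_eq_vertexSup : ∃ v ∈ vertices n, ℓ v = vertexSup ℓ := by
  obtain ⟨o, ho⟩ := exists_eq_ciSup_of_finite (f := fun o => |ℓ (gen o)|)
  rcases abs_choice (ℓ (gen o)) with h | h
  · exact ⟨gen o, Or.inl ⟨o, rfl⟩, h ▸ ho⟩
  · exact ⟨-gen o, Or.inr ⟨o, rfl⟩, by rw [map_neg, ← h]; exact ho⟩

theorem toExposed_vertices :
    ℓ.toExposed (vertices n) = {v | v ∈ vertices n ∧ ℓ v = vertexSup ℓ} :=
  have ⟨_, hv, hvM⟩ := exists_apply_eq_vertexSup ℓ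
  ℓ.toExposed_eq_of_forall_le (fun _ => apply_le_vertexSup ℓ) hv hvM

theorem toExposed_PN : ℓ.toExposed (PN n) = {x | x ∈ PN n ∧ ℓ x = vertexSup ℓ} := by
  obtain ⟨v, hv, hvM⟩ := exists_apply_eq_vertexSup ℓ
  rw [eq_convexHull_vertices]
  exact ℓ.toExposed_eq_of_forall_le
    (fun y hy => convexHull_min (fun _ => apply_le_vertexSup ℓ)
      (convex_halfSpace_le ℓ.isLinear _) hy) (subset_convexHull ℝ _ hv) hvM

theorem vertexSup_pos (hℓ : ℓ ≠ 0) : 0 < vertexSup ℓ := by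
  by_contra! h
  refine hℓ (Module.Basis.ext (Pi.basisFun ℝ (Fin n)) fun i => ?_)
  rw [Pi.basisFun_apply, LinearMap.zero_apply, ← abs_nonpos_iff]
  exact (abs_apply_gen_le_vertexSup ℓ (some i)).trans h

theorem toExposed_vertices_subset (hℓ : ℓ ≠ 0) :
    ℓ.toExposed (vertices n) ⊆ (fun o => if ℓ (gen o) = vertexSup ℓ then gen o else -gen o) ''
      {o | |ℓ (gen o)| = vertexSup ℓ} := by
  have hM := vertexSup_pos ℓ hℓ
  rw [toExposed_vertices]
  rintro _ ⟨⟨o, rfl⟩ | ⟨o, rfl⟩, hv⟩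
  · exact ⟨o, by simp [hv, abs_of_pos hM], by simp [hv]⟩
  · rw [Pi.neg_apply, map_neg, neg_eq_iff_eq_neg] at hv
    refine ⟨o, by simp [hv, abs_of_pos hM], ?_⟩
    simp [hv, (neg_lt_self hM).ne]

theorem card_abs_apply_gen_ne_vertexSup_le_one (hn : 0 < n) (hℓ : ℓ ≠ 0)
    (hdim : Module.finrank ℝ (affineSpan ℝ (ℓ.toExposed (PN n))).direction = n - 1) :
    #{o | |ℓ (gen o)| ≠ vertexSup ℓ} ≤ 1 := by
  rw [eq_convexHull_vertices, ℓ.toExposed_convexHull, affineSpan_convexHull,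
    direction_affineSpan] at hdim
  have hne : (ℓ.toExposed (vertices n)).Nonempty := by
    obtain ⟨v, hv, hvM⟩ := exists_apply_eq_vertexSup ℓ
    exact ⟨v, (toExposed_vertices ℓ).symm ▸ ⟨hv, hvM⟩⟩
  have hn_le := ((vertices_finite n).subset fun _ hv => hv.1).finrank_vectorSpan_add_one_le_ncard
    (k := ℝ) hne
  have hle := (Set.ncard_le_ncard (toExposed_vertices_subset ℓ hℓ) ((Set.toFinite _).image _)).trans
    (Set.ncard_image_le (Set.toFinite _))
  rw [← coe_filter_univ, Set.ncard_coe_finset] at hle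
  have htot := card_filter_add_card_filter_not (s := univ)
    fun o : Option (Fin n) => |ℓ (gen o)| = vertexSup ℓ
  rw [card_univ, Fintype.card_option, Fintype.card_fin] at htot
  rw [hdim] at hn_le
  simp only [ne_eq]
  omega

theorem abs_apply_single_eq_vertexSup (hodd : Odd n) (hℓ : ℓ ≠ 0)
    (hdim : Module.finrank ℝ (affineSpan ℝ (ℓ.toExposed (PN n))).direction = n - 1) (i : Fin n) :
    |ℓ (Pi.single i 1)| = vertexSup ℓ := by
  by_contra hi
  have hcard := card_abs_apply_gen_ne_vertexSup_le_one ℓ hodd.pos hℓ hdim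
  have hother : ∀ o ≠ some i, |ℓ (gen o)| = vertexSup ℓ := fun o ho => by
    by_contra h
    exact ho (card_le_one.1 hcard o (by simpa using h) (some i) (mem_filter.2 ⟨mem_univ _, hi⟩))
  refine hi (abs_eq_of_abs_sum_eq (x := fun j => ℓ (gen (some j))) (by simpa using hodd)
    (fun j hj => hother (some j) (by simpa using hj)) ?_ (abs_apply_gen_le_vertexSup ℓ (some i)))
  rw [← apply_gen_none]
  exact hother none (Option.some_ne_none i).symm

def signVec (s : Finset (Fin n)) : Fin n → ℝ := fun i => if i ∈ s then 1 else -1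

noncomputable def signFunctional (s : Finset (Fin n)) : (Fin n → ℝ) →ₗ[ℝ] ℝ :=
  dotProductEquiv ℝ (Fin n) (signVec s)

def IsBalanced (s : Finset (Fin n)) : Prop := |2 * (#s : ℝ) - n| ≤ 1

theorem abs_signVec (s : Finset (Fin n)) (i : Fin n) : |signVec s i| = 1 := by
  unfold signVec; split_ifs <;> simp

theorem signFunctional_single (s : Finset (Fin n)) (i : Fin n) :
    signFunctional s (Pi.single i 1) = signVec s i := by
  simp [signFunctional]

theorem sum_signVec (s : Finset (Fin n)) : ∑ i, signVec s i = 2 * #s - n := by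
  have h : (#s : ℝ) + #sᶜ = n := by
    exact_mod_cast (card_add_card_compl s).trans (Fintype.card_fin n)
  unfold signVec
  rw [← sum_add_sum_compl s, sum_congr rfl fun i hi => if_pos hi,
    sum_congr rfl fun i hi => if_neg (mem_compl.1 hi)]
  simp only [sum_const, nsmul_eq_mul, mul_one, mul_neg]
  linarith

theorem signFunctional_gen_none (s : Finset (Fin n)) :
    signFunctional s (gen none) = 2 * #s - n := by
  simp only [apply_gen_none, gen_some, signFunctional_single, sum_signVec]

theorem vertexSup_signFunctional (hn : 0 < n) {s : Finset (Fin n)} (hs : IsBalanced s) :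
    vertexSup (signFunctional s) = 1 := by
  have habs : ∀ i, |signFunctional s (gen (some i))| = 1 := fun i => by
    rw [gen_some, signFunctional_single, abs_signVec]
  refine le_antisymm (ciSup_le fun o => ?_) ((habs ⟨0, hn⟩).symm.trans_le
    (abs_apply_gen_le_vertexSup _ _))
  cases o with
  | none => rwa [signFunctional_gen_none]
  | some i => exact (habs i).le

theorem toExposed_signFunctional (hn : 0 < n) {s : Finset (Fin n)} (hs : IsBalanced s) :
    (signFunctional s).toExposed (PN n) = {x | x ∈ PN n ∧ signFunctional s x = 1} := by
  rw [toExposed_PN, vertexSup_signFunctional hn hs]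

theorem single_mem_PN (i : Fin n) : Pi.single i 1 ∈ PN n :=
  eq_convexHull_vertices n ▸ subset_convexHull ℝ _ (Or.inl ⟨some i, rfl⟩)

theorem single_mem_toExposed_signFunctional_iff (hn : 0 < n) {s : Finset (Fin n)}
    (hs : IsBalanced s) (i : Fin n) :
    Pi.single i 1 ∈ (signFunctional s).toExposed (PN n) ↔ i ∈ s := by
  rw [toExposed_signFunctional hn hs]
  simp only [Set.mem_ofPred_eq, single_mem_PN, signFunctional_single, signVec, true_and]
  split_ifs with hi <;> norm_num [hi]

theorem injOn_toExposed_signFunctional (hn : 0 < n) :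
    Set.InjOn (fun s => (signFunctional s).toExposed (PN n)) {s | IsBalanced s} := by
  intro s hs t ht hst
  ext i
  rw [← single_mem_toExposed_signFunctional_iff hn hs,
    ← single_mem_toExposed_signFunctional_iff hn ht]
  exact Set.ext_iff.1 hst _

theorem isFacet_toExposed_signFunctional (hn : 0 < n) {s : Finset (Fin n)} (hs : IsBalanced s) :
    IsFacet n (PN n) ((signFunctional s).toExposed (PN n)) := by
  have hℓ : signFunctional s ≠ 0 := fun h => by
    simpa [h, abs_signVec] using congrArg abs (signFunctional_single s ⟨0, hn⟩)
  refine ⟨_, hℓ, rfl, ?_⟩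
  rw [direction_affineSpan]
  have hlt := (signFunctional s).finrank_vectorSpan_lt_finrank hℓ fun x hx =>
    ((toExposed_signFunctional hn hs ▸ hx : x ∈ {x | x ∈ PN n ∧ signFunctional s x = 1})).2
  rw [Module.finrank_fin_fun] at hlt
  let p : Fin n → Fin n → ℝ := fun i => Pi.single i (signVec s i)
  have hp : AffineIndependent ℝ p := (Pi.linearIndependent_single_of_ne_zero fun i =>
    abs_ne_zero.1 ((abs_signVec s i).trans_ne one_ne_zero)).affineIndependent
  have hpF : Set.range p ⊆ (signFunctional s).toExposed (PN n) := by
    rintro _ ⟨i, rfl⟩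
    rw [toExposed_signFunctional hn hs, eq_convexHull_vertices]
    refine ⟨subset_convexHull ℝ _ ?_, ?_⟩ <;> simp only [p, signVec] <;> split_ifs
    · exact Or.inl ⟨some i, rfl⟩
    · exact Or.inr ⟨some i, by simp [Pi.single_neg]⟩
    all_goals simp [signFunctional, signVec, *]
  have hrank := hp.finrank_vectorSpan (n := n - 1) (by rw [Fintype.card_fin]; omega)
  have hmono := Submodule.finrank_mono (vectorSpan_mono ℝ hpF)
  omega

theorem exists_isBalanced_of_isFacet (hodd : Odd n) {F : Set (Fin n → ℝ)}
    (hF : IsFacet n (PN n) F) : ∃ s, IsBalanced s ∧ F = (signFunctional s).toExposed (PN n) := by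
  obtain ⟨ℓ, hℓ, rfl, hdim⟩ := hF
  have habs := abs_apply_single_eq_vertexSup ℓ hodd hℓ hdim
  have hM := vertexSup_pos ℓ hℓ
  have hle := abs_apply_gen_le_vertexSup ℓ none
  set M := vertexSup ℓ
  set s : Finset (Fin n) := {i | 0 < ℓ (Pi.single i 1)}
  have hℓs : ℓ = M • signFunctional s :=
    Module.Basis.ext (Pi.basisFun ℝ (Fin n)) fun i => by
      rw [Pi.basisFun_apply, LinearMap.smul_apply, signFunctional_single, smul_eq_mul, ← habs i]
      simp only [s, signVec, mem_filter, mem_univ, true_and]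
      split_ifs with h
      · rw [abs_of_pos h, mul_one]
      · rw [abs_of_nonpos (not_lt.1 h), neg_mul_neg, mul_one]
  refine ⟨s, ?_, ?_⟩
  · rw [hℓs, LinearMap.smul_apply, signFunctional_gen_none, smul_eq_mul, abs_mul,
      abs_of_pos hM] at hle
    exact (mul_le_iff_le_one_right hM).1 hle
  · change ℓ.toExposed (PN n) = _
    rw [hℓs, LinearMap.toExposed_smul hM]

theorem setOf_isFacet (hodd : Odd n) : {F | IsFacet n (PN n) F} =
    (fun s => (signFunctional s).toExposed (PN n)) '' {s | IsBalanced s} := by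
  ext F
  constructor
  · intro hF
    obtain ⟨s, hs, rfl⟩ := exists_isBalanced_of_isFacet hodd hF
    exact ⟨s, hs, rfl⟩
  · rintro ⟨s, hs, rfl⟩
    exact isFacet_toExposed_signFunctional hodd.pos hs

theorem ncard_setOf_isBalanced (hodd : Odd n) :
    {s : Finset (Fin n) | IsBalanced s}.ncard = 2 * n.choose ((n - 1) / 2) := by
  obtain ⟨r, rfl⟩ := hodd
  have hset : {s : Finset (Fin (2 * r + 1)) | IsBalanced s} =
      ↑(powersetCard r univ ∪ powersetCard (r + 1) univ : Finset (Finset (Fin (2 * r + 1)))) := by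
    ext s
    have hlo : (-1 : ℝ) ≤ 2 * #s - ↑(2 * r + 1) ↔ r ≤ #s := by
      rw [← Nat.cast_le (α := ℝ)]; push_cast; constructor <;> intro <;> linarith
    have hhi : 2 * (#s : ℝ) - ↑(2 * r + 1) ≤ 1 ↔ #s ≤ r + 1 := by
      rw [← Nat.cast_le (α := ℝ)]; push_cast; constructor <;> intro <;> linarith
    simp only [Set.mem_ofPred_eq, IsBalanced, abs_le, hlo, hhi, coe_union, Set.mem_union, mem_coe,
      mem_powersetCard_univ]
    omega
  have hdisj : Disjoint (powersetCard r (univ : Finset (Fin (2 * r + 1))))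
      (powersetCard (r + 1) univ) :=
    disjoint_left.2 fun s h₁ h₂ => by rw [mem_powersetCard_univ] at h₁ h₂; omega
  rw [hset, Set.ncard_coe_finset, card_union_of_disjoint hdisj, card_powersetCard,
    card_powersetCard, card_univ, Fintype.card_fin, Nat.choose_symm_half,
    show (2 * r + 1 - 1) / 2 = r by omega]
  ring

end PN

theorem card_facets_PN_general (n : ℕ) (hodd : Odd n) :
    Set.ncard {F : Set (Fin n → ℝ) | IsFacet n (PN n) F} =
      2 * Nat.choose n ((n - 1) / 2) := by
  rw [PN.setOf_isFacet hodd, (PN.injOn_toExposed_signFunctional hodd.pos).ncard_image,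
    PN.ncard_setOf_isBalanced hodd]

/-- For odd `n ≥ 3` (so `N = n+1` even), the number of facets of `P_N` is exactly
`2 · C(N-1, N/2 - 1) = 2 · C(n, (n-1)/2)`. -/
theorem card_facets_PN (n : ℕ) (hn : 3 ≤ n) (hodd : Odd n) :
    Set.ncard {F : Set (Fin n → ℝ) | IsFacet n (PN n) F} =
      2 * Nat.choose n ((n - 1) / 2) :=
  card_facets_PN_general n hodd
end

section
/- Let n ≥ 3 be odd and let F̄_0 = conv{0, e_1, …, e_{(n−1)/2}, −e_{(n+1)/2}, …, −e_{n−1}, −(e_1 + ⋯ + e_{n−1})} ⊂ ℝ^{n−1}. Then NVol_{n−1}(F̄_0) = (n+1)/2. -/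
/-!
Flipping the signs of the coordinates `i ≥ (n-1)/2` is a volume-preserving involution carrying
`F̄_0` to `conv (Δ ∪ {u})`, where `Δ = conv {0, e_1, …, e_m}` with `m = n - 1`, and `u` has
`k = (n-1)/2` coordinates equal to `-1` and the others equal to `1`. Whenever `∑ uᵢ ≤ 1`, the facets
of `Δ` visible from `u` are the `{xⱼ = 0}` with `uⱼ < 0`, so `conv (Δ ∪ {u})` is the almost disjoint
union of `Δ` and the simplices obtained from `Δ` by replacing the vertex `eⱼ` with `u`, each the
image of `Δ` under a linear map of determinant `uⱼ`. The volume is therefore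
`(1 + ∑_{uⱼ < 0} |uⱼ|) · vol Δ = (1 + k) / m!`, where `vol Δ = 1 / m!` by slicing.
-/

open MeasureTheory

/-- The vertex set of
`F̄_0 = conv{0, e_1, …, e_{(n-1)/2}, -e_{(n+1)/2}, …, -e_{n-1}, -(e_1 + ⋯ + e_{n-1})} ⊂ ℝ^{n-1}`:
in 0-indexed coordinates of `ℝ^{n-1}`, the origin, `e_i` for `i < (n-1)/2`, `-e_i` for
`(n-1)/2 ≤ i < n-1`, and the all-`(-1)`s vector `-(e_1 + ⋯ + e_{n-1})`. -/
def F0barVertices (n : ℕ) : Set (Fin (n - 1) → ℝ) :=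
  {0} ∪
    {v | ∃ i : Fin (n - 1),
        ((i : ℕ) < (n - 1) / 2 ∧ v = Pi.single i 1) ∨
        ((n - 1) / 2 ≤ (i : ℕ) ∧ v = -Pi.single i 1)} ∪
    {(fun _ => -1 : Fin (n - 1) → ℝ)}

open Finset

def cornerSimplex (ι : Type*) [Fintype ι] (s : ℝ) : Set (ι → ℝ) :=
  {y | 0 ≤ y ∧ ∑ i, y i ≤ s}

section Corner

variable {ι : Type*} [Fintype ι]

theorem isClosed_cornerSimplex (s : ℝ) : IsClosed (cornerSimplex ι s) :=
  isClosed_Ici.inter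
    (isClosed_le (continuous_finsetSum _ fun i _ => continuous_apply i) continuous_const)

theorem convex_cornerSimplex (s : ℝ) : Convex ℝ (cornerSimplex ι s) :=
  (convex_Ici 0).inter (convex_halfSpace_le (f := fun y : ι → ℝ => ∑ i, y i)
    ⟨fun _ _ => by simp [sum_add_distrib], fun _ _ => by simp [mul_sum]⟩ s)

theorem isCompact_cornerSimplex (s : ℝ) : IsCompact (cornerSimplex ι s) := by
  refine (isCompact_Icc (a := 0) (b := fun _ => s)).of_isClosed_subset
    (isClosed_cornerSimplex s) fun y hy => ⟨hy.1, fun i => ?_⟩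
  exact (single_le_sum (fun j _ => hy.1 j) (mem_univ i)).trans hy.2

theorem add_sub_smul_mem_cornerSimplex {u z : ι → ℝ} {a t : ℝ} (hu : ∑ i, u i ≤ 1)
    (hz : z ∈ cornerSimplex ι (1 - a)) (hta : t ≤ a)
    (hneg : ∀ i, u i < 0 → t * u i ≤ a * u i + z i) :
    a • u + z - t • u ∈ cornerSimplex ι (1 - t) := by
  refine ⟨fun i => ?_, ?_⟩
  · simp only [Pi.zero_apply, Pi.sub_apply, Pi.add_apply, Pi.smul_apply, smul_eq_mul]
    rcases lt_or_ge (u i) 0 with hi | hi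
    · linarith [hneg i hi]
    · have hzi : 0 ≤ z i := hz.1 i
      nlinarith [mul_nonneg (sub_nonneg.2 hta) hi]
  · simp only [Pi.sub_apply, Pi.add_apply, Pi.smul_apply, smul_eq_mul, sum_sub_distrib,
      sum_add_distrib, ← mul_sum]
    nlinarith [hz.2]

theorem sum_smul_mem_convexHull_insert_zero {E : Type*} [AddCommGroup E] [Module ℝ E]
    (g : ι → E) {y : ι → ℝ} (hy : y ∈ cornerSimplex ι 1) :
    ∑ i, y i • g i ∈ convexHull ℝ (insert 0 (Set.range g)) := by
  have := (convex_convexHull ℝ (insert 0 (Set.range g))).sum_mem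
    (w := fun o : Option ι => o.elim (1 - ∑ i, y i) y) (z := fun o => o.elim 0 g)
    (t := univ) ?_ ?_ ?_
  · simpa [Fintype.sum_option] using this
  · rintro (_ | i) _
    exacts [sub_nonneg.2 hy.2, hy.1 i]
  · simp [Fintype.sum_option]
  · rintro (_ | i) _
    exacts [subset_convexHull ℝ _ (Set.mem_insert _ _),
      subset_convexHull ℝ _ (Set.mem_insert_of_mem _ (Set.mem_range_self i))]

variable [DecidableEq ι]

theorem convexHull_insert_zero_range_single :
    convexHull ℝ (insert 0 (Set.range fun i => Pi.single i 1)) = cornerSimplex ι 1 := by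
  refine subset_antisymm (convexHull_min ?_ (convex_cornerSimplex 1)) fun y hy => ?_
  · rintro _ (rfl | ⟨i, rfl⟩)
    · simp [cornerSimplex]
    · exact ⟨Pi.single_nonneg.2 zero_le_one, by simp⟩
  · simpa [← pi_eq_sum_univ'] using
      sum_smul_mem_convexHull_insert_zero (fun i => Pi.single i (1 : ℝ)) hy

theorem update_mem_cornerSimplex {w : ι → ℝ} {t : ℝ} {j : ι} (hw : w ∈ cornerSimplex ι (1 - t))
    (hwj : w j = 0) (ht : 0 ≤ t) : Function.update w j t ∈ cornerSimplex ι 1 := by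
  refine ⟨fun i => ?_, ?_⟩
  · rcases eq_or_ne i j with rfl | hij
    · simpa using ht
    · simpa [hij] using hw.1 i
  · rw [sum_update_of_mem (mem_univ j), sdiff_singleton_eq_erase, sum_erase _ hwj]
    linarith [hw.2]

theorem exists_eq_smul_add_of_mem_convexHull_insert {u x : ι → ℝ}
    (hx : x ∈ convexHull ℝ (insert u (insert 0 (Set.range fun i => Pi.single i 1)))) :
    ∃ a z, 0 ≤ a ∧ z ∈ cornerSimplex ι (1 - a) ∧ x = a • u + z := by
  rw [convexHull_insert (Set.insert_nonempty _ _), convexHull_insert_zero_range_single,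
    convexJoin_singleton_left] at hx
  obtain ⟨y, hy, a, b, ha, hb, hab, rfl⟩ := Set.mem_iUnion₂.1 hx
  refine ⟨a, b • y, ha, ⟨smul_nonneg hb hy.1, ?_⟩, rfl⟩
  simpa [← mul_sum, ← hab] using mul_le_of_le_one_right hb hy.2

end Corner

theorem volume_cornerSimplex (m : ℕ) {s : ℝ} (hs : 0 ≤ s) :
    volume (cornerSimplex (Fin m) s) = ENNReal.ofReal (s ^ m / m.factorial) := by
  induction m generalizing s with
  | zero => simp [cornerSimplex, hs, volume_pi]
  | succ m ih =>
    set E : Set (ℝ × (Fin m → ℝ)) := {p | 0 ≤ p.1 ∧ p.2 ∈ cornerSimplex (Fin m) (s - p.1)}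
    have hE : MeasurableSet E := by
      refine IsClosed.measurableSet (.inter (isClosed_le continuous_const continuous_fst) <|
        .inter (isClosed_Ici.preimage continuous_snd)
          (isClosed_le ?_ (continuous_const.sub continuous_fst)))
      exact continuous_finsetSum _ fun i _ => (continuous_apply i).comp continuous_snd
    have hpre : cornerSimplex (Fin (m + 1)) s =
        MeasurableEquiv.piFinSuccAbove (fun _ => ℝ) 0 ⁻¹' E := by
      ext y
      simp [E, cornerSimplex, Pi.le_def, Fin.forall_fin_succ, Fin.sum_univ_succ,
        le_sub_iff_add_le', and_assoc, Fin.tail]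
    have hslice (t : ℝ) : volume (Prod.mk t ⁻¹' E) =
        (Set.Icc 0 s).indicator (fun t => ENNReal.ofReal ((s - t) ^ m / m.factorial)) t := by
      by_cases ht : t ∈ Set.Icc 0 s
      · rw [Set.indicator_of_mem ht, ← ih (sub_nonneg.2 ht.2)]
        congr 1
        ext y
        simp [E, ht.1]
      · rw [Set.indicator_of_notMem ht, show Prod.mk t ⁻¹' E = ∅ from ?_, measure_empty]
        refine Set.eq_empty_iff_forall_notMem.2 ?_
        rintro y ⟨ht0, hy0, hys⟩
        have : 0 ≤ ∑ i, y i := sum_nonneg fun i _ => hy0 i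
        exact ht ⟨ht0, by linarith⟩
    have hint : ∫ t in (0)..s, (s - t) ^ m / m.factorial = s ^ (m + 1) / (m + 1).factorial := by
      rw [intervalIntegral.integral_div, intervalIntegral.integral_comp_sub_left
        (fun x => x ^ m), integral_pow, Nat.factorial_succ]
      push_cast
      field_simp
      ring
    rw [hpre, (volume_preserving_piFinSuccAbove (fun _ => ℝ) 0).measure_preimage
      hE.nullMeasurableSet, Measure.volume_eq_prod, Measure.prod_apply hE]
    simp_rw [hslice]
    rw [lintegral_indicator measurableSet_Icc, ← hint, intervalIntegral.integral_of_le hs,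
      ← integral_Icc_eq_integral_Ioc, ofReal_integral_eq_lintegral_ofReal]
    · exact (by fun_prop : Continuous fun t : ℝ => (s - t) ^ m / m.factorial).integrableOn_Icc
    · filter_upwards [ae_restrict_mem measurableSet_Icc] with t ht
      exact div_nonneg (pow_nonneg (sub_nonneg.2 ht.2) m) (Nat.cast_nonneg _)

theorem volume_cornerSimplex_one (m : ℕ) :
    volume (cornerSimplex (Fin m) 1) = (m.factorial : ENNReal)⁻¹ := by
  rw [volume_cornerSimplex m zero_le_one, one_pow, one_div,
    ENNReal.ofReal_inv_of_pos (by positivity), ENNReal.ofReal_natCast]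

theorem MeasureTheory.Measure.addHaar_ker_of_ne_zero {E : Type*} [NormedAddCommGroup E]
    [NormedSpace ℝ E] [MeasurableSpace E] [BorelSpace E] [FiniteDimensional ℝ E] (μ : Measure E)
    [μ.IsAddHaarMeasure] {f : E →ₗ[ℝ] ℝ} (hf : f ≠ 0) : μ (LinearMap.ker f) = 0 :=
  Measure.addHaar_submodule μ _ (mt LinearMap.ker_eq_top.1 hf)

section Pivot

variable {ι : Type*} [Fintype ι] [DecidableEq ι] (u : ι → ℝ) (j : ι)

noncomputable def pivot : (ι → ℝ) →ₗ[ℝ] (ι → ℝ) :=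
  Matrix.toLin' ((1 : Matrix ι ι ℝ).updateCol j u)

theorem pivot_apply (y : ι → ℝ) : pivot u j y = Function.update y j 0 + y j • u := by
  ext r
  simp only [pivot, Matrix.toLin'_apply, Matrix.mulVec, dotProduct, Matrix.updateCol_apply,
    Matrix.one_apply, ite_mul, one_mul, zero_mul, Pi.add_apply, Pi.smul_apply, smul_eq_mul,
    Function.update_apply]
  rw [Fintype.sum_eq_add_sum_compl j, if_pos rfl, sum_congr rfl
    (g := fun x => if r = x then y x else 0) fun x hx => if_neg (by simpa using hx), sum_ite_eq]
  by_cases h : r = j <;> simp [h] <;> ring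

theorem pivot_single (i : ι) :
    pivot u j (Pi.single i 1) = Function.update (fun i => (Pi.single i 1 : ι → ℝ)) j u i := by
  rw [pivot_apply]
  by_cases h : i = j
  · subst h
    simp [Pi.single, Function.update_idem]
  · simp [h, Ne.symm h]

theorem det_pivot : LinearMap.det (pivot u j) = u j := by
  rw [pivot, LinearMap.det_toLin']
  simpa [Matrix.one_apply] using Matrix.det_updateCol_sum (1 : Matrix ι ι ℝ) j u

theorem volume_image_pivot (s : Set (ι → ℝ)) :
    volume (pivot u j '' s) = ENNReal.ofReal |u j| * volume s := by
  rw [Measure.addHaar_image_linearMap, det_pivot]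

theorem pivot_mem_convexHull {y : ι → ℝ} (hy : y ∈ cornerSimplex ι 1) :
    pivot u j y ∈ convexHull ℝ (insert u (insert 0 (Set.range fun i => Pi.single i 1))) := by
  rw [pi_eq_sum_univ' y, map_sum]
  simp_rw [map_smul, pivot_single]
  refine convexHull_mono ?_ (sum_smul_mem_convexHull_insert_zero _ hy)
  rintro _ (rfl | ⟨i, rfl⟩)
  · exact Set.mem_insert_of_mem _ (Set.mem_insert _ _)
  · by_cases h : i = j
    · subst h; simp
    · simp [h]

theorem pivot_update {w : ι → ℝ} (hwj : w j = 0) (t : ℝ) :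
    pivot u j (Function.update w j t) = w + t • u := by
  rw [pivot_apply, Function.update_idem, Function.update_self, ← hwj, Function.update_eq_self]

end Pivot

section Decomposition

variable {ι : Type*} [Fintype ι] [DecidableEq ι] {u : ι → ℝ}

theorem convexHull_insert_subset_cornerSimplex_union_pivot (hu : ∑ i, u i ≤ 1) :
    convexHull ℝ (insert u (insert 0 (Set.range fun i => Pi.single i 1))) ⊆
      cornerSimplex ι 1 ∪ ⋃ j ∈ univ.filter (u · < 0), pivot u j '' cornerSimplex ι 1 := by
  intro x hx
  obtain ⟨a, z, ha, hz, rfl⟩ := exists_eq_smul_add_of_mem_convexHull_insert hx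
  by_cases hcorner : ∀ i, u i < 0 → 0 ≤ a * u i + z i
  · left
    simpa using add_sub_smul_mem_cornerSimplex hu hz ha fun i hi => by simpa using hcorner i hi
  right
  push Not at hcorner
  obtain ⟨i, hi, hxi⟩ := hcorner
  set x := a • u + z
  -- `t = x j / u j` below is the least weight of `u` over all ways of writing `x = t • u + w` with
  -- `w ∈ cornerSimplex ι (1 - t)`; at that weight the `j`-th coordinate of `w` vanishes.
  obtain ⟨j, hj, hmax⟩ := (univ.filter (u · < 0)).exists_max_image (fun i => x i / u i)
    ⟨i, by simpa using hi⟩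
  simp only [mem_filter, mem_univ, true_and] at hj hmax
  set t := x j / u j
  have ht : 0 < t := (div_pos_of_neg_of_neg hxi hi).trans_le (hmax i hi)
  have hta : t ≤ a := by
    have hzj : 0 ≤ z j := hz.1 j
    exact (div_le_iff_of_neg hj).2 (by simp [x]; linarith)
  have hw := add_sub_smul_mem_cornerSimplex hu hz hta fun i hi =>
    (div_le_iff_of_neg hi).1 (hmax i hi)
  have hwj : (x - t • u) j = 0 := by simp [t, div_mul_cancel₀ _ hj.ne]
  refine Set.mem_biUnion (x := j) (by simpa using hj)
    ⟨Function.update (x - t • u) j t, update_mem_cornerSimplex hw hwj ht.le, ?_⟩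
  rw [pivot_update u j hwj, sub_add_cancel]

theorem nonpos_of_mem_image_pivot {j : ι} (hj : u j ≤ 0) {x : ι → ℝ}
    (hx : x ∈ pivot u j '' cornerSimplex ι 1) : x j ≤ 0 := by
  obtain ⟨y, hy, rfl⟩ := hx
  have hyj : 0 ≤ y j := hy.1 j
  simpa [pivot_apply] using mul_nonpos_of_nonneg_of_nonpos hyj hj

theorem mul_le_mul_of_mem_image_pivot {i j : ι} (hi : u i < 0) (hji : j ≠ i) {x : ι → ℝ}
    (hx : x ∈ pivot u i '' cornerSimplex ι 1) : x j * u i ≤ x i * u j := by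
  obtain ⟨y, hy, rfl⟩ := hx
  have hyj : 0 ≤ y j := hy.1 j
  simp only [pivot_apply, Pi.add_apply, Function.update_self, Function.update_of_ne hji,
    Pi.smul_apply, smul_eq_mul, zero_add]
  nlinarith

theorem aedisjoint_cornerSimplex_image_pivot {j : ι} (hj : u j ≤ 0) :
    AEDisjoint volume (cornerSimplex ι 1) (pivot u j '' cornerSimplex ι 1) := by
  have hf : (LinearMap.proj j : (ι → ℝ) →ₗ[ℝ] ℝ) ≠ 0 := fun h => by
    simpa using LinearMap.congr_fun h (Pi.single j 1)
  refine measure_mono_null (fun x ⟨hx, hx'⟩ => ?_) (Measure.addHaar_ker_of_ne_zero volume hf)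
  exact le_antisymm (nonpos_of_mem_image_pivot hj hx') (hx.1 j)

theorem aedisjoint_image_pivot {i j : ι} (hi : u i < 0) (hj : u j < 0) (hij : i ≠ j) :
    AEDisjoint volume (pivot u i '' cornerSimplex ι 1) (pivot u j '' cornerSimplex ι 1) := by
  set f : (ι → ℝ) →ₗ[ℝ] ℝ := u j • LinearMap.proj i - u i • LinearMap.proj j
  have hf : f ≠ 0 := fun h => by
    simpa [f, hij, hj.ne] using LinearMap.congr_fun h (Pi.single i 1)
  refine measure_mono_null (fun x ⟨hx, hx'⟩ => ?_) (Measure.addHaar_ker_of_ne_zero volume hf)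
  have h₁ := mul_le_mul_of_mem_image_pivot hi (Ne.symm hij) hx
  have h₂ := mul_le_mul_of_mem_image_pivot hj hij hx'
  simp only [SetLike.mem_coe, LinearMap.mem_ker, f, LinearMap.sub_apply, LinearMap.smul_apply,
    LinearMap.proj_apply, smul_eq_mul]
  linarith

theorem volume_convexHull_insert_zero_range_single (hu : ∑ i, u i ≤ 1) :
    volume (convexHull ℝ (insert u (insert 0 (Set.range fun i => Pi.single i 1)))) =
      (1 + ∑ j ∈ univ.filter (u · < 0), ENNReal.ofReal |u j|) * volume (cornerSimplex ι 1) := by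
  have hpiece (j : ι) : MeasurableSet (pivot u j '' cornerSimplex ι 1) :=
    ((isCompact_cornerSimplex 1).image (pivot u j).continuous_of_finiteDimensional).isClosed
      |>.measurableSet
  have hdecomp : convexHull ℝ (insert u (insert 0 (Set.range fun i => Pi.single i 1))) =
      cornerSimplex ι 1 ∪ ⋃ j ∈ univ.filter (u · < 0), pivot u j '' cornerSimplex ι 1 := by
    refine (convexHull_insert_subset_cornerSimplex_union_pivot hu).antisymm (Set.union_subset ?_ ?_)
    · rw [← convexHull_insert_zero_range_single]
      exact convexHull_mono (Set.subset_insert _ _)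
    · exact Set.iUnion₂_subset fun j _ => Set.image_subset_iff.2 fun y => pivot_mem_convexHull u j
  rw [hdecomp,
    measure_union₀ (Finset.measurableSet_biUnion _ fun j _ => hpiece j).nullMeasurableSet,
    measure_biUnion_finset₀ _ fun j _ => (hpiece j).nullMeasurableSet]
  · simp_rw [volume_image_pivot, add_mul, one_mul, sum_mul]
  · intro i hi j hj hij
    simp only [coe_filter, mem_univ, true_and, Set.mem_ofPred_eq] at hi hj
    exact aedisjoint_image_pivot hi hj hij
  · refine AEDisjoint.iUnion_right_iff.2 fun j => AEDisjoint.iUnion_right_iff.2 fun hj => ?_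
    exact aedisjoint_cornerSimplex_image_pivot (by simp at hj; exact hj.le)

end Decomposition

section F0bar

def F0barSigns (n : ℕ) : Fin (n - 1) → ℝ :=
  fun i => if (i : ℕ) < (n - 1) / 2 then 1 else -1

theorem abs_F0barSigns (n : ℕ) (i : Fin (n - 1)) : |F0barSigns n i| = 1 := by
  unfold F0barSigns; split_ifs <;> simp

theorem F0barVertices_eq_image (n : ℕ) :
    F0barVertices n = Matrix.toLin' (Matrix.diagonal (F0barSigns n)) ''
      insert (-F0barSigns n) (insert 0 (Set.range fun i => Pi.single i 1)) := by
  rw [F0barVertices, Set.singleton_union, Set.union_singleton, Set.image_insert_eq,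
    Set.image_insert_eq, map_zero, ← Set.range_comp]
  congr 2
  · ext i
    simp only [Matrix.toLin'_apply, Matrix.mulVec_diagonal, F0barSigns, Pi.neg_apply]
    split_ifs <;> norm_num
  · ext v
    simp only [Set.mem_ofPred_eq, Set.mem_range, Function.comp_apply, Matrix.toLin'_apply,
      Matrix.mulVec_single_one, Matrix.col_diagonal]
    refine exists_congr fun i => ?_
    by_cases h : (i : ℕ) < (n - 1) / 2
    · simp [h, F0barSigns, eq_comm]
    · simp [h, F0barSigns, eq_comm, Pi.single_neg, not_lt.1 h]

theorem sum_neg_F0barSigns_le_one (n : ℕ) : ∑ i, (-F0barSigns n) i ≤ 1 := by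
  have h (i : Fin (n - 1)) :
      (-F0barSigns n) i = 1 - 2 * if (i : ℕ) < (n - 1) / 2 then 1 else 0 := by
    simp only [Pi.neg_apply, F0barSigns]
    split_ifs <;> norm_num
  have hk : ((n - 1 : ℕ) : ℝ) ≤ 2 * ((n - 1) / 2 : ℕ) + 1 := by
    exact_mod_cast (by omega : n - 1 ≤ 2 * ((n - 1) / 2) + 1)
  simp only [h, sum_sub_distrib, ← mul_sum, sum_boole, Fin.card_filter_val_lt, sum_const,
    card_univ, Fintype.card_fin, nsmul_one, min_eq_right (Nat.div_le_self _ _)]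
  linarith

theorem sum_abs_of_neg_F0barSigns (n : ℕ) :
    ∑ j ∈ univ.filter ((-F0barSigns n) · < 0), ENNReal.ofReal |(-F0barSigns n) j| =
      ((n - 1) / 2 : ℕ) := by
  have hneg (j : Fin (n - 1)) : (-F0barSigns n) j < 0 ↔ (j : ℕ) < (n - 1) / 2 := by
    simp only [Pi.neg_apply, F0barSigns]
    split_ifs with h <;> simp [h]
  simp only [hneg]
  simp only [Pi.neg_apply, abs_neg, abs_F0barSigns, ENNReal.ofReal_one, sum_const,
    nsmul_one, Fin.card_filter_val_lt, min_eq_right (Nat.div_le_self _ _)]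

theorem volume_convexHull_F0barVertices (n : ℕ) :
    volume (convexHull ℝ (F0barVertices n)) =
      (1 + ((n - 1) / 2 : ℕ)) * ((n - 1).factorial : ENNReal)⁻¹ := by
  have hdet : |LinearMap.det (Matrix.toLin' (Matrix.diagonal (F0barSigns n)))| = 1 := by
    rw [LinearMap.det_toLin', Matrix.det_diagonal, abs_prod]
    exact prod_eq_one fun i _ => abs_F0barSigns n i
  rw [F0barVertices_eq_image, ← LinearMap.image_convexHull, Measure.addHaar_image_linearMap, hdet,
    ENNReal.ofReal_one, one_mul, volume_convexHull_insert_zero_range_single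
      (sum_neg_F0barSigns_le_one n), sum_abs_of_neg_F0barSigns, volume_cornerSimplex_one]

end F0bar

theorem nvol_F0bar_general (n : ℕ) (hn : 3 ≤ n) :
    ((n - 1).factorial : ENNReal) * volume (convexHull ℝ (F0barVertices n)) =
      ((n + 1) / 2 : ℕ) := by
  rw [volume_convexHull_F0barVertices, mul_comm, mul_assoc,
    ENNReal.inv_mul_cancel (by positivity) (ENNReal.natCast_ne_top _), mul_one]
  norm_cast
  omega

/-- For odd `n ≥ 3`, the polytope `F̄_0 ⊂ ℝ^{n-1}` has normalized volume `(n+1)/2`. -/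
theorem nvol_F0bar (n : ℕ) (hn : 3 ≤ n) (hodd : Odd n) :
    ((n - 1).factorial : ENNReal) * volume (convexHull ℝ (F0barVertices n)) =
      ((n + 1) / 2 : ℕ) :=
  nvol_F0bar_general n hn
end

section
/- Let P ⊂ ℝ^n and Q ⊂ ℝ^m be full-dimensional convex lattice polytopes each containing the origin in its interior, and suppose P is reflexive. Then the free sum satisfies NVol_{n+m}(P ⊕ Q) = NVol_n(P) · NVol_m(Q). -/
/-! A convex body `K` with `0` in its interior is the unit sublevel set of its gauge, and
`{gauge K ≤ t} = t • K`; integrating `exp (-t)` against these sublevel sets (Tonelli) gives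
`∫ exp (-gauge K) = (dim)! · vol K`. The free sum of `P` and `Q` is the unit sublevel set of
`(x, y) ↦ gauge P x + gauge Q y`, whose exponential factors, so by Fubini
`(n + m)! · vol (P ⊕ Q) = n! · vol P · m! · vol Q`. -/

open MeasureTheory

/-- A lattice polytope in `ℝ^d`: the convex hull of finitely many points of `ℤ^d`. -/
def IsLatticePolytope {d : ℕ} (P : Set (Fin d → ℝ)) : Prop :=
  ∃ V : Finset (Fin d → ℝ),
    (∀ v ∈ V, ∀ i, ∃ z : ℤ, v i = (z : ℝ)) ∧ P = convexHull ℝ (V : Set (Fin d → ℝ))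

open Set Pointwise Filter Topology Module

theorem convex_setOf_le_one_of_subadditive {V : Type*} [AddCommGroup V] [Module ℝ V] {g : V → ℝ}
    (hadd : ∀ x y, g (x + y) ≤ g x + g y) (hsmul : ∀ r : ℝ, 0 ≤ r → ∀ x, g (r • x) = r * g x) :
    Convex ℝ {x | g x ≤ 1} := by
  intro x hx y hy a b ha hb hab
  calc g (a • x + b • y) ≤ a * g x + b * g y := by
        rw [← hsmul a ha, ← hsmul b hb]; exact hadd _ _
    _ ≤ a * 1 + b * 1 := by gcongr <;> assumption
    _ = 1 := by rw [mul_one, mul_one, hab]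

section Gauge

variable {E : Type*} [NormedAddCommGroup E] [NormedSpace ℝ E] {K : Set E}

theorem setOf_gauge_le_one_eq_self (hKv : Convex ℝ K) (hKc : IsClosed K) (hK0 : K ∈ 𝓝 0) :
    {x | gauge K x ≤ 1} = K := by
  ext x
  rw [mem_ofPred_eq, gauge_le_one_iff_mem_closure hKv hK0, hKc.closure_eq]

theorem mem_gauge_smul_self (hKv : Convex ℝ K) (hKc : IsCompact K) (hK0 : K ∈ 𝓝 0) (x : E) :
    x ∈ gauge K x • K := by
  rcases (gauge_nonneg x).eq_or_lt with h | h
  · have hx : x = 0 := (gauge_eq_zero (absorbent_nhds_zero hK0)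
      (NormedSpace.isVonNBounded_of_isBounded ℝ hKc.isBounded)).1 h.symm
    rw [← h, hx, zero_smul_set ⟨0, mem_of_mem_nhds hK0⟩]
    exact Set.zero_mem_zero
  · rw [mem_smul_set_iff_inv_smul_mem₀ h.ne']
    refine (setOf_gauge_le_one_eq_self hKv hKc.isClosed hK0).subset ?_
    rw [mem_ofPred_eq, gauge_smul_of_nonneg (inv_nonneg.2 h.le), smul_eq_mul, inv_mul_cancel₀ h.ne']

end Gauge

theorem convexHull_freeSum_eq {E F : Type*} [NormedAddCommGroup E] [NormedSpace ℝ E]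
    [NormedAddCommGroup F] [NormedSpace ℝ F] {P : Set E} {Q : Set F}
    (hPv : Convex ℝ P) (hPc : IsCompact P) (hP0 : P ∈ 𝓝 0)
    (hQv : Convex ℝ Q) (hQc : IsCompact Q) (hQ0 : Q ∈ 𝓝 0) :
    convexHull ℝ ((fun p => (p, (0 : F))) '' P ∪ (fun q => ((0 : E), q)) '' Q) =
      {z | gauge P z.1 + gauge Q z.2 ≤ 1} := by
  apply (convexHull_min _ _).antisymm
  · rintro ⟨x, y⟩ (hxy : gauge P x + gauge Q y ≤ 1)
    set H := convexHull ℝ ((fun p => (p, (0 : F))) '' P ∪ (fun q => ((0 : E), q)) '' Q)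
    have hH0 : (0 : E × F) ∈ H := subset_convexHull ℝ _ (Or.inl ⟨0, mem_of_mem_nhds hP0, rfl⟩)
    have hx : (x, (0 : F)) ∈ gauge P x • H := by
      obtain ⟨p, hp, hpx⟩ := mem_gauge_smul_self hPv hPc hP0 x
      refine ⟨(p, 0), subset_convexHull ℝ _ (Or.inl ⟨p, hp, rfl⟩), ?_⟩
      simpa only [Prod.smul_mk, smul_zero, Prod.mk.injEq, and_true] using hpx
    have hy : ((0 : E), y) ∈ gauge Q y • H := by
      obtain ⟨q, hq, hqy⟩ := mem_gauge_smul_self hQv hQc hQ0 y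
      refine ⟨(0, q), subset_convexHull ℝ _ (Or.inr ⟨q, hq, rfl⟩), ?_⟩
      simpa only [Prod.smul_mk, smul_zero, Prod.mk.injEq, true_and] using hqy
    have hsum := add_mem_add hx hy
    rw [← (convex_convexHull ℝ _).add_smul (gauge_nonneg x) (gauge_nonneg y)] at hsum
    obtain ⟨w, hw, hwxy⟩ := hsum
    have hxy' : (x, y) = (x, (0 : F)) + ((0 : E), y) := by simp
    rw [hxy', ← hwxy]
    exact (convex_convexHull ℝ _).smul_mem_of_zero_mem hH0 hw
      ⟨add_nonneg (gauge_nonneg x) (gauge_nonneg y), hxy⟩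
  · rintro z (⟨p, hp, rfl⟩ | ⟨q, hq, rfl⟩)
    · simpa using gauge_le_one_of_mem hp
    · simpa using gauge_le_one_of_mem hq
  · refine convex_setOf_le_one_of_subadditive (fun z w => ?_) (fun r hr z => ?_)
    · have := gauge_add_le hPv (absorbent_nhds_zero hP0) z.1 w.1
      have := gauge_add_le hQv (absorbent_nhds_zero hQ0) z.2 w.2
      simp only [Prod.fst_add, Prod.snd_add]
      linarith
    · simp only [Prod.smul_fst, Prod.smul_snd, gauge_smul_of_nonneg hr, smul_eq_mul, mul_add]

theorem lintegral_Ioi_pow_mul_exp_neg (n : ℕ) :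
    ∫⁻ t in Ioi (0 : ℝ), ENNReal.ofReal (t ^ n * Real.exp (-t)) = n.factorial := by
  have hGamma_integrand : ∀ t : ℝ, Real.exp (-t) * t ^ ((n + 1 : ℝ) - 1) = t ^ n * Real.exp (-t) :=
    fun t => by rw [add_sub_cancel_right, Real.rpow_natCast, mul_comm]
  have hint : IntegrableOn (fun t : ℝ => t ^ n * Real.exp (-t)) (Ioi 0) :=
    (Real.GammaIntegral_convergent (by positivity)).congr_fun
      (fun t _ => hGamma_integrand t) measurableSet_Ioi
  rw [← ofReal_integral_eq_lintegral_ofReal hint, ← ENNReal.ofReal_natCast,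
    ← Real.Gamma_nat_eq_factorial, Real.Gamma_eq_integral (by positivity)]
  · simp only [hGamma_integrand]
  · exact ae_restrict_of_forall_mem measurableSet_Ioi fun t (ht : 0 < t) => by positivity

theorem lintegral_Ioi_indicator_Ici_exp_neg {a : ℝ} (ha : 0 ≤ a) :
    ∫⁻ t in Ioi 0, (Ici a).indicator (fun t => ENNReal.ofReal (Real.exp (-t))) t =
      ENNReal.ofReal (Real.exp (-a)) := by
  have hae : (Ici a ∩ Ioi 0 : Set ℝ) =ᵐ[volume] Ioi a := by
    rcases ha.eq_or_lt with rfl | ha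
    · rw [inter_eq_right.2 Ioi_subset_Ici_self]
      exact EventuallyEq.rfl
    · rw [inter_eq_left.2 (Ici_subset_Ioi.2 ha)]
      exact Ioi_ae_eq_Ici.symm
  rw [lintegral_indicator measurableSet_Ici, Measure.restrict_restrict measurableSet_Ici,
    setLIntegral_congr hae, ← ofReal_integral_eq_lintegral_ofReal (integrableOn_exp_neg_Ioi a),
    integral_exp_neg_Ioi]
  exact ae_of_all _ fun t => (Real.exp_pos _).le

section Homogeneous

variable {E : Type*} [NormedAddCommGroup E] [NormedSpace ℝ E] {g : E → ℝ}

theorem setOf_le_eq_smul_setOf_le_one (hsmul : ∀ r : ℝ, 0 ≤ r → ∀ x, g (r • x) = r * g x)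
    {t : ℝ} (ht : 0 < t) : {x | g x ≤ t} = t • {x | g x ≤ 1} := by
  ext x
  rw [mem_smul_set_iff_inv_smul_mem₀ ht.ne', mem_ofPred_eq, mem_ofPred_eq,
    hsmul _ (inv_nonneg.2 ht.le), inv_mul_le_iff₀ ht, mul_one]

variable [FiniteDimensional ℝ E] [MeasurableSpace E] [BorelSpace E] (μ : Measure E)
  [μ.IsAddHaarMeasure]

theorem measure_setOf_le_eq_pow_mul (hsmul : ∀ r : ℝ, 0 ≤ r → ∀ x, g (r • x) = r * g x)
    {t : ℝ} (ht : 0 < t) :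
    μ {x | g x ≤ t} = ENNReal.ofReal (t ^ finrank ℝ E) * μ {x | g x ≤ 1} := by
  rw [setOf_le_eq_smul_setOf_le_one hsmul ht, Measure.addHaar_smul_of_nonneg μ ht.le]

theorem lintegral_exp_neg_eq_factorial_mul_measure (hg : Measurable g) (hg0 : ∀ x, 0 ≤ g x)
    (hsmul : ∀ r : ℝ, 0 ≤ r → ∀ x, g (r • x) = r * g x) :
    ∫⁻ x, ENNReal.ofReal (Real.exp (-g x)) ∂μ = (finrank ℝ E).factorial * μ {x | g x ≤ 1} := by
  set F : E × ℝ → ENNReal := {p | g p.1 ≤ p.2}.indicator fun p => ENNReal.ofReal (Real.exp (-p.2))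
  have hF : Measurable F :=
    (Measurable.ennreal_ofReal (Real.measurable_exp.comp measurable_snd.neg)).indicator
      (measurableSet_le (hg.comp measurable_fst) measurable_snd)
  have hF_slice (t : ℝ) : (fun x => F (x, t)) =
      {x | g x ≤ t}.indicator fun _ => ENNReal.ofReal (Real.exp (-t)) := rfl
  calc ∫⁻ x, ENNReal.ofReal (Real.exp (-g x)) ∂μ
      = ∫⁻ x, (∫⁻ t in Ioi 0, F (x, t)) ∂μ := by
        refine lintegral_congr fun x => ?_
        rw [← lintegral_Ioi_indicator_Ici_exp_neg (hg0 x)]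
        rfl
    _ = ∫⁻ t in Ioi 0, ∫⁻ x, F (x, t) ∂μ :=
        lintegral_lintegral_swap (f := fun x t => F (x, t)) hF.aemeasurable
    _ = ∫⁻ t in Ioi 0, ENNReal.ofReal (t ^ finrank ℝ E * Real.exp (-t)) * μ {x | g x ≤ 1} := by
        refine setLIntegral_congr_fun measurableSet_Ioi fun t ht => ?_
        rw [hF_slice, lintegral_indicator_const (measurableSet_le hg measurable_const),
          measure_setOf_le_eq_pow_mul μ hsmul ht, ENNReal.ofReal_mul (pow_nonneg ht.le _)]
        ring
    _ = (finrank ℝ E).factorial * μ {x | g x ≤ 1} := by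
        rw [lintegral_mul_const _ (by fun_prop), lintegral_Ioi_pow_mul_exp_neg]

end Homogeneous

theorem factorial_mul_measure_convexHull_freeSum {E F : Type*} [NormedAddCommGroup E]
    [NormedSpace ℝ E] [FiniteDimensional ℝ E] [MeasurableSpace E] [BorelSpace E]
    [NormedAddCommGroup F] [NormedSpace ℝ F] [FiniteDimensional ℝ F] [MeasurableSpace F]
    [BorelSpace F] (μ : Measure E) [μ.IsAddHaarMeasure] (ν : Measure F) [ν.IsAddHaarMeasure]
    {P : Set E} {Q : Set F} (hPv : Convex ℝ P) (hPc : IsCompact P) (hP0 : P ∈ 𝓝 0)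
    (hQv : Convex ℝ Q) (hQc : IsCompact Q) (hQ0 : Q ∈ 𝓝 0) :
    ((finrank ℝ E + finrank ℝ F).factorial : ENNReal) *
        μ.prod ν (convexHull ℝ ((fun p => (p, (0 : F))) '' P ∪ (fun q => ((0 : E), q)) '' Q)) =
      (finrank ℝ E).factorial * μ P * ((finrank ℝ F).factorial * ν Q) := by
  have hsmulP : ∀ r : ℝ, 0 ≤ r → ∀ x, gauge P (r • x) = r * gauge P x :=
    fun r hr x => gauge_smul_of_nonneg hr x
  have hsmulQ : ∀ r : ℝ, 0 ≤ r → ∀ y, gauge Q (r • y) = r * gauge Q y :=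
    fun r hr y => gauge_smul_of_nonneg hr y
  have hgP := continuous_gauge hPv hP0
  have hgQ := continuous_gauge hQv hQ0
  have hP := lintegral_exp_neg_eq_factorial_mul_measure μ hgP.measurable gauge_nonneg hsmulP
  have hQ := lintegral_exp_neg_eq_factorial_mul_measure ν hgQ.measurable gauge_nonneg hsmulQ
  have hPQ := lintegral_exp_neg_eq_factorial_mul_measure (μ.prod ν)
    (g := fun z => gauge P z.1 + gauge Q z.2) (by fun_prop)
    (fun z => add_nonneg (gauge_nonneg _) (gauge_nonneg _))
    (fun r hr z => by simp only [Prod.smul_fst, Prod.smul_snd, hsmulP r hr, hsmulQ r hr, mul_add])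
  rw [setOf_gauge_le_one_eq_self hPv hPc.isClosed hP0] at hP
  rw [setOf_gauge_le_one_eq_self hQv hQc.isClosed hQ0] at hQ
  rw [convexHull_freeSum_eq hPv hPc hP0 hQv hQc hQ0, ← finrank_prod, ← hPQ, ← hP, ← hQ,
    ← lintegral_prod_mul (by fun_prop) (by fun_prop)]
  simp only [neg_add, Real.exp_add, ENNReal.ofReal_mul (Real.exp_pos _).le]

theorem IsLatticePolytope.convex {d : ℕ} {P : Set (Fin d → ℝ)} (hP : IsLatticePolytope P) :
    Convex ℝ P := by
  obtain ⟨V, -, rfl⟩ := hP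
  exact convex_convexHull ℝ _

theorem IsLatticePolytope.isCompact {d : ℕ} {P : Set (Fin d → ℝ)} (hP : IsLatticePolytope P) :
    IsCompact P := by
  obtain ⟨V, -, rfl⟩ := hP
  exact V.finite_toSet.isCompact_convexHull (𝕜 := ℝ)

theorem nvol_freeSum_general (d m : ℕ) (P : Set (Fin d → ℝ)) (Q : Set (Fin m → ℝ))
    (hP : IsLatticePolytope P) (hQ : IsLatticePolytope Q)
    (hP0 : (0 : Fin d → ℝ) ∈ interior P) (hQ0 : (0 : Fin m → ℝ) ∈ interior Q) :
    ((d + m).factorial : ENNReal) *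
        volume (convexHull ℝ
          ((fun p => (p, (0 : Fin m → ℝ))) '' P ∪ (fun q => ((0 : Fin d → ℝ), q)) '' Q)) =
      ((d.factorial : ENNReal) * volume P) * ((m.factorial : ENNReal) * volume Q) := by
  have h := factorial_mul_measure_convexHull_freeSum volume volume hP.convex hP.isCompact
    (mem_interior_iff_mem_nhds.1 hP0) hQ.convex hQ.isCompact (mem_interior_iff_mem_nhds.1 hQ0)
  rwa [finrank_fin_fun, finrank_fin_fun, ← Measure.volume_eq_prod] at h

/-- Let `P ⊂ ℝ^d` and `Q ⊂ ℝ^m` be full-dimensional convex lattice polytopes each containing the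
origin in its interior, and suppose `P` is reflexive (its dual
`P* = {x : ⟨x,p⟩ ≥ -1 for all p ∈ P}` is also a lattice polytope).  Then the free sum
`P ⊕ Q = conv((P × {0}) ∪ ({0} × Q))` satisfies `NVol(P ⊕ Q) = NVol(P) · NVol(Q)`. -/
theorem nvol_freeSum (d m : ℕ) (P : Set (Fin d → ℝ)) (Q : Set (Fin m → ℝ))
    (hP : IsLatticePolytope P) (hQ : IsLatticePolytope Q)
    (hP0 : (0 : Fin d → ℝ) ∈ interior P) (hQ0 : (0 : Fin m → ℝ) ∈ interior Q)
    (hPrefl : IsLatticePolytope {x : Fin d → ℝ | ∀ p ∈ P, -1 ≤ ∑ i, x i * p i}) :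
    ((d + m).factorial : ENNReal) *
        volume (convexHull ℝ
          ((fun p => (p, (0 : Fin m → ℝ))) '' P ∪ (fun q => ((0 : Fin d → ℝ), q)) '' Q)) =
      ((d.factorial : ENNReal) * volume P) * ((m.factorial : ENNReal) * volume Q) :=
  nvol_freeSum_general d m P Q hP hQ hP0 hQ0
end

section
/- Let T be a tree on the vertex set {0,1,…,n} rooted at vertex 0 with parent function π, let a'_{ij} ∈ ℂ be nonzero for every ordered pair (i,j) with {i,j} an edge of T, and let ω_1,…,ω_n ∈ ℂ. Then there exist constants ω*_1,…,ω*_n ∈ ℂ such that for every x = (x_1,…,x_n) ∈ (ℂ*)^n (with the convention x_0 = 1): [ω_i − Σ_{j ∈ N_T(i)} a'_{ij}(x_i/x_j − x_j/x_i) = 0 for all i = 1,…,n] holds if and only if [ω*_i − a'_{i,π(i)}(x_i/x_{π(i)} − x_{π(i)}/x_i) = 0 for all i = 1,…,n] holds. -/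
open SimpleGraph

private noncomputable def kap {n : ℕ} (T : SimpleGraph (Fin (n + 1))) [DecidableRel T.Adj]
    (π : Fin (n + 1) → Fin (n + 1)) (a : Fin (n + 1) → Fin (n + 1) → ℂ)
    (ω : Fin (n + 1) → ℂ) : ℕ → Fin (n + 1) → ℂ
  | 0, _ => 0
  | m + 1, i => ω i +
      ∑ j ∈ (T.neighborFinset i).filter (· ≠ π i), (a i j / a j i) * kap T π a ω m j

private lemma kap_succ {n : ℕ} (T : SimpleGraph (Fin (n + 1))) [DecidableRel T.Adj]
    (π : Fin (n + 1) → Fin (n + 1)) (a : Fin (n + 1) → Fin (n + 1) → ℂ)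
    (ω : Fin (n + 1) → ℂ) (m : ℕ) (i : Fin (n + 1)) :
    kap T π a ω (m + 1) i = ω i +
      ∑ j ∈ (T.neighborFinset i).filter (· ≠ π i), (a i j / a j i) * kap T π a ω m j := rfl

/-- Let `T` be a tree on `{0,1,…,n}` rooted at `0` with parent function `π`, let `a i j` be
nonzero complex weights on the (ordered) edges of `T`, and let `ω_1,…,ω_n ∈ ℂ`.  Then there are
constants `ω*_1,…,ω*_n ∈ ℂ` such that for every `x ∈ (ℂ*)^n` (with the convention `x 0 = 1`),
the Kuramoto system `ω_i - ∑_{j ∈ N_T(i)} a_{ij}(x_i/x_j - x_j/x_i) = 0` for `i = 1,…,n` holds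
iff the reduced system `ω*_i - a_{i,π(i)}(x_i/x_{π(i)} - x_{π(i)}/x_i) = 0` for `i = 1,…,n`
holds. -/
theorem tree_system_reduction (n : ℕ) (T : SimpleGraph (Fin (n + 1))) [DecidableRel T.Adj]
    (hT : T.IsTree) (π : Fin (n + 1) → Fin (n + 1))
    (hπ : ∀ i : Fin (n + 1), i ≠ 0 → T.Adj i (π i) ∧ T.dist (π i) 0 + 1 = T.dist i 0)
    (a : Fin (n + 1) → Fin (n + 1) → ℂ) (ha : ∀ i j, T.Adj i j → a i j ≠ 0)
    (ω : Fin (n + 1) → ℂ) :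
    ∃ ω' : Fin (n + 1) → ℂ,
      ∀ x : Fin (n + 1) → ℂ, x 0 = 1 → (∀ i, x i ≠ 0) →
        ((∀ i : Fin (n + 1), i ≠ 0 →
            ω i - ∑ j ∈ T.neighborFinset i, a i j * (x i / x j - x j / x i) = 0) ↔
          (∀ i : Fin (n + 1), i ≠ 0 →
            ω' i - a i (π i) * (x i / x (π i) - x (π i) / x i) = 0)) := by
  classical
  set d : Fin (n + 1) → ℕ := fun i => T.dist i 0 with hd
  have hdle : ∀ i, d i ≤ n := by
    intro i
    obtain ⟨p, hp, hlen⟩ := hT.isConnected.exists_path_of_dist i 0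
    have h2 := hp.length_lt
    rw [Fintype.card_fin] at h2
    simp only [hd]
    omega
  have hd0 : ∀ i : Fin (n + 1), i ≠ 0 → d i ≠ 0 := by
    intro i hi h0
    exact hi (hT.isConnected.dist_eq_zero_iff.mp h0)
  -- uniqueness of the lower neighbor
  have hU : ∀ v u w : Fin (n + 1), T.Adj v u → T.Adj v w →
      d u + 1 = d v → d w + 1 = d v → u = w := by
    intro v u w hvu hvw hu hw
    by_contra hne
    obtain ⟨pu, hpu, hlu⟩ := hT.isConnected.exists_path_of_dist u 0
    obtain ⟨pw, hpw, hlw⟩ := hT.isConnected.exists_path_of_dist w 0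
    have hvnu : v ∉ pu.support := by
      intro hmem
      have h1 : T.dist v 0 ≤ (pu.dropUntil v hmem).length := SimpleGraph.dist_le _
      have h2 := congrArg Walk.length (pu.take_spec hmem)
      rw [Walk.length_append] at h2
      have h3 : (pu.takeUntil v hmem).length ≠ 0 := fun h0 =>
        hvu.ne' (Walk.eq_of_length_eq_zero h0)
      simp only [hd] at *
      omega
    have hvnw : v ∉ pw.support := by
      intro hmem
      have h1 : T.dist v 0 ≤ (pw.dropUntil v hmem).length := SimpleGraph.dist_le _
      have h2 := congrArg Walk.length (pw.take_spec hmem)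
      rw [Walk.length_append] at h2
      have h3 : (pw.takeUntil v hmem).length ≠ 0 := fun h0 =>
        hvw.ne' (Walk.eq_of_length_eq_zero h0)
      simp only [hd] at *
      omega
    have huniq := hT.IsAcyclic.path_unique
      ⟨Walk.cons hvu pu, hpu.cons hvnu⟩ ⟨Walk.cons hvw pw, hpw.cons hvnw⟩
    have hEq : Walk.cons hvu pu = Walk.cons hvw pw := congrArg Subtype.val huniq
    have hmem1 : u ∈ (Walk.cons hvw pw).support := by
      rw [← hEq]; simp [Walk.support_cons]
    rw [Walk.support_cons] at hmem1
    have hmem2 : u ∈ pw.support := by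
      rcases List.mem_cons.mp hmem1 with h | h
      · exact absurd h hvu.ne'
      · exact h
    have h1 : T.dist u 0 ≤ (pw.dropUntil u hmem2).length := SimpleGraph.dist_le _
    have h2 := congrArg Walk.length (pw.take_spec hmem2)
    rw [Walk.length_append] at h2
    have h3 : (pw.takeUntil u hmem2).length ≠ 0 := fun h0 =>
      hne (Walk.eq_of_length_eq_zero h0).symm
    simp only [hd] at *
    omega
  -- adjacent vertices have different distance to the root
  have hA : ∀ u v : Fin (n + 1), T.Adj u v → d u ≠ d v := by
    intro u v huv hEq
    obtain ⟨p, hp, hl⟩ := hT.isConnected.exists_path_of_dist u 0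
    by_cases hmem : v ∈ p.support
    · have h1 : T.dist v 0 ≤ (p.dropUntil v hmem).length := SimpleGraph.dist_le _
      have h2 := congrArg Walk.length (p.take_spec hmem)
      rw [Walk.length_append] at h2
      have h3 : (p.takeUntil v hmem).length ≠ 0 := fun h0 =>
        huv.ne (Walk.eq_of_length_eq_zero h0)
      simp only [hd] at *
      omega
    · obtain ⟨q, hq, hlq⟩ := hT.isConnected.exists_path_of_dist v 0
      have huniq := hT.IsAcyclic.path_unique
        ⟨Walk.cons huv.symm p, hp.cons hmem⟩ ⟨q, hq⟩
      have hEq2 : Walk.cons huv.symm p = q := congrArg Subtype.val huniq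
      have := congrArg Walk.length hEq2
      rw [Walk.length_cons] at this
      simp only [hd] at *
      omega
  -- adjacency gives distance within 1
  have htri : ∀ u v : Fin (n + 1), T.Adj u v → d u ≤ d v + 1 := by
    intro u v huv
    obtain ⟨q, hq, hlq⟩ := hT.isConnected.exists_path_of_dist v 0
    have h1 : T.dist u 0 ≤ (Walk.cons huv q).length := SimpleGraph.dist_le _
    rw [Walk.length_cons] at h1
    simp only [hd] at *
    omega
  -- neighbors other than the parent are children
  have hchild : ∀ i j : Fin (n + 1), i ≠ 0 → T.Adj i j → j ≠ π i →
      j ≠ 0 ∧ π j = i ∧ d j = d i + 1 := by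
    intro i j hi hadj hne
    obtain ⟨hp1, hp2⟩ := hπ i hi
    have hji : d j ≤ d i + 1 := htri j i hadj.symm
    have hij : d i ≤ d j + 1 := htri i j hadj
    have hAij := hA i j hadj
    have hcases : d j = d i + 1 ∨ d j + 1 = d i := by omega
    rcases hcases with h | h
    · have hj0 : j ≠ 0 := by
        intro h0
        have : d j = 0 := by subst h0; simp [hd]
        omega
      obtain ⟨hq1, hq2⟩ := hπ j hj0
      have : π j = i := hU j (π j) i hq1 hadj.symm (by simp only [hd] at *; omega)
        (by simp only [hd] at *; omega)
      exact ⟨hj0, this, h⟩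
    · exact absurd (hU i j (π i) hadj hp1 (by simp only [hd] at *; omega)
        (by simp only [hd] at *; omega)) hne
  set κ : Fin (n + 1) → ℂ := fun i => kap T π a ω (n + 1 - d i) i with hκdef
  have hκ : ∀ i : Fin (n + 1), i ≠ 0 →
      κ i = ω i + ∑ j ∈ (T.neighborFinset i).filter (· ≠ π i), (a i j / a j i) * κ j := by
    intro i hi
    have h1 : n + 1 - d i = (n - d i) + 1 := by have := hdle i; have := hd0 i hi; omega
    rw [hκdef]
    simp only
    rw [h1, kap_succ]
    congr 1
    apply Finset.sum_congr rfl
    intro j hj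
    rw [Finset.mem_filter, mem_neighborFinset] at hj
    obtain ⟨hadj, hne⟩ := hj
    obtain ⟨hj0, hpj, hdj⟩ := hchild i j hi hadj hne
    have h2 : n + 1 - d j = n - d i := by omega
    rw [h2]
  refine ⟨κ, ?_⟩
  intro x hx0 hx
  set y : Fin (n + 1) → ℂ := fun i => a i (π i) * (x i / x (π i) - x (π i) / x i) with hy
  have hterm : ∀ i j : Fin (n + 1), i ≠ 0 → T.Adj i j → j ≠ π i →
      a i j * (x i / x j - x j / x i) = -((a i j / a j i) * y j) := by
    intro i j hi hadj hne
    obtain ⟨hj0, hpj, _⟩ := hchild i j hi hadj hne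
    have hji : a j i ≠ 0 := ha j i hadj.symm
    rw [hy]
    simp only [hpj]
    have hxi := hx i
    have hxj := hx j
    field_simp
    ring
  have hfull : ∀ i : Fin (n + 1), i ≠ 0 →
      ((ω i - ∑ j ∈ T.neighborFinset i, a i j * (x i / x j - x j / x i) = 0) ↔
        y i = ω i + ∑ j ∈ (T.neighborFinset i).filter (· ≠ π i), (a i j / a j i) * y j) := by
    intro i hi
    have hmem : π i ∈ T.neighborFinset i := by
      rw [mem_neighborFinset]; exact (hπ i hi).1
    have hsplit : T.neighborFinset i =
        insert (π i) ((T.neighborFinset i).filter (· ≠ π i)) := by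
      ext j
      simp only [Finset.mem_insert, Finset.mem_filter]
      constructor
      · intro hj; by_cases h : j = π i
        · exact Or.inl h
        · exact Or.inr ⟨hj, h⟩
      · rintro (rfl | ⟨hj, _⟩)
        · exact hmem
        · exact hj
    have hins : ∑ j ∈ T.neighborFinset i, a i j * (x i / x j - x j / x i)
        = y i + -∑ j ∈ (T.neighborFinset i).filter (· ≠ π i), (a i j / a j i) * y j := by
      conv_lhs => rw [hsplit]
      rw [Finset.sum_insert (by simp), ← Finset.sum_neg_distrib]
      congr 1
      apply Finset.sum_congr rfl
      intro j hj
      rw [Finset.mem_filter, mem_neighborFinset] at hj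
      exact hterm i j hi hj.1 hj.2
    rw [hins]
    constructor
    · intro h; linear_combination -h
    · intro h; linear_combination -h
  constructor
  · intro hsys i hi
    have key : ∀ k : ℕ, ∀ i : Fin (n + 1), i ≠ 0 → n + 1 - d i ≤ k → y i = κ i := by
      intro k
      induction k with
      | zero => intro i hi hk; exact absurd hk (by have := hdle i; omega)
      | succ k ih =>
        intro i hi hk
        have h1 := (hfull i hi).1 (hsys i hi)
        rw [hκ i hi, h1]
        congr 1
        apply Finset.sum_congr rfl
        intro j hj
        rw [Finset.mem_filter, mem_neighborFinset] at hj
        obtain ⟨hj0, hpj, hdj⟩ := hchild i j hi hj.1 hj.2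
        rw [ih j hj0 (by have := hdle i; omega)]
    rw [sub_eq_zero]
    exact (key (n + 1 - d i) i hi le_rfl).symm
  · intro hred i hi
    have hyk : ∀ j : Fin (n + 1), j ≠ 0 → y j = κ j := by
      intro j hj
      have := hred j hj
      rw [sub_eq_zero] at this
      exact this.symm
    apply (hfull i hi).2
    rw [hyk i hi, hκ i hi]
    congr 1
    apply Finset.sum_congr rfl
    intro j hj
    rw [Finset.mem_filter, mem_neighborFinset] at hj
    obtain ⟨hj0, _, _⟩ := hchild i j hi hj.1 hj.2
    rw [hyk j hj0]
end

section
/- Let T be a tree on the vertex set {0,1,…,n}. Then there exist complex weights a'_{ij} ∈ ℂ with a'_{ij} = a'_{ji} for every edge {i,j} of T, and constants ω_1,…,ω_n ∈ ℂ, such that the system ω_i − Σ_{j ∈ N_T(i)} a'_{ij}(x_i/x_j − x_j/x_i) = 0, i = 1,…,n (with x_0 = 1), has exactly 2^n solutions x ∈ (ℂ*)^n. -/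
/-!
Take all weights equal to `1` and all `ω_i = 0`. The equations then say that the antisymmetric
edge function `f i j = x_i/x_j - x_j/x_i` has zero divergence at every vertex except `0`. Summing
the divergence over the side of an edge `uv` of the tree that does not contain `0`, all interior
contributions cancel and only the flux `f u v` through the edge remains, so `f` vanishes on every
edge. Hence `x_i² = x_j²` along edges, so by connectivity `x_i = ±1` for all `i`, and each of these
`2^n` sign vectors is a solution.
-/

open Finset

namespace SimpleGraph

theorem eq_and_eq_of_adj_of_reachable_of_not_reachable {V : Type*} {G : SimpleGraph V}
    {u v w j : V} (hw : (G.deleteEdges {s(u, v)}).Reachable w u)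
    (hj : ¬ (G.deleteEdges {s(u, v)}).Reachable j u) (hwj : G.Adj w j) : w = u ∧ j = v := by
  by_cases he : s(w, j) = s(u, v)
  · rcases Sym2.eq_iff.mp he with ⟨rfl, rfl⟩ | ⟨rfl, rfl⟩
    · exact ⟨rfl, rfl⟩
    · exact absurd (Reachable.refl _) hj
  · have hwj' : (G.deleteEdges {s(u, v)}).Adj j w := (deleteEdges_adj.mpr ⟨hwj, he⟩).symm
    exact absurd (hwj'.reachable.trans hw) hj

theorem Preconnected.apply_eq_of_forall_adj {V α : Type*} {G : SimpleGraph V}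
    (hG : G.Preconnected) {g : V → α} (hg : ∀ u v, G.Adj u v → g u = g v) (u v : V) :
    g u = g v := by
  obtain ⟨p⟩ := hG u v
  induction p with
  | nil => rfl
  | cons h _ ih => exact (hg _ _ h).trans ih

section Flow

variable {V M : Type*} [Fintype V] [DecidableEq V] [AddCommGroup M]
  (G : SimpleGraph V) [DecidableRel G.Adj]

theorem sum_sum_neighborFinset_filter_mem_eq_zero (C : Finset V) (f : V → V → M)
    (hf : ∀ i j, G.Adj i j → f i j = -f j i) :
    ∑ w ∈ C, ∑ j ∈ G.neighborFinset w with j ∈ C, f w j = 0 := by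
  have hfilter : ∀ w, {j ∈ G.neighborFinset w | j ∈ C} = {j ∈ C | G.Adj w j} := by
    intro w; ext j; simp [and_comm]
  simp_rw [hfilter, sum_filter]
  rw [← sum_product' (f := fun w j => if G.Adj w j then f w j else 0)]
  refine sum_involution (fun p _ => p.swap) (fun p _ => ?_) (fun p _ hp => ?_)
    (fun p hp => by simpa [and_comm] using hp) (fun _ _ => rfl)
  · by_cases h : G.Adj p.1 p.2
    · simp [h, h.symm, hf _ _ h]
    · simp [h, mt G.adj_symm h]
  · rintro hswap
    have hdiag : p.1 = p.2 := congrArg Prod.snd hswap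
    simp [hdiag] at hp

theorem sum_sum_neighborFinset_eq_sum_sum_filter_notMem (C : Finset V) (f : V → V → M)
    (hf : ∀ i j, G.Adj i j → f i j = -f j i) :
    ∑ w ∈ C, ∑ j ∈ G.neighborFinset w, f w j =
      ∑ w ∈ C, ∑ j ∈ G.neighborFinset w with j ∉ C, f w j := by
  simp_rw [← sum_filter_add_sum_filter_not (G.neighborFinset _) (· ∈ C), sum_add_distrib,
    G.sum_sum_neighborFinset_filter_mem_eq_zero C f hf, zero_add]

theorem apply_eq_zero_of_isBridge (r : V) (f : V → V → M)
    (hf : ∀ i j, G.Adj i j → f i j = -f j i)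
    (hdiv : ∀ i ≠ r, ∑ j ∈ G.neighborFinset i, f i j = 0) {u v : V} (huv : G.Adj u v)
    (hbridge : G.IsBridge s(u, v)) : f u v = 0 := by
  wlog hr : ¬ (G.deleteEdges {s(u, v)}).Reachable r u generalizing u v
  · have hbridge' : G.IsBridge s(v, u) := by
      rwa [isBridge_iff, Sym2.eq_swap, reachable_comm]
    have hrv : ¬ (G.deleteEdges {s(v, u)}).Reachable r v := by
      rw [Sym2.eq_swap]; exact fun h => hbridge ((not_not.mp hr).symm.trans h)
    rw [hf u v huv, this huv.symm hbridge' hrv, neg_zero]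
  set C : Finset V := {w | (G.deleteEdges {s(u, v)}).Reachable w u}
  have hvC : v ∉ C := by simpa [C, reachable_comm] using isBridge_iff.mp hbridge
  have hflux : ∑ w ∈ C, ∑ j ∈ G.neighborFinset w with j ∉ C, f w j = f u v := by
    rw [sum_eq_single_of_mem u (by simp [C]), sum_eq_single_of_mem v (by simp [huv, hvC])]
    · intro j hj hjv
      simp only [mem_filter, mem_neighborFinset, C, mem_univ, true_and] at hj
      exact absurd (eq_and_eq_of_adj_of_reachable_of_not_reachable (.refl u) hj.2 hj.1).2 hjv
    · intro w hw hwu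
      refine sum_eq_zero fun j hj => ?_
      simp only [mem_filter, mem_neighborFinset, C, mem_univ, true_and] at hw hj
      exact absurd (eq_and_eq_of_adj_of_reachable_of_not_reachable hw hj.2 hj.1).1 hwu
  rw [← hflux, ← G.sum_sum_neighborFinset_eq_sum_sum_filter_notMem C f hf]
  refine sum_eq_zero fun w hw => hdiv w ?_
  rintro rfl
  exact hr (by simpa [C] using hw)

variable {G} in
theorem IsAcyclic.apply_eq_zero_of_adj (hG : G.IsAcyclic) (r : V) (f : V → V → M)
    (hf : ∀ i j, G.Adj i j → f i j = -f j i)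
    (hdiv : ∀ i ≠ r, ∑ j ∈ G.neighborFinset i, f i j = 0) {u v : V} (huv : G.Adj u v) :
    f u v = 0 :=
  G.apply_eq_zero_of_isBridge r f hf hdiv huv (isAcyclic_iff_forall_adj_isBridge.mp hG huv)

end Flow

end SimpleGraph

theorem SimpleGraph.IsTree.setOf_sum_div_sub_div_eq_zero {V K : Type*} [Fintype V] [Field K]
    {G : SimpleGraph V} [DecidableRel G.Adj] (hG : G.IsTree) (r : V) :
    {x : V → K | x r = 1 ∧ (∀ i, x i ≠ 0) ∧
        ∀ i, i ≠ r → ∑ j ∈ G.neighborFinset i, (x i / x j - x j / x i) = 0} =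
      {x | x r = 1 ∧ ∀ i, x i ^ 2 = 1} := by
  classical
  ext x
  simp only [Set.mem_ofPred_eq, and_congr_right_iff]
  intro hxr
  constructor
  · rintro ⟨hx, hdiv⟩
    have hedge : ∀ u v, G.Adj u v → x u ^ 2 = x v ^ 2 := by
      intro u v huv
      have h := hG.isAcyclic.apply_eq_zero_of_adj r (fun i j => x i / x j - x j / x i)
        (fun i j _ => by ring) hdiv huv
      field_simp [hx u, hx v] at h
      linear_combination h
    intro i
    rw [hG.connected.preconnected.apply_eq_of_forall_adj hedge i r, hxr, one_pow]
  · intro hsq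
    have hx : ∀ i, x i ≠ 0 := fun i h => by simpa [h] using hsq i
    refine ⟨hx, fun i _ => sum_eq_zero fun j _ => ?_⟩
    field_simp [hx i, hx j]
    linear_combination hsq i - hsq j

theorem ncard_setOf_apply_zero_eq_one_and_sq_eq_one {K : Type*} [Field K] (hK : ringChar K ≠ 2)
    (n : ℕ) : {x : Fin (n + 1) → K | x 0 = 1 ∧ ∀ i, x i ^ 2 = 1}.ncard = 2 ^ n := by
  classical
  have hset : {x : Fin (n + 1) → K | x 0 = 1 ∧ ∀ i, x i ^ 2 = 1} =
      ↑(Fintype.piFinset (Fin.cons (n := n) (α := fun _ => Finset K) {1} fun _ => {1, -1})) := by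
    ext x
    simp +contextual [Fin.forall_fin_succ, sq_eq_one_iff]
  have hone : (1 : K) ≠ -1 := fun h => hK (neg_one_eq_one_iff.mp h.symm)
  rw [hset, Set.ncard_coe_finset, Fintype.card_piFinset, Fin.prod_univ_succ]
  simp [card_pair hone]

/-- Let `T` be a tree on `{0,1,…,n}`.  Then there exist symmetric complex weights `a_{ij}` on the
edges of `T` and constants `ω_1,…,ω_n ∈ ℂ` such that the algebraic Kuramoto system
`ω_i - ∑_{j ∈ N_T(i)} a_{ij}(x_i/x_j - x_j/x_i) = 0`, `i = 1,…,n` (with `x_0 = 1`), has exactly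
`2^n` solutions `x ∈ (ℂ*)^n`. -/
theorem tree_system_attains_bound (n : ℕ) (T : SimpleGraph (Fin (n + 1)))
    [DecidableRel T.Adj] (hT : T.IsTree) :
    ∃ a : Fin (n + 1) → Fin (n + 1) → ℂ, (∀ i j, T.Adj i j → a i j = a j i) ∧
      ∃ ω : Fin (n + 1) → ℂ,
        Set.ncard {x : Fin (n + 1) → ℂ |
            x 0 = 1 ∧ (∀ i, x i ≠ 0) ∧
            ∀ i : Fin (n + 1), i ≠ 0 →
              ω i - ∑ j ∈ T.neighborFinset i, a i j * (x i / x j - x j / x i) = 0} =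
          2 ^ n := by
  refine ⟨fun _ _ => 1, fun _ _ _ => rfl, fun _ => 0, ?_⟩
  simp only [one_mul, zero_sub, neg_eq_zero]
  rw [hT.setOf_sum_div_sub_div_eq_zero 0]
  exact ncard_setOf_apply_zero_eq_one_and_sq_eq_one (by simp [ringChar.eq_zero]) n
end

section
/- Let T be a tree on the vertex set {0,1,…,n}, let a'_{ij} ∈ ℂ be nonzero for every ordered pair (i,j) with {i,j} an edge of T, and let ω_1,…,ω_n ∈ ℂ. Then the set {x ∈ (ℂ*)^n : ω_i − Σ_{j ∈ N_T(i)} a'_{ij}(x_i/x_j − x_j/x_i) = 0 for all i = 1,…,n} (with x_0 = 1) has at most 2^n elements. -/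
/-!
Let `ℓ ≠ 0` be a leaf of `T` with neighbour `p`. Vertex `ℓ` occurs in a single equation,
`ω_ℓ = a_{ℓp} (s - s⁻¹)` with `s = x_ℓ / x_p`, so `s` is a root of a nonzero quadratic and takes
at most two values. For fixed `s` the remaining equations form a system of the same shape on the
tree `T - ℓ`, with `ω_p` shifted by `a_{pℓ} (s⁻¹ - s)`, and `x` is determined by `s` together with
its restriction to `T - ℓ`. Induction on the number of vertices gives the bound `2 ^ n`.
-/

open SimpleGraph Finset Polynomial

variable {V : Type*}

section Graph

variable [Fintype V] {T : SimpleGraph V} [DecidableRel T.Adj]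

lemma SimpleGraph.IsTree.induce_compl_singleton_of_degree_eq_one (hT : T.IsTree) {ℓ : V}
    (hℓ : T.degree ℓ = 1) : (T.induce {ℓ}ᶜ).IsTree :=
  ⟨hT.connected.induce_compl_singleton_of_degree_eq_one hℓ, hT.isAcyclic.induce _⟩

lemma SimpleGraph.IsTree.exists_ne_degree_eq_one [Nontrivial V] (hT : T.IsTree) (r : V) :
    ∃ ℓ, ℓ ≠ r ∧ T.degree ℓ = 1 := by
  obtain ⟨u, v, huv, hu, hv⟩ := hT.exists_ne_and_degree_eq_one
  by_cases hur : u = r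
  · exact ⟨v, hur ▸ huv.symm, hv⟩
  · exact ⟨u, hur, hu⟩

lemma SimpleGraph.sum_neighborFinset_eq_sum_induce_compl_singleton_add [DecidableEq V]
    {M : Type*} [AddCommMonoid M] (ℓ : V) (i : ({ℓ}ᶜ : Set V)) (f : V → M) :
    ∑ j ∈ T.neighborFinset i, f j =
      ∑ j ∈ (T.induce {ℓ}ᶜ).neighborFinset i, f j + if T.Adj i ℓ then f ℓ else 0 := by
  have herase : (T.neighborFinset i).erase ℓ =
      ((T.induce {ℓ}ᶜ).neighborFinset i).map (.subtype (· ∈ ({ℓ}ᶜ : Set V))) := by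
    rw [map_neighborFinset_induce, Set.toFinset_compl, Set.toFinset_singleton,
      ← sdiff_eq_inter_compl, sdiff_singleton_eq_erase]
  split_ifs with h
  · rw [← sum_erase_add _ _ (mem_neighborFinset _ _ _ |>.2 h), herase, sum_map]
    rfl
  · rw [← erase_eq_of_notMem (s := T.neighborFinset i) (by simpa using h), herase, sum_map,
      add_zero]
    rfl

end Graph

lemma Set.encard_setOf_fst_mem_snd_mem_le {β γ : Type*} (R : Finset β) (S : β → Set γ) {k : ℕ∞}
    (hS : ∀ b ∈ R, (S b).encard ≤ k) :
    {q : β × γ | q.1 ∈ R ∧ q.2 ∈ S q.1}.encard ≤ #R * k := by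
  have hunion : {q : β × γ | q.1 ∈ R ∧ q.2 ∈ S q.1} = ⋃ b ∈ R, {b} ×ˢ S b := by
    ext ⟨b, c⟩; simp
  calc _ ≤ ∑ b ∈ R, ({b} ×ˢ S b).encard := hunion ▸ R.set_encard_biUnion_le _
    _ ≤ ∑ _b ∈ R, k := sum_le_sum fun b hb => by
        rw [Set.singleton_prod, (Prod.mk_right_injective b).injOn.encard_image]; exact hS b hb
    _ = #R * k := by rw [sum_const, nsmul_eq_mul]

lemma Polynomial.card_roots_toFinset_quadratic_le {R : Type*} [CommRing R] [IsDomain R]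
    [DecidableEq R] (a b c : R) : #(C a * X ^ 2 + C b * X + C c).roots.toFinset ≤ 2 :=
  (Multiset.toFinset_card_le _).trans <| (card_roots' _).trans natDegree_quadratic_le

lemma Polynomial.mem_roots_toFinset_quadratic {R : Type*} [CommRing R] [IsDomain R]
    [DecidableEq R] {a b c x : R} (ha : a ≠ 0) (hx : a * x ^ 2 + b * x + c = 0) :
    x ∈ (C a * X ^ 2 + C b * X + C c).roots.toFinset := by
  have hne : C a * X ^ 2 + C b * X + C c ≠ 0 :=
    ne_zero_of_natDegree_gt (n := 0) (by rw [natDegree_quadratic ha]; norm_num)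
  simpa [mem_roots hne] using hx

section Kuramoto

variable [Fintype V] (T : SimpleGraph V) [DecidableRel T.Adj]

def kuramotoSolutions (r : V) (a : V → V → ℂ) (ω : V → ℂ) : Set (V → ℂ) :=
  {x | x r = 1 ∧ (∀ i, x i ≠ 0) ∧
    ∀ i, i ≠ r → ω i - ∑ j ∈ T.neighborFinset i, a i j * (x i / x j - x j / x i) = 0}

noncomputable def leafReducedFrequencies (ℓ : V) (a : V → V → ℂ) (ω : V → ℂ) (s : ℂ) :
    ({ℓ}ᶜ : Set V) → ℂ :=
  fun i => ω i - if T.Adj i ℓ then a i ℓ * (s⁻¹ - s) else 0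

variable {T} {r ℓ p : V} {a : V → V → ℂ} {ω : V → ℂ} {x : V → ℂ}

lemma leaf_ratio_quadratic_eq_zero (hℓr : ℓ ≠ r) (hp : ∀ w, T.Adj ℓ w ↔ w = p)
    (hx : x ∈ kuramotoSolutions T r a ω) :
    a ℓ p * (x ℓ / x p) ^ 2 + -ω ℓ * (x ℓ / x p) + -a ℓ p = 0 := by
  obtain ⟨-, hx0, hxeq⟩ := hx
  have hnbr : T.neighborFinset ℓ = {p} := by ext w; simp [hp]
  have hℓ := hxeq ℓ hℓr
  rw [hnbr, sum_singleton] at hℓ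
  have hxℓ := hx0 ℓ
  have hxp := hx0 p
  field_simp at hℓ ⊢
  linear_combination -hℓ

lemma restrict_mem_kuramotoSolutions_induce [DecidableEq V] (hℓr : ℓ ≠ r)
    (hp : ∀ w, T.Adj ℓ w ↔ w = p) (hx : x ∈ kuramotoSolutions T r a ω) :
    (fun i : ({ℓ}ᶜ : Set V) => x i) ∈ kuramotoSolutions (T.induce {ℓ}ᶜ) ⟨r, hℓr.symm⟩
      (fun i j => a i j) (leafReducedFrequencies T ℓ a ω (x ℓ / x p)) := by
  obtain ⟨hxr, hx0, hxeq⟩ := hx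
  refine ⟨hxr, fun i => hx0 i, fun i hir => ?_⟩
  have hi := hxeq i (fun h => hir (Subtype.ext h))
  rw [sum_neighborFinset_eq_sum_induce_compl_singleton_add ℓ i] at hi
  have hleaf : (if T.Adj i ℓ then a i ℓ * (x i / x ℓ - x ℓ / x i) else 0) =
      if T.Adj i ℓ then a i ℓ * ((x ℓ / x p)⁻¹ - x ℓ / x p) else 0 := by
    split_ifs with h
    · rw [(hp i).1 h.symm, inv_div]
    · rfl
  rw [leafReducedFrequencies]
  linear_combination hi + hleaf

lemma injOn_leafRatio_restrict (hpℓ : p ≠ ℓ) :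
    Set.InjOn (fun x : V → ℂ => (x ℓ / x p, fun i : ({ℓ}ᶜ : Set V) => x i))
      (kuramotoSolutions T r a ω) := by
  intro x hx y hy hxy
  simp only [Prod.mk.injEq, funext_iff, Subtype.forall] at hxy
  obtain ⟨hratio, hrest⟩ := hxy
  funext v
  by_cases hvℓ : v = ℓ
  · subst hvℓ
    have hxp := hrest p hpℓ
    rw [div_eq_div_iff (hx.2.1 p) (hy.2.1 p), hxp] at hratio
    exact mul_right_cancel₀ (hy.2.1 p) hratio
  · exact hrest v hvℓ

theorem encard_kuramotoSolutions_le (hT : T.IsTree) (r : V)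
    (ha : ∀ i j, T.Adj i j → a i j ≠ 0) (ω : V → ℂ) :
    (kuramotoSolutions T r a ω).encard ≤ 2 ^ (Fintype.card V - 1) := by
  obtain ⟨n, hn⟩ := Nat.exists_eq_add_one.2 (Fintype.card_pos_iff.2 ⟨r⟩)
  rw [hn, Nat.add_sub_cancel]
  induction n generalizing V with
  | zero =>
    have : Subsingleton V := Fintype.card_le_one_iff_subsingleton.1 hn.le
    refine (Set.encard_le_one_iff.2 fun x y hx hy => ?_).trans_eq (pow_zero 2).symm
    funext v
    rw [Subsingleton.elim v r, hx.1, hy.1]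
  | succ n ih =>
    classical
    have : Nontrivial V := Fintype.one_lt_card_iff_nontrivial.1 (by omega)
    obtain ⟨ℓ, hℓr, hℓ⟩ := hT.exists_ne_degree_eq_one r
    obtain ⟨p, hℓp, hp⟩ := degree_eq_one_iff_existsUnique_adj.1 hℓ
    have hp' : ∀ w, T.Adj ℓ w ↔ w = p := fun w => ⟨hp w, fun h => h ▸ hℓp⟩
    have hcard : Fintype.card ({ℓ}ᶜ : Set V) = n + 1 := by
      rw [Fintype.card_compl_set, hn, Set.card_singleton]; rfl
    set R := (C (a ℓ p) * X ^ 2 + C (-ω ℓ) * X + C (-a ℓ p)).roots.toFinset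
    calc (kuramotoSolutions T r a ω).encard
        ≤ {q : ℂ × (({ℓ}ᶜ : Set V) → ℂ) | q.1 ∈ R ∧ q.2 ∈ kuramotoSolutions (T.induce {ℓ}ᶜ)
            ⟨r, hℓr.symm⟩ (fun i j => a i j) (leafReducedFrequencies T ℓ a ω q.1)}.encard := by
          refine Set.encard_le_encard_of_injOn (fun x hx => ⟨?_, ?_⟩)
            (injOn_leafRatio_restrict hℓp.ne')
          · exact mem_roots_toFinset_quadratic (ha ℓ p hℓp)
              (leaf_ratio_quadratic_eq_zero hℓr hp' hx)
          · exact restrict_mem_kuramotoSolutions_induce hℓr hp' hx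
      _ ≤ #R * 2 ^ n := Set.encard_setOf_fst_mem_snd_mem_le _ _ fun s _ =>
          ih (hT.induce_compl_singleton_of_degree_eq_one hℓ) _ (fun i j h => ha i j h) _ hcard
      _ ≤ 2 ^ (n + 1) := by
          rw [pow_succ, mul_comm]
          gcongr
          exact_mod_cast card_roots_toFinset_quadratic_le _ _ _

end Kuramoto

/-- Let `T` be a tree on `{0,1,…,n}`, let `a i j` be nonzero complex weights on the (ordered)
edges of `T`, and let `ω_1,…,ω_n ∈ ℂ`.  Then the algebraic Kuramoto system
`ω_i - ∑_{j ∈ N_T(i)} a_{ij}(x_i/x_j - x_j/x_i) = 0`, `i = 1,…,n` (with `x_0 = 1`), has at most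
`2^n` solutions `x ∈ (ℂ*)^n`. -/
theorem tree_system_upper_bound (n : ℕ) (T : SimpleGraph (Fin (n + 1)))
    [DecidableRel T.Adj] (hT : T.IsTree)
    (a : Fin (n + 1) → Fin (n + 1) → ℂ) (ha : ∀ i j, T.Adj i j → a i j ≠ 0)
    (ω : Fin (n + 1) → ℂ) :
    Set.encard {x : Fin (n + 1) → ℂ |
        x 0 = 1 ∧ (∀ i, x i ≠ 0) ∧
        ∀ i : Fin (n + 1), i ≠ 0 →
          ω i - ∑ j ∈ T.neighborFinset i, a i j * (x i / x j - x j / x i) = 0} ≤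
      2 ^ n :=
  (encard_kuramotoSolutions_le hT 0 ha ω).trans_eq (by rw [Fintype.card_fin, Nat.add_sub_cancel])
end

section
/- Let T be a tree on the vertex set {0,1,…,n} (so N = n+1 vertices), let a_{ij} ∈ ℝ be nonzero for every ordered pair (i,j) with {i,j} an edge of T, and let ω_1,…,ω_n ∈ ℝ. Then the number of θ = (θ_1,…,θ_n) ∈ [0,2π)^n satisfying ω_i − Σ_{j ∈ N_T(i)} a_{ij} sin(θ_i − θ_j) = 0 for all i = 1,…,n (with θ_0 = 0) is at most 2^n = 2^{N−1}. -/
set_option linter.unusedSectionVars false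

open SimpleGraph

variable {V : Type*} [Fintype V] [DecidableEq V] {T : SimpleGraph V}

/-- every vertex on a shortest-type bound: dist from root to a support vertex of a walk from root -/
lemma dist_le_of_mem_support {r u v : V} (p : T.Walk r v) (hlen : p.length = T.dist r v)
    (hu : u ∈ p.support) : T.dist r u ≤ p.length ∧
      (u ≠ v → T.dist r u < p.length) := by
  constructor
  · calc T.dist r u ≤ (p.takeUntil u hu).length := T.dist_le _
    _ ≤ p.length := p.length_takeUntil_le hu
  · intro hne
    have hspec := p.take_spec hu
    have hlen2 : (p.takeUntil u hu).length + (p.dropUntil u hu).length = p.length := by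
      have := congrArg Walk.length hspec
      rwa [Walk.length_append] at this
    have hdpos : 0 < (p.dropUntil u hu).length := by
      rcases Nat.eq_zero_or_pos (p.dropUntil u hu).length with h0 | h
      · exact absurd (Walk.eq_of_length_eq_zero h0) hne
      · exact h
    calc T.dist r u ≤ (p.takeUntil u hu).length := T.dist_le _
    _ < p.length := by omega

/-- a walk achieving the distance as path -/
lemma exists_shortest_path (hc : T.Connected) (r v : V) :
    ∃ p : T.Walk r v, p.IsPath ∧ p.length = T.dist r v := by
  obtain ⟨w, hw⟩ := hc.exists_walk_length_eq_dist r v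
  refine ⟨w.bypass, w.bypass_isPath, le_antisymm ?_ (T.dist_le _)⟩
  calc w.bypass.length ≤ w.length := w.length_bypass_le
  _ = T.dist r v := hw

lemma no_level_edge (hT : T.IsTree) {r i j : V} (hij : T.Adj i j) :
    T.dist r i ≠ T.dist r j := by
  intro hd
  obtain ⟨P, hP, hPl⟩ := exists_shortest_path hT.isConnected r j
  obtain ⟨Q, hQ, hQl⟩ := exists_shortest_path hT.isConnected r i
  have hjQ : j ∉ Q.support := by
    intro hmem
    have := (dist_le_of_mem_support Q hQl hmem).2 hij.ne'
    rw [hQl, ← hd] at this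
    exact lt_irrefl _ this
  have hQP : (Q.concat hij).IsPath := by
    rw [← Walk.isPath_reverse_iff, Walk.reverse_concat]
    exact (Walk.cons_isPath_iff _ _).2 ⟨hQ.reverse, by rwa [Walk.support_reverse, List.mem_reverse]⟩
  have := (hT.existsUnique_path r j).unique hQP hP
  have hl := congrArg Walk.length this
  rw [Walk.length_concat, hPl, hQl, hd] at hl
  omega


lemma concat_isPath {i r p : V} (h : T.Adj p i) (Q : T.Walk r p) (hQ : Q.IsPath)
    (hi : i ∉ Q.support) : (Q.concat h).IsPath := by
  rw [← Walk.isPath_reverse_iff, Walk.reverse_concat]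
  exact (Walk.cons_isPath_iff _ _).2 ⟨hQ.reverse, by rwa [Walk.support_reverse, List.mem_reverse]⟩

lemma parent_exists (hc : T.Connected) {r i : V} (hne : T.dist r i ≠ 0) :
    ∃ p, T.Adj i p ∧ T.dist r p + 1 = T.dist r i := by
  obtain ⟨P, hP, hPl⟩ := exists_shortest_path hc r i
  have hW : ∃ W : T.Walk i r, W.length = T.dist r i :=
    ⟨P.reverse, by rw [Walk.length_reverse, hPl]⟩
  obtain ⟨W, hWl⟩ := hW
  cases W with
  | nil => rw [← hWl] at hne; simp at hne
  | @cons _ p _ h w =>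
    refine ⟨p, h, ?_⟩
    rw [Walk.length_cons] at hWl
    have h1 : T.dist r p ≤ w.length := by
      rw [dist_comm]; exact T.dist_le w
    have h2 : T.dist r i ≤ T.dist r p + 1 := by
      obtain ⟨Q, hQl⟩ := hc.exists_walk_length_eq_dist r p
      have := T.dist_le (Q.concat h.symm)
      rwa [Walk.length_concat, hQl] at this
    omega

lemma parent_unique (hT : T.IsTree) {r i p q : V} (hp : T.Adj i p) (hq : T.Adj i q)
    (hdp : T.dist r p + 1 = T.dist r i) (hdq : T.dist r q + 1 = T.dist r i) : p = q := by
  obtain ⟨Pp, hPp, hPpl⟩ := exists_shortest_path hT.isConnected r p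
  obtain ⟨Pq, hPq, hPql⟩ := exists_shortest_path hT.isConnected r q
  have hip : i ∉ Pp.support := fun hmem => by
    have := (dist_le_of_mem_support Pp hPpl hmem).1
    omega
  have hiq : i ∉ Pq.support := fun hmem => by
    have := (dist_le_of_mem_support Pq hPql hmem).1
    omega
  have hWp := concat_isPath hp.symm Pp hPp hip
  have hWq := concat_isPath hq.symm Pq hPq hiq
  have heq := (hT.existsUnique_path r i).unique hWp hWq
  have hsup := congrArg (fun w => w.reverse.support) heq
  simp only [Walk.reverse_concat, Walk.support_cons] at hsup
  rw [Pp.reverse.support_eq_cons, Pq.reverse.support_eq_cons] at hsup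
  have h2 := ((List.cons.injEq _ _ _ _).mp hsup).2
  exact ((List.cons.injEq _ _ _ _).mp h2).1

lemma adj_dist (hT : T.IsTree) {r i j : V} (hij : T.Adj i j) :
    T.dist r j = T.dist r i + 1 ∨ T.dist r i = T.dist r j + 1 := by
  have h1 : T.dist r j ≤ T.dist r i + 1 := by
    obtain ⟨Q, hQl⟩ := hT.isConnected.exists_walk_length_eq_dist r i
    have := T.dist_le (Q.concat hij)
    rwa [Walk.length_concat, hQl] at this
  have h2 : T.dist r i ≤ T.dist r j + 1 := by
    obtain ⟨Q, hQl⟩ := hT.isConnected.exists_walk_length_eq_dist r j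
    have := T.dist_le (Q.concat hij.symm)
    rwa [Walk.length_concat, hQl] at this
  have h3 := no_level_edge hT (r := r) hij
  omega

lemma cos_eq_of_sin_eq {x y : ℝ} (hs : Real.sin x = Real.sin y)
    (hsign : 0 ≤ Real.cos x ↔ 0 ≤ Real.cos y) : Real.cos x = Real.cos y := by
  have h2 : Real.cos x ^ 2 = Real.cos y ^ 2 := by
    rw [Real.cos_sq', Real.cos_sq', hs]
  rcases sq_eq_sq_iff_eq_or_eq_neg.mp h2 with h | h
  · exact h
  · rcases le_or_gt 0 (Real.cos y) with hy | hy
    · rcases eq_or_lt_of_le hy with hy0 | hy0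
      · rw [h, ← hy0, neg_zero]
      · have : ¬ (0 ≤ Real.cos x) := by rw [h]; linarith
        exact absurd (hsign.mpr hy) this
    · have : 0 ≤ Real.cos x := by rw [h]; linarith
      exact absurd (hsign.mp this) (not_le.mpr hy)

lemma eq_add_int_mul_two_pi_of_sin_cos {x y : ℝ} (hs : Real.sin x = Real.sin y)
    (hc : Real.cos x = Real.cos y) : ∃ k : ℤ, x = y + k * (2 * Real.pi) := by
  have hexp : Complex.exp (x * Complex.I) = Complex.exp (y * Complex.I) := by
    rw [Complex.exp_mul_I, Complex.exp_mul_I, ← Complex.ofReal_cos, ← Complex.ofReal_sin,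
      ← Complex.ofReal_cos, ← Complex.ofReal_sin, hs, hc]
  rw [Complex.exp_eq_exp_iff_exists_int] at hexp
  obtain ⟨k, hk⟩ := hexp
  refine ⟨k, ?_⟩
  have h2 : (x : ℂ) = (y : ℂ) + (k : ℂ) * (2 * (Real.pi : ℂ)) := by
    apply mul_right_cancel₀ Complex.I_ne_zero
    rw [hk]; push_cast; ring
  have h3 : (x : ℂ) = ((y + k * (2 * Real.pi) : ℝ) : ℂ) := by push_cast; rw [h2]
  exact_mod_cast h3

lemma eq_of_sin_cos_close {x y : ℝ} (hs : Real.sin x = Real.sin y)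
    (hsign : 0 ≤ Real.cos x ↔ 0 ≤ Real.cos y) (hclose : |x - y| < 2 * Real.pi) : x = y := by
  obtain ⟨k, hk⟩ := eq_add_int_mul_two_pi_of_sin_cos hs (cos_eq_of_sin_eq hs hsign)
  have hxy : x - y = k * (2 * Real.pi) := by linarith
  have hpi := Real.pi_pos
  have hk0 : k = 0 := by
    by_contra hk0
    have h1 : (1 : ℝ) ≤ |(k : ℝ)| := by
      exact_mod_cast Int.one_le_abs (by exact_mod_cast hk0 : k ≠ 0)
    rw [hxy, abs_mul, abs_of_pos (by linarith : (0:ℝ) < 2 * Real.pi)] at hclose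
    nlinarith
  rw [hk0] at hxy; push_cast at hxy; linarith

/-- Let `T` be a tree on `{0,1,…,n}` (so `N = n+1` vertices), let `a i j` be nonzero real
coupling strengths on the (ordered) edges of `T`, and let `ω_1,…,ω_n ∈ ℝ`.  Then the number of
`θ ∈ [0,2π)^n` satisfying the Kuramoto equilibrium system
`ω_i - ∑_{j ∈ N_T(i)} a_{ij} sin(θ_i - θ_j) = 0` for all `i = 1,…,n` (with `θ_0 = 0`) is at
most `2^n = 2^{N-1}`. -/
theorem kuramoto_tree_real_upper_bound (n : ℕ) (T : SimpleGraph (Fin (n + 1)))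
    [DecidableRel T.Adj] (hT : T.IsTree)
    (a : Fin (n + 1) → Fin (n + 1) → ℝ) (ha : ∀ i j, T.Adj i j → a i j ≠ 0)
    (ω : Fin (n + 1) → ℝ) :
    Set.encard {θ : Fin (n + 1) → ℝ |
        θ 0 = 0 ∧ (∀ i, 0 ≤ θ i ∧ θ i < 2 * Real.pi) ∧
        ∀ i : Fin (n + 1), i ≠ 0 →
          ω i - ∑ j ∈ T.neighborFinset i, a i j * Real.sin (θ i - θ j) = 0} ≤
      2 ^ n := by
  classical
  set S := {θ : Fin (n + 1) → ℝ |
        θ 0 = 0 ∧ (∀ i, 0 ≤ θ i ∧ θ i < 2 * Real.pi) ∧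
        ∀ i : Fin (n + 1), i ≠ 0 →
          ω i - ∑ j ∈ T.neighborFinset i, a i j * Real.sin (θ i - θ j) = 0} with hS
  have hc := hT.isConnected
  -- distance facts
  have hd0 : ∀ i : Fin (n + 1), T.dist 0 i = 0 ↔ i = 0 := by
    intro i
    rw [hc.dist_eq_zero_iff]
    exact eq_comm
  have hdn : ∀ v : Fin (n + 1), T.dist 0 v ≤ n := by
    intro v
    obtain ⟨P, hP, hPl⟩ := exists_shortest_path hc 0 v
    have := hP.length_lt
    rw [Fintype.card_fin] at this
    omega
  -- parent function
  have hparex : ∀ i : Fin (n + 1), ∃ p, i ≠ 0 →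
      T.Adj i p ∧ T.dist 0 p + 1 = T.dist 0 i := by
    intro i
    by_cases hi : i = 0
    · exact ⟨0, fun h => absurd hi h⟩
    · obtain ⟨p, hp⟩ := parent_exists hc (fun h0 => hi ((hd0 i).mp h0))
      exact ⟨p, fun _ => hp⟩
  choose par hpar using hparex
  -- children facts
  have hchild : ∀ i : Fin (n + 1), i ≠ 0 → ∀ j, T.Adj i j → j ≠ par i →
      T.dist 0 j = T.dist 0 i + 1 ∧ j ≠ 0 ∧ par j = i := by
    intro i hi j hij hjp
    obtain ⟨hpadj, hpdist⟩ := hpar i hi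
    have hdj : T.dist 0 j = T.dist 0 i + 1 := by
      rcases adj_dist hT (r := 0) hij with h | h
      · exact h
      · exact absurd (parent_unique hT hij hpadj (by omega) hpdist) hjp
    have hj0 : j ≠ 0 := by
      intro h0
      rw [h0] at hdj
      simp [T.dist_self] at hdj
    obtain ⟨hqadj, hqdist⟩ := hpar j hj0
    refine ⟨hdj, hj0, parent_unique hT hqadj hij.symm hqdist (by omega)⟩
  -- the sines along parent edges are determined
  have hsin : ∀ θ ∈ S, ∀ θ' ∈ S, ∀ i : Fin (n + 1), i ≠ 0 →
      Real.sin (θ i - θ (par i)) = Real.sin (θ' i - θ' (par i)) := by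
    intro θ hθ θ' hθ'
    suffices haux : ∀ m : ℕ, ∀ i : Fin (n + 1), i ≠ 0 → n - T.dist 0 i < m →
        Real.sin (θ i - θ (par i)) = Real.sin (θ' i - θ' (par i)) by
      intro i hi
      exact haux (n + 1) i hi (by omega)
    intro m
    induction m with
    | zero => intro i hi h; omega
    | succ m ih =>
      intro i hi hlt
      obtain ⟨hpadj, hpdist⟩ := hpar i hi
      have hparmem : par i ∈ T.neighborFinset i := by
        rw [SimpleGraph.mem_neighborFinset]; exact hpadj
      have key : ∀ ψ, ψ ∈ S →
          a i (par i) * Real.sin (ψ i - ψ (par i)) =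
            ω i - ∑ j ∈ (T.neighborFinset i).erase (par i),
              a i j * Real.sin (ψ i - ψ j) := by
        intro ψ hψ
        have h := hψ.2.2 i hi
        rw [← Finset.add_sum_erase _ _ hparmem] at h
        linarith
      have hsums : ∑ j ∈ (T.neighborFinset i).erase (par i),
            a i j * Real.sin (θ i - θ j) =
          ∑ j ∈ (T.neighborFinset i).erase (par i),
            a i j * Real.sin (θ' i - θ' j) := by
        refine Finset.sum_congr rfl ?_
        intro j hj
        rw [Finset.mem_erase, SimpleGraph.mem_neighborFinset] at hj
        obtain ⟨hjp, hadj⟩ := hj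
        obtain ⟨hdj, hj0, hparj⟩ := hchild i hi j hadj hjp
        have hdnj := hdn j
        have hdni := hdn i
        have hih := ih j hj0 (by omega)
        rw [hparj] at hih
        rw [← neg_sub (θ j) (θ i), ← neg_sub (θ' j) (θ' i), Real.sin_neg, Real.sin_neg, hih]
      have h1 := key θ hθ
      have h2 := key θ' hθ'
      rw [hsums] at h1
      rw [← h2] at h1
      exact mul_left_cancel₀ (ha i (par i) hpadj) h1
  -- solutions with the same cosine signs are equal
  have heqv : ∀ θ ∈ S, ∀ θ' ∈ S,
      (∀ i : Fin (n + 1), i ≠ 0 →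
        (0 ≤ Real.cos (θ i - θ (par i)) ↔ 0 ≤ Real.cos (θ' i - θ' (par i)))) →
      θ = θ' := by
    intro θ hθ θ' hθ' hsign
    suffices haux : ∀ m : ℕ, ∀ i : Fin (n + 1), T.dist 0 i ≤ m → θ i = θ' i by
      funext i
      exact haux (T.dist 0 i) i le_rfl
    intro m
    induction m with
    | zero =>
      intro i h
      have : i = 0 := (hd0 i).mp (Nat.le_zero.mp h)
      rw [this, hθ.1, hθ'.1]
    | succ m ih =>
      intro i hdi
      rcases Nat.lt_or_ge (T.dist 0 i) (m + 1) with h | h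
      · exact ih i (by omega)
      · have hdieq : T.dist 0 i = m + 1 := by omega
        have hi : i ≠ 0 := by
          intro h0
          rw [h0] at hdieq
          simp [T.dist_self] at hdieq
        obtain ⟨hpadj, hpdist⟩ := hpar i hi
        have hpp : θ (par i) = θ' (par i) := ih (par i) (by omega)
        have hs := hsin θ hθ θ' hθ' i hi
        have hclose : |(θ i - θ (par i)) - (θ' i - θ' (par i))| < 2 * Real.pi := by
          rw [hpp]
          have h1 := (hθ.2.1 i).1
          have h2 := (hθ.2.1 i).2
          have h3 := (hθ'.2.1 i).1
          have h4 := (hθ'.2.1 i).2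
          rw [abs_lt]; constructor <;> linarith
        have := eq_of_sin_cos_close hs (hsign i hi) hclose
        rw [hpp] at this
        linarith
  -- injection into Boolean functions on nonzero vertices
  set F : (Fin (n + 1) → ℝ) → ({i : Fin (n + 1) // i ≠ 0} → Bool) :=
    fun θ i => decide (0 ≤ Real.cos (θ i.1 - θ (par i.1))) with hF
  have hinj : Set.InjOn F S := by
    intro θ hθ θ' hθ' h
    refine heqv θ hθ θ' hθ' ?_
    intro i hi
    have := congrFun h ⟨i, hi⟩
    simpa [hF, decide_eq_decide] using this
  calc S.encard = (F '' S).encard := (hinj.encard_image).symm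
  _ ≤ (Set.univ : Set ({i : Fin (n + 1) // i ≠ 0} → Bool)).encard :=
      Set.encard_mono (Set.subset_univ _)
  _ ≤ 2 ^ n := by
      rw [Set.encard_univ, ENat.card_eq_coe_fintype_card]
      have hcard : Fintype.card ({i : Fin (n + 1) // i ≠ 0} → Bool) = 2 ^ n := by
        have hsub : Fintype.card {i : Fin (n + 1) // i ≠ 0} = n := by
          have := Fintype.card_subtype_compl (fun i : Fin (n + 1) => i = 0)
          simp only [Fintype.card_subtype_eq, Fintype.card_fin] at this
          simpa using this
        rw [Fintype.card_fun, Fintype.card_bool, hsub]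
      rw [hcard]
      push_cast
      exact le_refl _
end
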